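/- arXiv:1205.5054 — 2 statements merged into one kernel-verified Lean document; each statement's English description precedes it below -/
import Mathlib

section
/- Let X be a real-valued Lévy process and α>0 with E e^{αX_1}<∞, ψ(α)=ln E e^{αX_1}≥0 and E(X_1 e^{αX_1})<∞. Then there is a constant C<∞ such that E e^{αX̄_t} ≤ C(1+t)e^{ψ(α)t} for all t≥0. -/
open MeasureTheory ProbabilityTheory Filter Set
open scoped ENNReal Topology

noncomputable section

namespace CEFP

/-! ## Paths with a cemetery state -/

/-- The state space `ℝ ∪ {Δ}` where `Δ` is an isolated cemetery state. -/
abbrev E : Type := ℝ ⊕ Unit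

/-- The cemetery state. -/
def Δ : E := Sum.inr ()

/-- Embed a real path as an `E`-valued path. -/
def emb (f : ℝ → ℝ) : ℝ → E := fun t => Sum.inl (f t)

/-- The path `f` killed at time `r` (sent to the cemetery from time `r` on). -/
def kill (f : ℝ → ℝ) (r : ℝ) : ℝ → E := fun t => if t < r then Sum.inl (f t) else Δ

/-- The real part of a state, with `Δ` mapped to the junk value `0`. -/
def realPart : E → ℝ := Sum.elim id (fun _ => 0)

/-- First passage time of a path strictly above the level `z` (`∞` if the path never
passes above `z`). -/
def hitTime (w : ℝ → E) (z : ℝ) : ℝ≥0∞ :=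
  ⨅ (t : ℝ) (_ : 0 < t ∧ ∃ v : ℝ, w t = Sum.inl v ∧ z < v), ENNReal.ofReal t

/-- Death time of a path: the first time it is in the cemetery state (`∞` if it never dies). -/
def deathTime (w : ℝ → E) : ℝ≥0∞ :=
  ⨅ (t : ℝ) (_ : 0 < t ∧ w t = Δ), ENNReal.ofReal t

/-- The state of the path just before its death, i.e. the left limit `w_{τ_Δ(w)-}`. -/
def preDeath (w : ℝ → E) : E := Function.leftLim w (deathTime w).toReal

/-! ## Lévy processes -/

variable {Ω : Type} [MeasurableSpace Ω]

/-- A real-valued Lévy process `X` on a probability space `(Ω, P)`: starts at `0`,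
has càdlàg paths, stationary increments, and (jointly) independent increments.
By convention `X t = 0` for negative `t`. -/
structure LevyProcess (Ω : Type) [MeasurableSpace Ω] (P : Measure Ω) : Type where
  X : ℝ → Ω → ℝ
  meas : ∀ t, Measurable (X t)
  zero : ∀ ω, X 0 ω = 0
  negTime : ∀ t < (0 : ℝ), ∀ ω, X t ω = 0
  rightCont : ∀ ω t, ContinuousWithinAt (fun s => X s ω) (Ici t) t
  leftLimExists : ∀ ω, ∀ t > (0 : ℝ), ∃ l, Tendsto (fun s => X s ω) (𝓝[<] t) (𝓝 l)
  stationary : ∀ s t : ℝ, 0 ≤ s → 0 ≤ t →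
      Measure.map (fun ω => X (s + t) ω - X s ω) P = Measure.map (X t) P
  indepIncr : ∀ (n : ℕ) (t : ℕ → ℝ), Monotone t → 0 ≤ t 0 →
      iIndepFun
        (fun i : Fin n => fun ω => X (t (i + 1)) ω - X (t i) ω) P

variable {P : Measure Ω}

/-- The (random) path of the process. -/
def path (L : LevyProcess Ω P) (ω : Ω) : ℝ → ℝ := fun t => L.X t ω

/-- The first passage time `τ(u) = inf{t > 0 : X_t > u}`, with value `∞` if passage
never occurs. -/
def tau (L : LevyProcess Ω P) (u : ℝ) (ω : Ω) : ℝ≥0∞ := hitTime (emb (path L ω)) u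

/-- The left limit `X_{t-}`. -/
def Xminus (L : LevyProcess Ω P) (t : ℝ) (ω : Ω) : ℝ :=
  Function.leftLim (fun s => L.X s ω) t

/-- The pre-supremum `X̄_{t-} = sup_{0 ≤ s < t} X_s`. -/
def supPre (L : LevyProcess Ω P) (t : ℝ) (ω : Ω) : ℝ :=
  sSup ((fun s => L.X s ω) '' (Ico 0 t))

/-- `E e^{α X_t}` as an extended nonnegative real. -/
def mgfE (P : Measure Ω) (L : LevyProcess Ω P) (α t : ℝ) : ℝ≥0∞ :=
  ∫⁻ ω, ENNReal.ofReal (Real.exp (α * L.X t ω)) ∂P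

/-- `E e^{α X_t}` as a real number. -/
def mgf (P : Measure Ω) (L : LevyProcess Ω P) (α t : ℝ) : ℝ :=
  ∫ ω, Real.exp (α * L.X t ω) ∂P

/-- The Laplace exponent `ψ(α) = ln E e^{α X_1}`. -/
def psi (P : Measure Ω) (L : LevyProcess Ω P) (α : ℝ) : ℝ :=
  Real.log (mgf P L α 1)

/-- `E e^{α X̄_t}` (with `X̄_t = sup_{0 ≤ s ≤ t} X_s`) as an extended nonnegative real. -/
def supMgfE (P : Measure Ω) (L : LevyProcess Ω P) (α t : ℝ) : ℝ≥0∞ :=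
  ∫⁻ ω, ⨆ s ∈ Icc (0 : ℝ) t, ENNReal.ofReal (Real.exp (α * L.X s ω)) ∂P

/-- `E e^{α X̄_t}` as a real number. -/
def supMgf (P : Measure Ω) (L : LevyProcess Ω P) (α t : ℝ) : ℝ :=
  (supMgfE P L α t).toReal

/-- `E e^{α X̄_∞}` (with `X̄_∞ = sup_{s ≥ 0} X_s`) as an extended nonnegative real. -/
def supMgfInf (P : Measure Ω) (L : LevyProcess Ω P) (α : ℝ) : ℝ≥0∞ :=
  ∫⁻ ω, ⨆ s ∈ Ici (0 : ℝ), ENNReal.ofReal (Real.exp (α * L.X s ω)) ∂P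

/-- The function `ν(t) = ∫_ℝ α e^{-α z} P_z(τ(0) < t) dz`, where `P_z` is the law of the
process started at `z` (so that `τ(0)` under `P_z` is `τ(-z)` under `P`). -/
def nuFun (P : Measure Ω) (L : LevyProcess Ω P) (α t : ℝ) : ℝ :=
  (∫⁻ z : ℝ, ENNReal.ofReal (α * Real.exp (-(α * z))) *
      P {ω | tau L (-z) ω < ENNReal.ofReal t}).toReal

/-- The quantity `B(T) = ∫_{[0,T)} e^{ψ(α)(T-t)} E e^{α X̄_t} dt`. -/
def BT (P : Measure Ω) (L : LevyProcess Ω P) (α T : ℝ) : ℝ :=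
  ∫ t in Ico (0 : ℝ) T, Real.exp (psi P L α * (T - t)) * supMgf P L α t

/-! ## Lévy measures and the convolution equivalent classes -/

/-- `ν` is a Lévy measure: no mass at `0` and `∫ 1 ∧ x² ν(dx) < ∞`. -/
def IsLevyMeasure (ν : Measure ℝ) : Prop :=
  ν {0} = 0 ∧ ∫⁻ x, ENNReal.ofReal (min 1 (x ^ 2)) ∂ν < ∞

/-- `ν` is the Lévy measure of the Lévy process `X`, characterized through the
Lévy–Khintchine representation of the characteristic function of `X_t`. -/
def HasLevyMeasure (P : Measure Ω) (L : LevyProcess Ω P) (ν : Measure ℝ) : Prop :=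
  IsLevyMeasure ν ∧ ∃ γ σ2 : ℝ,
    ∀ t : ℝ, 0 ≤ t → ∀ θ : ℝ,
      (∫ ω, Complex.exp (Complex.I * θ * (L.X t ω : ℂ)) ∂P) =
        Complex.exp ((t : ℂ) * (Complex.I * θ * (γ : ℂ) - (σ2 : ℂ) * θ ^ 2 / 2 +
          ∫ x : ℝ, (Complex.exp (Complex.I * θ * (x : ℂ)) - 1 -
            Complex.I * θ * (x : ℂ) *
              (Set.indicator {y : ℝ | |y| < 1} (fun _ => (1 : ℂ)) x)) ∂ν))

/-- The tail `Π̄(u) = ν((u,∞))` of a measure, as a real number. -/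
def tail (ν : Measure ℝ) (u : ℝ) : ℝ := (ν (Ioi u)).toReal

/-- A tail function `F̄` belongs to the class `L^(α)`. -/
def TailInL (Fb : ℝ → ℝ) (α : ℝ) : Prop :=
  (∀ u, 0 < Fb u) ∧
    ∀ x : ℝ, Tendsto (fun u => Fb (u + x) / Fb u) atTop (𝓝 (Real.exp (-(α * x))))

/-- A tail function `F̄` belongs to the class `S^(α)`: it is in `L^(α)`, it is the tail of
a probability distribution `F` on `[0,∞)`, and `F̄^{2*}(u)/F̄(u)` converges to a finite
limit, where `F^{2*} = F * F` is the convolution square. -/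
def TailInS (Fb : ℝ → ℝ) (α : ℝ) : Prop :=
  TailInL Fb α ∧
    ∃ F : Measure ℝ, IsProbabilityMeasure F ∧ F (Iio 0) = 0 ∧
      (∀ u, (F (Ioi u)).toReal = Fb u) ∧
      ∃ c : ℝ, Tendsto
        (fun u => ((Measure.map (fun p : ℝ × ℝ => p.1 + p.2) (F.prod F)) (Ioi u)).toReal / Fb u)
        atTop (𝓝 c)

/-- The renormalized tail of `ν` on `[x₀, ∞)`. -/
def normTail (ν : Measure ℝ) (x₀ : ℝ) : ℝ → ℝ :=
  fun u => (ν (Ioi (max u x₀))).toReal / (ν (Ioi x₀)).toReal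

/-- The right tail `Π̄_X^+` of the Lévy measure `ν` belongs to the class `L^(α)`:
the renormalized tail on some `[x₀,∞)`, `x₀ > 0`, does. -/
def PiInL (ν : Measure ℝ) (α : ℝ) : Prop :=
  ∃ x₀ : ℝ, 0 < x₀ ∧ 0 < ν (Ioi x₀) ∧ ν (Ioi x₀) < ∞ ∧ TailInL (normTail ν x₀) α

/-- The right tail `Π̄_X^+` of the Lévy measure `ν` belongs to the class `S^(α)`:
the renormalized tail (as the tail of a distribution supported on `[x₀,∞)`) on some
`[x₀,∞)`, `x₀ > 0`, does. -/
def PiInS (ν : Measure ℝ) (α : ℝ) : Prop :=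
  ∃ x₀ : ℝ, 0 < x₀ ∧ 0 < ν (Ioi x₀) ∧ ν (Ioi x₀) < ∞ ∧ TailInS (normTail ν x₀) α

end CEFP

namespace CEFP

variable {Ω : Type} [MeasurableSpace Ω] {P : Measure Ω}

open Classical in
/-- Real-valued indicator of a proposition. -/
def ind (p : Prop) : ℝ := if p then 1 else 0

/-- `G(w,z) = E_z[H(w,X); τ(0) < ∞]`, where under `P_z` the process is `z + X`. -/
def Gfun (P : Measure Ω) (L : LevyProcess Ω P) (H : (ℝ → E) → (ℝ → E) → ℝ)
    (w : ℝ → E) (z : ℝ) : ℝ :=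
  ∫ ω in {ω | tau L (-z) ω < ∞}, H w (emb (fun s => z + L.X s ω)) ∂P

/-- The class `𝓗` of functionals `H : D × D → ℝ`: (i) `H(w,w') e^{γ̃ w_{τ_Δ-} I(w_{τ_Δ-} ≤ 0)}`
is bounded for some `γ̃ ∈ [0,α)`, and (ii) `z ↦ G(w,z)` is continuous at Lebesgue-a.e. `z`
for every path `w`. -/
def MemH (P : Measure Ω) (L : LevyProcess Ω P) (α : ℝ)
    (H : (ℝ → E) → (ℝ → E) → ℝ) : Prop :=
  (∃ γ : ℝ, 0 ≤ γ ∧ γ < α ∧ ∃ C : ℝ, ∀ w w',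
      |H w w'| * Real.exp (γ * min (realPart (preDeath w)) 0) ≤ C) ∧
  ∀ w : ℝ → E, ∀ᵐ z ∂(volume : Measure ℝ), ContinuousAt (Gfun P L H w) z

/-- The class `𝓗_T`: `H(w,w') I(τ_0(w') < T)` belongs to `𝓗`. -/
def MemHT (P : Measure Ω) (L : LevyProcess Ω P) (α T : ℝ)
    (H : (ℝ → E) → (ℝ → E) → ℝ) : Prop :=
  MemH P L α (fun w w' => H w w' * ind (hitTime w' 0 < ENNReal.ofReal T))

/-- The data of the ascending ladder structure of the Lévy process `X`: the local time `ℓ`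
of `X` at its running maximum, the killing rate `q` (so `ℓ_∞` is exponential with
parameter `q`), the drifts `dL`, `dH` of the bivariate ascending ladder process
`(L⁻¹, H) = (inf{s : ℓ_s > t}, X_{L⁻¹_t})` and its bivariate Lévy measure `PiLH`,
subject to the defining properties; the ladder process is characterized as a killed
bivariate subordinator through its Laplace transform. -/
structure LadderData (P : Measure Ω) (L : LevyProcess Ω P) : Type where
  /-- local time of `X` at its running maximum -/
  ell : ℝ → Ω → ℝ
  ellMeas : ∀ t, Measurable (ell t)
  ellZero : ∀ ω, ell 0 ω = 0
  ellNonneg : ∀ t ω, 0 ≤ ell t ω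
  ellMono : ∀ ω, Monotone (fun t => ell t ω)
  ellCont : ∀ ω, Continuous (fun t => ell t ω)
  /-- the local time increases only at times where `X` is at its running maximum -/
  ellSupp : ∀ ω, ∀ s t : ℝ, 0 ≤ s → s ≤ t →
      (∀ v ∈ Icc s t, L.X v ω < sSup ((fun r => L.X r ω) '' Icc 0 v)) →
      ell s ω = ell t ω
  /-- killing rate of the ladder process -/
  q : ℝ
  qNonneg : 0 ≤ q
  /-- the total local time `ℓ_∞` is exponentially distributed with parameter `q` -/
  qLaw : ∀ t : ℝ, 0 ≤ t →
      P {ω | ENNReal.ofReal t < ⨆ s ∈ Ici (0 : ℝ), ENNReal.ofReal (ell s ω)} =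
        ENNReal.ofReal (Real.exp (-(q * t)))
  /-- drift of the inverse local time `L⁻¹` -/
  dL : ℝ
  /-- drift of the ascending ladder height process `H` -/
  dH : ℝ
  dLNonneg : 0 ≤ dL
  dHNonneg : 0 ≤ dH
  /-- bivariate Lévy measure of `(L⁻¹, H)`, carried by `[0,∞)²` -/
  PiLH : Measure (ℝ × ℝ)
  PiLHsupp : PiLH {p : ℝ × ℝ | ¬(0 ≤ p.1 ∧ 0 ≤ p.2)} = 0
  /-- Laplace transform identity: `E(e^{-a L⁻¹_t - b H_t}; t < ℓ_∞) = e^{-t κ(a,b)}` with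
  `κ(a,b) = q + a dL + b dH + ∫ (1 - e^{-as-by}) PiLH(ds,dy)` -/
  laplace : ∀ a b : ℝ, 0 ≤ a → 0 ≤ b → ∀ t : ℝ, 0 ≤ t →
      (∫ ω in {ω | ENNReal.ofReal t < ⨆ s ∈ Ici (0 : ℝ), ENNReal.ofReal (ell s ω)},
          Real.exp (-(a * sInf {r : ℝ | 0 ≤ r ∧ t < ell r ω} +
            b * L.X (sInf {r : ℝ | 0 ≤ r ∧ t < ell r ω}) ω)) ∂P) =
        Real.exp (-(t * (q + a * dL + b * dH +
          ∫ p : ℝ × ℝ, (1 - Real.exp (-(a * p.1 + b * p.2))) ∂PiLH)))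

variable {L : LevyProcess Ω P}

/-- The inverse local time `L⁻¹_t = inf{s ≥ 0 : ℓ_s > t}`. -/
def Linv (A : LadderData P L) (t : ℝ) (ω : Ω) : ℝ :=
  sInf {r : ℝ | 0 ≤ r ∧ t < A.ell r ω}

/-- The total local time `ℓ_∞` (as an extended nonnegative real). -/
def ellTop (A : LadderData P L) (ω : Ω) : ℝ≥0∞ :=
  ⨆ s ∈ Ici (0 : ℝ), ENNReal.ofReal (A.ell s ω)

/-- The ascending ladder height process `H_t = X_{L⁻¹_t}`. -/
def Hladder (A : LadderData P L) (t : ℝ) (ω : Ω) : ℝ :=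
  L.X (Linv A t ω) ω

/-- The Lévy measure `Π_H` of the ladder height process: the second marginal of `PiLH`. -/
def PiH (A : LadderData P L) : Measure ℝ := Measure.map Prod.snd A.PiLH

/-- The integral `∫ φ dη_α^V`, where `η_α^V(ds) = ∫_z e^{αz} V(ds,dz)` and
`V(ds,dz) = ∫_0^∞ P(L⁻¹_t ∈ ds, H_t ∈ dz; t < ℓ_∞) dt` is the bivariate renewal
measure of the ascending ladder process. -/
def etaVInt (A : LadderData P L) (α : ℝ) (φ : ℝ → ℝ) : ℝ :=
  ∫ t in Ici (0 : ℝ),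
    (∫ ω in {ω | ENNReal.ofReal t < ellTop A ω},
      Real.exp (α * Hladder A t ω) * φ (Linv A t ω) ∂P)

end CEFP

namespace CEFP
section AuxGeneric

lemma CEFPaux_pow_sum_le : ∀ m : ℕ, (∑ j ∈ Finset.range m, (2:ℝ≥0∞)^(j+1)) ≤ 2^(m+1) := by
  intro m
  induction m with
  | zero => simp
  | succ m ih =>
    rw [Finset.sum_range_succ]
    calc (∑ j ∈ Finset.range m, (2:ℝ≥0∞)^(j+1)) + 2^(m+1) ≤ 2^(m+1) + 2^(m+1) := by
          exact add_le_add_left ih _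
      _ = 2^(m+2) := by ring

lemma CEFPaux_exists_pow_ge (w : ℝ≥0∞) (hw : w ≠ ∞) : ∃ k : ℕ, w ≤ 2^k := by
  obtain ⟨n, hn⟩ := ENNReal.exists_nat_gt hw
  refine ⟨n, hn.le.trans ?_⟩
  calc (n:ℝ≥0∞) ≤ ((2^n : ℕ) : ℝ≥0∞) := by exact_mod_cast (Nat.lt_two_pow_self (n := n)).le
    _ = 2^n := by push_cast; ring

lemma CEFPaux_dyadic_sum_le (w : ℝ≥0∞) :
    (∑' j : ℕ, (if (2:ℝ≥0∞)^j < w then 2^(j+1) else 0)) ≤ 4 * w := by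
  rcases eq_or_ne w ∞ with hw | hw
  · rw [hw, ENNReal.mul_top (by norm_num)]; exact le_top
  have hex := CEFPaux_exists_pow_ge w hw
  have hwk : w ≤ 2^(Nat.find hex) := Nat.find_spec hex
  have hzero : ∀ j : ℕ, j ∉ Finset.range (Nat.find hex) →
      (if (2:ℝ≥0∞)^j < w then (2:ℝ≥0∞)^(j+1) else 0) = 0 := by
    intro j hj
    rw [Finset.mem_range, not_lt] at hj
    have : w ≤ 2^j := hwk.trans (pow_le_pow_right₀ one_le_two hj)
    simp [not_lt.mpr this]
  by_cases hk0 : Nat.find hex = 0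
  · rw [tsum_eq_sum hzero, hk0]; simp
  · obtain ⟨k', hk'⟩ : ∃ k', Nat.find hex = k' + 1 := ⟨Nat.find hex - 1, by omega⟩
    have hlt : (2:ℝ≥0∞)^k' < w := by
      by_contra h
      push_neg at h
      have := Nat.find_min' hex h
      omega
    rw [tsum_eq_sum hzero, hk']
    have hle : (∑ j ∈ Finset.range (k'+1), (if (2:ℝ≥0∞)^j < w then (2:ℝ≥0∞)^(j+1) else 0)) ≤
        ∑ j ∈ Finset.range (k'+1), (2:ℝ≥0∞)^(j+1) := by
      refine Finset.sum_le_sum fun j _ => ?_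
      split <;> simp
    refine hle.trans (le_trans (CEFPaux_pow_sum_le (k'+1)) ?_)
    calc (2:ℝ≥0∞)^(k'+1+1) = 4 * 2^k' := by ring
      _ ≤ 4 * w := by exact mul_le_mul_right hlt.le _

lemma CEFPaux_dyadic_bound (x : ℝ≥0∞) (hx : x ≠ ∞) :
    x ≤ 1 + ∑' j : ℕ, (if (2:ℝ≥0∞)^j < x then 2^(j+1) else 0) := by
  by_cases hx1 : x ≤ 1
  · exact hx1.trans le_self_add
  push_neg at hx1
  have hex := CEFPaux_exists_pow_ge x hx
  have hne : Nat.find hex ≠ 0 := by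
    intro h0
    have := Nat.find_spec hex
    rw [h0] at this
    simp at this
    exact absurd this (not_le.mpr hx1)
  obtain ⟨k', hk'⟩ : ∃ k', Nat.find hex = k' + 1 := ⟨Nat.find hex - 1, by omega⟩
  have hxle : x ≤ 2^(k'+1) := by rw [← hk']; exact Nat.find_spec hex
  have hlt : (2:ℝ≥0∞)^k' < x := by
    by_contra h
    push_neg at h
    exact absurd (Nat.find_min' hex h) (by omega)
  calc x ≤ 2^(k'+1) := hxle
    _ = (if (2:ℝ≥0∞)^k' < x then (2:ℝ≥0∞)^(k'+1) else 0) := by rw [if_pos hlt]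
    _ ≤ ∑' j : ℕ, (if (2:ℝ≥0∞)^j < x then 2^(j+1) else 0) := ENNReal.le_tsum k'
    _ ≤ 1 + _ := le_add_self

lemma CEFPaux_dyadic_btwn {x y : ℝ} (hx : 0 ≤ x) (hxy : x < y) (hy : y ≤ 1) :
    ∃ m i : ℕ, i ≤ 2^m ∧ x < (i:ℝ)/2^m ∧ (i:ℝ)/2^m < y := by
  obtain ⟨m, hm⟩ : ∃ m : ℕ, (1:ℝ)/2^m < y - x := by
    obtain ⟨m, hm⟩ := pow_unbounded_of_one_lt (y - x)⁻¹ (one_lt_two (α := ℝ))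
    refine ⟨m, ?_⟩
    rw [div_lt_iff₀ (by positivity)]
    calc (1:ℝ) = (y-x) * (y-x)⁻¹ := (mul_inv_cancel₀ (by linarith : y - x ≠ 0)).symm
      _ < (y-x) * 2^m := mul_lt_mul_of_pos_left hm (by linarith)
  refine ⟨m, Nat.floor (x * 2^m) + 1, ?_, ?_, ?_⟩
  · -- i ≤ 2^m from i/2^m < y ≤ 1, prove later; derive from the third part
    have h3 : ((Nat.floor (x * 2^m) + 1 : ℕ) : ℝ)/2^m < y := by
      push_cast
      rw [div_lt_iff₀ (by positivity)]
      have := Nat.floor_le (by positivity : (0:ℝ) ≤ x * 2^m)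
      have h2 : (1:ℝ) < (y - x) * 2^m := by
        rw [div_lt_iff₀ (by positivity)] at hm; linarith
      nlinarith
    by_contra hcon
    push_neg at hcon
    have : (1:ℝ) < ((Nat.floor (x * 2^m) + 1 : ℕ) : ℝ)/2^m := by
      rw [lt_div_iff₀ (by positivity)]
      calc (1:ℝ) * 2^m = ((2^m : ℕ) : ℝ) := by push_cast; ring
        _ < ((Nat.floor (x * 2^m) + 1 : ℕ) : ℝ) := by exact_mod_cast hcon
    linarith
  · push_cast
    rw [lt_div_iff₀ (by positivity)]
    exact Nat.lt_floor_add_one (x * 2^m)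
  · push_cast
    rw [div_lt_iff₀ (by positivity)]
    have := Nat.floor_le (by positivity : (0:ℝ) ≤ x * 2^m)
    have h2 : (1:ℝ) < (y - x) * 2^m := by
      rw [div_lt_iff₀ (by positivity)] at hm; linarith
    nlinarith

open Filter in
lemma CEFPaux_rc_approx (f : ℝ → ℝ) (hf : ∀ t, ContinuousWithinAt f (Set.Ici t) t)
    (φ : ℝ → ℝ≥0∞) (hφ : Continuous φ) (B : ℝ≥0∞)
    (hB : ∀ m i : ℕ, i ≤ 2^m → φ (f ((i:ℝ) / 2^m)) ≤ B)
    {r : ℝ} (hr : r ∈ Set.Icc (0:ℝ) 1) : φ (f r) ≤ B := by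
  rcases eq_or_lt_of_le hr.2 with h1 | h1
  · have := hB 0 1 (by norm_num)
    norm_num at this
    rwa [h1]
  · have key : ∀ j : ℕ, ∃ u : ℝ, (∃ m i : ℕ, i ≤ 2^m ∧ u = (i:ℝ)/2^m) ∧
        r < u ∧ u ≤ r + (1-r)/(j+1) := by
      intro j
      have hy1 : r + (1-r)/(j+1) ≤ 1 := by
        have h0 : (1-r)/(j+1) ≤ (1-r) := by
          apply div_le_self (by linarith)
          have : (0:ℝ) < (j:ℝ) + 1 := by positivity
          linarith
        linarith
      have hylt : r < r + (1-r)/(j+1) := by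
        have : (0:ℝ) < (1-r)/(j+1) := div_pos (by linarith) (by positivity)
        linarith
      obtain ⟨m, i, him, h1', h2'⟩ := CEFPaux_dyadic_btwn hr.1 hylt hy1
      exact ⟨(i:ℝ)/2^m, ⟨m, i, him, rfl⟩, h1', h2'.le⟩
    choose u hu hru hub using key
    have hle : ∀ j, φ (f (u j)) ≤ B := by
      intro j
      obtain ⟨m, i, him, hui⟩ := hu j
      rw [hui]; exact hB m i him
    have hut : Tendsto u atTop (𝓝 r) := by
      have htendA : Tendsto (fun j : ℕ => r + (1-r)/(j+1)) atTop (𝓝 r) := by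
        have h0 : Tendsto (fun j : ℕ => (1-r) * (1/(j+1))) atTop (𝓝 ((1-r) * 0)) :=
          tendsto_const_nhds.mul tendsto_one_div_add_atTop_nhds_zero_nat
        have : Tendsto (fun j : ℕ => (1-r)/(j+1)) atTop (𝓝 0) := by
          simpa [div_eq_mul_inv, one_div] using h0
        simpa using tendsto_const_nhds.add this
      exact tendsto_of_tendsto_of_tendsto_of_le_of_le tendsto_const_nhds htendA
        (fun j => (hru j).le) hub
    have hfin : Tendsto (fun j => f (u j)) atTop (𝓝 (f r)) := by
      refine (hf r).tendsto.comp ?_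
      rw [tendsto_nhdsWithin_iff]
      exact ⟨hut, Filter.Eventually.of_forall fun j => (hru j).le⟩
    have : Tendsto (fun j => φ (f (u j))) atTop (𝓝 (φ (f r))) :=
      (hφ.tendsto (f r)).comp hfin
    exact le_of_tendsto this (Filter.Eventually.of_forall hle)

end AuxGeneric
section AuxLevy

open Filter

variable {Ω : Type} [MeasurableSpace Ω] {P : Measure Ω} (L : LevyProcess Ω P)

/-- The path of increments over a grid `g`, started at index `p`, stopped at index `q`. -/
def auxA (L : LevyProcess Ω P) (g : ℕ → ℝ) (p q : ℕ) : Ω → (ℕ → ℝ) :=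
  fun ω i => L.X (g (min (p + i) q)) ω - L.X (g p) ω

lemma auxA_meas (g : ℕ → ℝ) (p q : ℕ) : Measurable (auxA L g p q) :=
  measurable_pi_lambda _ fun _ => (L.meas _).sub (L.meas _)

lemma auxA_indep [IsProbabilityMeasure P] (g : ℕ → ℝ) (hg : Monotone g) (h0 : 0 ≤ g 0)
    (p q r : ℕ) (hpq : p ≤ q) (hqr : q ≤ r) :
    ProbabilityTheory.IndepFun (auxA L g p q) (auxA L g q r) P := by
  classical
  have hInd := L.indepIncr r g hg h0
  have hfmeas : ∀ i : Fin r, Measurable (fun ω => L.X (g (i + 1)) ω - L.X (g i) ω) :=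
    fun i => (L.meas _).sub (L.meas _)
  have tel : ∀ (F : ℕ → ℝ) (a b : ℕ), a ≤ b →
      ∑ k ∈ Finset.Ico a b, (F (k+1) - F k) = F b - F a := by
    intro F a b hab
    rw [Finset.sum_Ico_eq_sub _ hab, Finset.sum_range_sub, Finset.sum_range_sub]
    ring
  -- generic construction of the composition map for a block [p', q')
  have main : ∀ p' q' : ℕ, p' ≤ q' → q' ≤ r →
      ∃ φ : (({x // x ∈ Finset.univ.filter (fun i : Fin r => p' ≤ (i:ℕ) ∧ (i:ℕ) < q')}) → ℝ) →
        (ℕ → ℝ), Measurable φ ∧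
        (fun ω => φ (fun i => (fun j : Fin r => fun ω' => L.X (g (j + 1)) ω' - L.X (g j) ω')
          i.1 ω)) = auxA L g p' q' := by
    intro p' q' hpq' hqr'
    set U : Finset (Fin r) := Finset.univ.filter (fun i : Fin r => p' ≤ (i:ℕ) ∧ (i:ℕ) < q')
      with hU
    refine ⟨fun v j => ∑ x ∈ U.attach, (if ((x : Fin r) : ℕ) < min (p' + j) q' then v x else 0),
      ?_, ?_⟩
    · apply measurable_pi_lambda
      intro j
      apply Finset.measurable_sum
      intro x _
      by_cases hx : ((x : Fin r) : ℕ) < min (p' + j) q'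
      · simpa [hx] using measurable_pi_apply x
      · simp [hx]
    · funext ω j
      show (∑ x ∈ U.attach, if ((x : Fin r) : ℕ) < min (p' + j) q'
          then L.X (g (((x : Fin r) : ℕ) + 1)) ω - L.X (g ((x : Fin r) : ℕ)) ω else 0)
        = auxA L g p' q' ω j
      set m := min (p' + j) q' with hm
      have hpm : p' ≤ m := le_min (Nat.le_add_right _ _) hpq'
      have hmq : m ≤ q' := min_le_right _ _
      have step1 : (∑ x ∈ U.attach,
            (if ((x : Fin r) : ℕ) < m then L.X (g ((x : Fin r) + 1)) ω - L.X (g (x : Fin r)) ω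
              else 0)) =
          ∑ x ∈ U, (if (x : ℕ) < m then L.X (g (x + 1)) ω - L.X (g (x : ℕ)) ω else 0) :=
        Finset.sum_attach U
          (fun x : Fin r => if (x : ℕ) < m then L.X (g (x + 1)) ω - L.X (g (x : ℕ)) ω else 0)
      have step2 : (∑ x ∈ U, (if (x : ℕ) < m then L.X (g (x + 1)) ω - L.X (g (x : ℕ)) ω else 0)) =
          ∑ x : Fin r, (if p' ≤ (x : ℕ) ∧ (x : ℕ) < m
            then L.X (g (x + 1)) ω - L.X (g (x : ℕ)) ω else 0) := by
        rw [hU, Finset.sum_filter]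
        refine Finset.sum_congr rfl fun x _ => ?_
        split_ifs with h1 h2 h3 <;> first | rfl | (exfalso; omega)
      have step3 : (∑ x : Fin r, (if p' ≤ (x : ℕ) ∧ (x : ℕ) < m
            then L.X (g (x + 1)) ω - L.X (g (x : ℕ)) ω else 0)) =
          ∑ k ∈ Finset.range r, (if p' ≤ k ∧ k < m
            then L.X (g (k + 1)) ω - L.X (g k) ω else 0) :=
        Fin.sum_univ_eq_sum_range
          (fun k : ℕ => if p' ≤ k ∧ k < m then L.X (g (k + 1)) ω - L.X (g k) ω else 0) r
      have step4 : (∑ k ∈ Finset.range r, (if p' ≤ k ∧ k < m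
            then L.X (g (k + 1)) ω - L.X (g k) ω else 0)) =
          ∑ k ∈ Finset.Ico p' m, (L.X (g (k + 1)) ω - L.X (g k) ω) := by
        rw [← Finset.sum_filter]
        congr 1
        ext k
        simp only [Finset.mem_filter, Finset.mem_range, Finset.mem_Ico]
        omega
      rw [step1, step2, step3, step4, tel (fun k => L.X (g k) ω) p' m hpm]
      rfl
  obtain ⟨φS, hφSmeas, hφSeq⟩ := main p q hpq (hqr.trans (le_refl r))
  obtain ⟨φT, hφTmeas, hφTeq⟩ := main q r hqr (le_refl r)
  have hST : Disjoint (Finset.univ.filter (fun i : Fin r => p ≤ (i:ℕ) ∧ (i:ℕ) < q))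
      (Finset.univ.filter (fun i : Fin r => q ≤ (i:ℕ) ∧ (i:ℕ) < r)) := by
    rw [Finset.disjoint_left]
    intro i hiS hiT
    simp only [Finset.mem_filter] at hiS hiT
    omega
  have hbase := ProbabilityTheory.iIndepFun.indepFun_finset _ _ hST hInd hfmeas
  have hcomp := hbase.comp hφSmeas hφTmeas
  rw [show (φS ∘ fun a (i : {x // x ∈ Finset.univ.filter
      (fun i : Fin r => p ≤ (i:ℕ) ∧ (i:ℕ) < q)}) =>
        (fun j : Fin r => fun ω' => L.X (g (j + 1)) ω' - L.X (g j) ω') i.1 a) = auxA L g p q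
    from hφSeq, show (φT ∘ fun a (i : {x // x ∈ Finset.univ.filter
      (fun i : Fin r => q ≤ (i:ℕ) ∧ (i:ℕ) < r)}) =>
        (fun j : Fin r => fun ω' => L.X (g (j + 1)) ω' - L.X (g j) ω') i.1 a) = auxA L g q r
    from hφTeq] at hcomp
  exact hcomp

end AuxLevy
section AuxLevy2

open Filter

variable {Ω : Type} [MeasurableSpace Ω] {P : Measure Ω} (L : LevyProcess Ω P)

lemma aux_meas_exp (α t : ℝ) :
    Measurable fun ω => ENNReal.ofReal (Real.exp (α * L.X t ω)) :=
  ENNReal.measurable_ofReal.comp (Real.measurable_exp.comp ((L.meas t).const_mul α))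

lemma aux_map_incr (s u : ℝ) (h0 : 0 ≤ s) (hsu : s ≤ u) :
    Measure.map (fun ω => L.X u ω - L.X s ω) P = Measure.map (L.X (u - s)) P := by
  have h := L.stationary s (u - s) h0 (by linarith)
  have h2 : s + (u - s) = u := by ring
  rwa [h2] at h

lemma aux_lint_incr (s u : ℝ) (h0 : 0 ≤ s) (hsu : s ≤ u) (f : ℝ → ℝ≥0∞) (hf : Measurable f) :
    ∫⁻ ω, f (L.X u ω - L.X s ω) ∂P = ∫⁻ ω, f (L.X (u - s) ω) ∂P := by
  rw [← MeasureTheory.lintegral_map (g := fun ω => L.X u ω - L.X s ω) hf ((L.meas u).sub (L.meas s)), aux_map_incr L s u h0 hsu,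
    MeasureTheory.lintegral_map hf (L.meas _)]

lemma aux_prob_incr (s u : ℝ) (h0 : 0 ≤ s) (hsu : s ≤ u) (A : Set ℝ) (hA : MeasurableSet A) :
    P {ω | L.X u ω - L.X s ω ∈ A} = P {ω | L.X (u - s) ω ∈ A} := by
  have h1 : {ω | L.X u ω - L.X s ω ∈ A} = (fun ω => L.X u ω - L.X s ω) ⁻¹' A := rfl
  have h2 : {ω | L.X (u - s) ω ∈ A} = (L.X (u - s)) ⁻¹' A := rfl
  rw [h1, h2, ← Measure.map_apply (f := fun ω => L.X u ω - L.X s ω) ((L.meas u).sub (L.meas s)) hA, aux_map_incr L s u h0 hsu,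
    Measure.map_apply (L.meas _) hA]

variable [IsProbabilityMeasure P]

lemma aux_mgfE_zero (α : ℝ) : mgfE P L α 0 = 1 := by
  unfold mgfE
  have : ∀ ω, ENNReal.ofReal (Real.exp (α * L.X 0 ω)) = 1 := by
    intro ω; rw [L.zero ω]; simp
  simp only [this]
  simp

lemma aux_mgfE_add (α s t : ℝ) (hs : 0 ≤ s) (ht : 0 ≤ t) :
    mgfE P L α (s + t) = mgfE P L α s * mgfE P L α t := by
  set g : ℕ → ℝ := fun i => if i = 0 then 0 else if i = 1 then s else s + t with hgdef
  have hg : Monotone g := by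
    apply monotone_nat_of_le_succ
    intro n
    match n with
    | 0 => simpa [hgdef] using hs
    | 1 => simp [hgdef]; linarith
    | (n+2) => simp [hgdef]
  have h0 : 0 ≤ g 0 := by simp [hgdef]
  have hind := auxA_indep L g hg h0 0 1 2 (by norm_num) (by norm_num)
  have hφ : Measurable (fun h : ℕ → ℝ => ENNReal.ofReal (Real.exp (α * h 1))) :=
    ENNReal.measurable_ofReal.comp (Real.measurable_exp.comp
      ((measurable_pi_apply (X := fun _ : ℕ => ℝ) 1).const_mul α))
  have hcomp := hind.comp hφ hφ
  have hXa : ((fun h : ℕ → ℝ => ENNReal.ofReal (Real.exp (α * h 1))) ∘ auxA L g 0 1) =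
      fun ω => ENNReal.ofReal (Real.exp (α * L.X s ω)) := by
    funext ω
    have h1 : auxA L g 0 1 ω 1 = L.X s ω := by
      unfold auxA
      simp [hgdef, L.zero ω]
    simp only [Function.comp_apply, h1]
  have hXb : ((fun h : ℕ → ℝ => ENNReal.ofReal (Real.exp (α * h 1))) ∘ auxA L g 1 2) =
      fun ω => ENNReal.ofReal (Real.exp (α * (L.X (s + t) ω - L.X s ω))) := by
    funext ω
    have h1 : auxA L g 1 2 ω 1 = L.X (s + t) ω - L.X s ω := by
      unfold auxA
      simp [hgdef]
    simp only [Function.comp_apply, h1]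
  rw [hXa, hXb] at hcomp
  have hmeasg : Measurable fun ω => ENNReal.ofReal (Real.exp (α * (L.X (s + t) ω - L.X s ω))) :=
    ENNReal.measurable_ofReal.comp (Real.measurable_exp.comp
      (((L.meas (s+t)).sub (L.meas s)).const_mul α))
  have key : mgfE P L α (s + t) = ∫⁻ ω, ENNReal.ofReal (Real.exp (α * L.X s ω)) *
      ENNReal.ofReal (Real.exp (α * (L.X (s + t) ω - L.X s ω))) ∂P := by
    unfold mgfE
    congr 1
    funext ω
    rw [← ENNReal.ofReal_mul (Real.exp_nonneg _), ← Real.exp_add]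
    congr 2
    ring
  have hprod := ProbabilityTheory.lintegral_mul_eq_lintegral_mul_lintegral_of_indepFun
    (aux_meas_exp L α s) hmeasg hcomp
  simp only [Pi.mul_apply, Function.comp_apply] at hprod
  rw [key, hprod]
  congr 1
  have hstat := aux_lint_incr L s (s + t) hs (by linarith)
    (fun x => ENNReal.ofReal (Real.exp (α * x)))
    (ENNReal.measurable_ofReal.comp (Real.measurable_exp.comp (measurable_id.const_mul α)))
  beta_reduce at hstat
  rw [show s + t - s = t from by ring] at hstat
  exact hstat

lemma aux_mgfE_nat (α : ℝ) (n : ℕ) : mgfE P L α n = (mgfE P L α 1) ^ n := by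
  induction n with
  | zero => simpa using aux_mgfE_zero L α
  | succ n ih =>
    have h := aux_mgfE_add L α n 1 n.cast_nonneg zero_le_one
    have h2 : ((n + 1 : ℕ) : ℝ) = (n : ℝ) + 1 := by push_cast; ring
    rw [h2, h, ih]
    ring

lemma aux_mgfE_pos (α t : ℝ) : 0 < mgfE P L α t := by
  unfold mgfE
  rw [MeasureTheory.lintegral_pos_iff_support (aux_meas_exp L α t)]
  have hs : Function.support (fun ω => ENNReal.ofReal (Real.exp (α * L.X t ω))) = Set.univ := by
    ext ω
    simp [Function.support, ENNReal.ofReal_pos.mpr (Real.exp_pos _), ne_of_gt,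
      (ENNReal.ofReal_pos.mpr (Real.exp_pos (α * L.X t ω))).ne']
  rw [hs]
  simp

end AuxLevy2
section AuxBound

open Filter

variable {Ω : Type} [MeasurableSpace Ω] {P : Measure Ω} (L : LevyProcess Ω P)

lemma aux_bounded (ω : Ω) : ∃ Mb : ℝ, ∀ s ∈ Set.Icc (0:ℝ) 1, |L.X s ω| ≤ Mb := by
  set f : ℝ → ℝ := fun s => L.X s ω with hf
  have hloc : ∀ t ∈ Set.Icc (0:ℝ) 1, ∃ Mt : ℝ, ∀ᶠ s in 𝓝 t, |f s| ≤ Mt := by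
    intro t ht
    have hR : ∀ᶠ s in 𝓝[≥] t, |f s| ≤ |f t| + 1 := by
      have h1 : Filter.Tendsto f (𝓝[≥] t) (𝓝 (f t)) := L.rightCont ω t
      exact ((h1.abs).eventually_lt_const (by linarith : |f t| < |f t| + 1)).mono
        fun s hs => hs.le
    rcases lt_or_ge 0 t with htpos | htneg
    · obtain ⟨l, hl⟩ := L.leftLimExists ω t htpos
      have hL : ∀ᶠ s in 𝓝[<] t, |f s| ≤ |l| + 1 :=
        ((hl.abs).eventually_lt_const (by linarith : |l| < |l| + 1)).mono fun s hs => hs.le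
      refine ⟨max (|f t| + 1) (|l| + 1), ?_⟩
      rw [← nhdsLT_sup_nhdsGE t, eventually_sup]
      exact ⟨hL.mono fun s hs => hs.trans (le_max_right _ _),
        hR.mono fun s hs => hs.trans (le_max_left _ _)⟩
    · have ht0 : t = 0 := le_antisymm htneg ht.1
      have hL : ∀ᶠ s in 𝓝[<] t, |f s| ≤ |f t| + 1 := by
        rw [ht0]
        filter_upwards [self_mem_nhdsWithin] with s hs
        have : f s = 0 := L.negTime s hs ω
        rw [this]
        simp
        positivity
      refine ⟨|f t| + 1, ?_⟩
      rw [← nhdsLT_sup_nhdsGE t, eventually_sup]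
      exact ⟨hL, hR⟩
  choose! Mt hMt using hloc
  obtain ⟨T, hTsub, hTcover⟩ := isCompact_Icc.elim_nhds_subcover
    (fun t => {s | |f s| ≤ Mt t}) (fun t ht => hMt t ht)
  refine ⟨∑ x ∈ T, |Mt x|, ?_⟩
  intro s hs
  obtain ⟨x, hxT, hx⟩ := Set.mem_iUnion₂.mp (hTcover hs)
  calc |f s| ≤ Mt x := hx
    _ ≤ |Mt x| := le_abs_self _
    _ ≤ ∑ y ∈ T, |Mt y| := Finset.single_le_sum (fun y _ => abs_nonneg (Mt y)) hxT

lemma aux_exists_c [IsProbabilityMeasure P] :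
    ∃ c : ℝ, 0 ≤ c ∧ ∀ r ∈ Set.Icc (0:ℝ) 1, P {ω | L.X r ω < -c} ≤ 2⁻¹ := by
  set W : Ω → ℝ≥0∞ :=
    fun ω => ⨆ (m : ℕ) (i : Fin (2^m + 1)), ENNReal.ofReal |L.X ((i:ℝ)/2^m) ω| with hW
  have hWmeas : Measurable W :=
    Measurable.iSup fun m => Measurable.iSup fun i =>
      ENNReal.measurable_ofReal.comp (L.meas _).abs
  have hWfin : ∀ ω, W ω ≠ ∞ := by
    intro ω
    obtain ⟨Mb, hMb⟩ := aux_bounded L ω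
    have hle : W ω ≤ ENNReal.ofReal Mb := by
      refine iSup_le fun m => iSup_le fun i => ?_
      apply ENNReal.ofReal_le_ofReal
      apply hMb
      constructor
      · positivity
      · rw [div_le_one (by positivity)]
        calc ((i:ℕ):ℝ) ≤ ((2^m:ℕ):ℝ) := by exact_mod_cast Nat.le_of_lt_succ i.2
          _ = 2^m := by push_cast; ring
    exact (hle.trans_lt ENNReal.ofReal_lt_top).ne
  have hXW : ∀ ω, ∀ r ∈ Set.Icc (0:ℝ) 1, ENNReal.ofReal |L.X r ω| ≤ W ω := by
    intro ω r hr
    refine CEFPaux_rc_approx (fun s => L.X s ω) (L.rightCont ω)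
      (fun x => ENNReal.ofReal |x|) (ENNReal.continuous_ofReal.comp continuous_abs)
      (W ω) ?_ hr
    intro m i him
    refine le_iSup_of_le m (le_iSup_of_le (⟨i, by omega⟩ : Fin (2^m + 1)) ?_)
    exact le_refl _
  have hmono : Antitone (fun n : ℕ => {ω | (n : ℝ≥0∞) ≤ W ω}) := by
    intro a b hab ω hω
    simp only [Set.mem_setOf_eq] at hω ⊢
    exact le_trans (by exact_mod_cast Nat.cast_le.mpr hab) hω
  have hinter : (⋂ n : ℕ, {ω | (n:ℝ≥0∞) ≤ W ω}) = ∅ := by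
    ext ω
    simp only [Set.mem_iInter, Set.mem_setOf_eq, Set.mem_empty_iff_false, iff_false]
    push_neg
    obtain ⟨n, hn⟩ := ENNReal.exists_nat_gt (hWfin ω)
    exact ⟨n, hn⟩
  have htend := MeasureTheory.tendsto_measure_iInter_atTop
    (s := fun n : ℕ => {ω | (n:ℝ≥0∞) ≤ W ω})
    (fun n => (hWmeas measurableSet_Ici).nullMeasurableSet)
    hmono ⟨0, measure_ne_top P _⟩
  rw [hinter] at htend
  simp only [measure_empty] at htend
  obtain ⟨n, hn⟩ := (htend.eventually_lt_const (by norm_num : (0:ℝ≥0∞) < 2⁻¹)).exists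
  refine ⟨n, Nat.cast_nonneg n, ?_⟩
  intro r hr
  refine le_trans (measure_mono ?_) hn.le
  intro ω hω
  simp only [Set.mem_setOf_eq] at hω ⊢
  calc (n:ℝ≥0∞) = ENNReal.ofReal (n:ℝ) := (ENNReal.ofReal_natCast n).symm
    _ ≤ ENNReal.ofReal |L.X r ω| :=
        ENNReal.ofReal_le_ofReal (le_abs.mpr (Or.inr (by linarith)))
    _ ≤ W ω := hXW ω r hr

end AuxBound
section AuxOtt

open Filter

variable {Ω : Type} [MeasurableSpace Ω] {P : Measure Ω} (L : LevyProcess Ω P)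

lemma aux_ottaviani [IsProbabilityMeasure P] (c : ℝ)
    (hc : ∀ r ∈ Set.Icc (0:ℝ) 1, P {ω | L.X r ω < -c} ≤ 2⁻¹)
    (g : ℕ → ℝ) (hg : Monotone g) (hg0 : g 0 = 0) (ha : 0 ≤ g 1)
    (n : ℕ) (hn : 1 ≤ n) (hgn : g n = g 1 + 1) (u : ℝ) :
    P {ω | ∃ i, 1 ≤ i ∧ i ≤ n ∧ u < L.X (g i) ω - L.X (g 1) ω} ≤
      2 * P {ω | u - c < L.X (g n) ω - L.X (g 1) ω} := by
  classical
  set Y : ℕ → Ω → ℝ := fun i ω => L.X (g i) ω - L.X (g 1) ω with hY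
  have hYmeas : ∀ i, Measurable (Y i) := fun i => (L.meas _).sub (L.meas _)
  set A : ℕ → Set Ω := fun i => {ω | u < Y i ω} ∩ ⋂ l ∈ Finset.Ico 1 i, {ω | Y l ω ≤ u}
    with hA
  have hAmeas : ∀ i, MeasurableSet (A i) := by
    intro i
    refine (measurableSet_lt measurable_const (hYmeas i)).inter ?_
    exact MeasurableSet.biInter (Set.to_countable _)
      (fun l _ => measurableSet_le (hYmeas l) measurable_const)
  have hUnion : {ω | ∃ i, 1 ≤ i ∧ i ≤ n ∧ u < Y i ω} = ⋃ i ∈ Finset.Icc 1 n, A i := by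
    ext ω
    simp only [Set.mem_setOf_eq, Set.mem_iUnion, Finset.mem_Icc]
    constructor
    · intro h
      have hex : ∃ i, 1 ≤ i ∧ i ≤ n ∧ u < Y i ω := h
      set i0 := Nat.find hex with hi0
      have hspec := Nat.find_spec hex
      refine ⟨i0, ⟨hspec.1, hspec.2.1⟩, hspec.2.2, ?_⟩
      simp only [Set.mem_iInter, Set.mem_setOf_eq]
      intro l hl
      rw [Finset.mem_Ico] at hl
      by_contra hcon
      push_neg at hcon
      exact absurd (Nat.find_min' hex ⟨hl.1, le_trans (le_of_lt hl.2) hspec.2.1, hcon⟩)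
        (by omega)
    · rintro ⟨i, ⟨h1, h2⟩, hmem, -⟩
      exact ⟨i, h1, h2, hmem⟩
  have hdisj : Set.PairwiseDisjoint ↑(Finset.Icc 1 n) A := by
    intro i hi j hj hij
    rw [Finset.coe_Icc, Set.mem_Icc] at hi hj
    have key : ∀ a b : ℕ, 1 ≤ a → a < b → Disjoint (A a) (A b) := by
      intro a b h1 hab
      rw [Set.disjoint_left]
      rintro ω ⟨hωa, -⟩ ⟨-, hωb⟩
      simp only [Set.mem_iInter, Set.mem_setOf_eq] at hωb
      have := hωb a (Finset.mem_Ico.mpr ⟨h1, hab⟩)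
      simp only [Set.mem_setOf_eq] at hωa
      linarith
    rcases lt_or_gt_of_ne hij with h | h
    · exact key i j hi.1 h
    · exact (key j i hj.1 h).symm
  set C : ℕ → Set Ω := fun i => {ω | -c ≤ L.X (g n) ω - L.X (g i) ω} with hC
  have hCmeas : ∀ i, MeasurableSet (C i) :=
    fun i => measurableSet_le measurable_const ((L.meas _).sub (L.meas _))
  have hCprob : ∀ i, 1 ≤ i → i ≤ n → 2⁻¹ ≤ P (C i) := by
    intro i h1 h2
    have hgi0 : 0 ≤ g i := ha.trans (hg h1)
    have hgin : g i ≤ g n := hg h2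
    have hstat := aux_prob_incr L (g i) (g n) hgi0 hgin (Set.Iio (-c)) measurableSet_Iio
    have hr : g n - g i ∈ Set.Icc (0:ℝ) 1 := by
      constructor
      · linarith
      · have : g 1 ≤ g i := hg h1
        rw [hgn]; linarith
    have htail : P {ω | L.X (g n) ω - L.X (g i) ω < -c} ≤ 2⁻¹ := by
      rw [show {ω | L.X (g n) ω - L.X (g i) ω < -c}
          = {ω | L.X (g n) ω - L.X (g i) ω ∈ Set.Iio (-c)} from rfl, hstat]
      exact hc _ hr
    have hcompl : C i = {ω | L.X (g n) ω - L.X (g i) ω < -c}ᶜ := by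
      ext ω; simp [hC, not_lt]
    rw [hcompl, measure_compl (measurableSet_lt (f := fun ω => L.X (g n) ω - L.X (g i) ω) ((L.meas _).sub (L.meas _)) measurable_const)
      (measure_ne_top P _), measure_univ]
    calc (2:ℝ≥0∞)⁻¹ = 1 - 2⁻¹ := by
          rw [← ENNReal.inv_two_add_inv_two, ENNReal.add_sub_cancel_right (by norm_num)]
      _ ≤ 1 - P {ω | L.X (g n) ω - L.X (g i) ω < -c} := tsub_le_tsub_left htail 1
  have hkey : ∀ i, 1 ≤ i → i ≤ n → P (A i ∩ C i) = P (A i) * P (C i) := by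
    intro i h1 h2
    have hind := auxA_indep L g hg (by rw [hg0]) 1 i n h1 h2
    set SA : Set (ℕ → ℝ) := {h | u < h (i-1)} ∩ ⋂ l ∈ Finset.Ico 1 i, {h | h (l-1) ≤ u}
      with hSA
    set SC : Set (ℕ → ℝ) := {h | -c ≤ h (n - i)} with hSC
    have hSAmeas : MeasurableSet SA := by
      refine (measurableSet_lt measurable_const (measurable_pi_apply _)).inter ?_
      exact MeasurableSet.biInter (Set.to_countable _)
        (fun l _ => measurableSet_le (measurable_pi_apply _) measurable_const)
    have hSCmeas : MeasurableSet SC :=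
      measurableSet_le measurable_const (measurable_pi_apply _)
    have hval : ∀ ω l, 1 ≤ l → l ≤ i → auxA L g 1 i ω (l-1) = Y l ω := by
      intro ω l hl1 hl2
      unfold auxA
      rw [show min (1 + (l-1)) i = l from by omega]
    have hAeq : A i = auxA L g 1 i ⁻¹' SA := by
      ext ω
      simp only [hA, hSA, Set.mem_inter_iff, Set.mem_setOf_eq, Set.mem_preimage,
        Set.mem_iInter]
      constructor
      · rintro ⟨hu, hrest⟩
        refine ⟨by rw [hval ω i h1 le_rfl]; exact hu, ?_⟩
        intro l hl
        rw [Finset.mem_Ico] at hl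
        rw [hval ω l hl.1 (le_of_lt hl.2)]
        exact hrest l (Finset.mem_Ico.mpr hl)
      · rintro ⟨hu, hrest⟩
        refine ⟨by rw [← hval ω i h1 le_rfl]; exact hu, ?_⟩
        intro l hl
        rw [Finset.mem_Ico] at hl
        rw [← hval ω l hl.1 (le_of_lt hl.2)]
        exact hrest l (Finset.mem_Ico.mpr hl)
    have hCeq : C i = auxA L g i n ⁻¹' SC := by
      ext ω
      simp only [hC, hSC, Set.mem_setOf_eq, Set.mem_preimage]
      unfold auxA
      rw [show min (i + (n - i)) n = n from by omega]
    rw [hAeq, hCeq]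
    exact (ProbabilityTheory.indepFun_iff_measure_inter_preimage_eq_mul.mp hind)
      SA SC hSAmeas hSCmeas
  set D := {ω | u - c < L.X (g n) ω - L.X (g 1) ω} with hD
  have hsub : (⋃ i ∈ Finset.Icc 1 n, (A i ∩ C i)) ⊆ D := by
    intro ω hω
    rw [Set.mem_iUnion₂] at hω
    obtain ⟨i, hi, hωA, hωC⟩ := hω
    have h1 : u < Y i ω := hωA.1
    have h2 : -c ≤ L.X (g n) ω - L.X (g i) ω := hωC
    show u - c < L.X (g n) ω - L.X (g 1) ω
    have h3 : Y i ω = L.X (g i) ω - L.X (g 1) ω := rfl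
    rw [h3] at h1
    linarith
  have hdisj2 : Set.PairwiseDisjoint ↑(Finset.Icc 1 n) (fun i => A i ∩ C i) :=
    fun i hi j hj hij =>
      (hdisj hi hj hij).mono Set.inter_subset_left Set.inter_subset_left
  calc P {ω | ∃ i, 1 ≤ i ∧ i ≤ n ∧ u < L.X (g i) ω - L.X (g 1) ω}
      = P (⋃ i ∈ Finset.Icc 1 n, A i) := by
        rw [show {ω | ∃ i, 1 ≤ i ∧ i ≤ n ∧ u < L.X (g i) ω - L.X (g 1) ω}
          = {ω | ∃ i, 1 ≤ i ∧ i ≤ n ∧ u < Y i ω} from rfl, hUnion]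
    _ = ∑ i ∈ Finset.Icc 1 n, P (A i) :=
        measure_biUnion_finset hdisj (fun i _ => hAmeas i)
    _ = 2 * (2⁻¹ * ∑ i ∈ Finset.Icc 1 n, P (A i)) := by
        rw [← mul_assoc, ENNReal.mul_inv_cancel (by norm_num) (by norm_num), one_mul]
    _ ≤ 2 * P D := by
        apply mul_le_mul_right
        calc 2⁻¹ * ∑ i ∈ Finset.Icc 1 n, P (A i)
            = ∑ i ∈ Finset.Icc 1 n, 2⁻¹ * P (A i) := Finset.mul_sum _ _ _
          _ ≤ ∑ i ∈ Finset.Icc 1 n, P (A i ∩ C i) := by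
              refine Finset.sum_le_sum fun i hi => ?_
              rw [Finset.mem_Icc] at hi
              rw [hkey i hi.1 hi.2, mul_comm (2:ℝ≥0∞)⁻¹ _]
              exact mul_le_mul_right (hCprob i hi.1 hi.2) _
          _ = P (⋃ i ∈ Finset.Icc 1 n, (A i ∩ C i)) :=
              (measure_biUnion_finset hdisj2 (fun i _ => (hAmeas i).inter (hCmeas i))).symm
          _ ≤ P D := measure_mono hsub

end AuxOtt
section AuxExpMax

open Filter

variable {Ω : Type} [MeasurableSpace Ω] {P : Measure Ω} (L : LevyProcess Ω P)

lemma aux_exp_max [IsProbabilityMeasure P] (α : ℝ) (hα : 0 < α) (c : ℝ)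
    (hc : ∀ r ∈ Set.Icc (0:ℝ) 1, P {ω | L.X r ω < -c}≤ 2⁻¹)
    (g : ℕ → ℝ) (hg : Monotone g) (hg0 : g 0 = 0) (ha : 0 ≤ g 1)
    (n : ℕ) (hn : 1 ≤ n) (hgn : g n = g 1 + 1) :
    ∫⁻ ω, (Finset.Icc 1 n).sup
        (fun i => ENNReal.ofReal (Real.exp (α * (L.X (g i) ω - L.X (g 1) ω)))) ∂P ≤
      1 + ENNReal.ofReal (8 * Real.exp (α * c)) * mgfE P L α 1 := by
  classical
  set NE : Ω → ℝ≥0∞ := fun ω => (Finset.Icc 1 n).sup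
    (fun i => ENNReal.ofReal (Real.exp (α * (L.X (g i) ω - L.X (g 1) ω)))) with hNE
  have hNEmeas : Measurable NE := by
    have heq : NE = fun ω => ⨆ i ∈ Finset.Icc 1 n,
        ENNReal.ofReal (Real.exp (α * (L.X (g i) ω - L.X (g 1) ω))) := by
      funext ω
      rw [hNE]
      exact Finset.sup_eq_iSup _ _
    rw [heq]
    exact Measurable.iSup fun i => Measurable.iSup fun _ =>
      ENNReal.measurable_ofReal.comp (Real.measurable_exp.comp
        (((L.meas _).sub (L.meas _)).const_mul α))
  have hNEfin : ∀ ω, NE ω ≠ ∞ := by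
    intro ω
    rw [hNE]
    exact ((Finset.sup_lt_iff (by simp : (⊥:ℝ≥0∞) < ∞)).mpr
      (fun i _ => ENNReal.ofReal_lt_top)).ne
  set u : ℕ → ℝ := fun j => ((j : ℝ) * Real.log 2) / α with hu
  have hiff : ∀ (x : ℝ) (j : ℕ),
      ((2:ℝ≥0∞)^j < ENNReal.ofReal (Real.exp (α * x))) ↔ u j < x := by
    intro x j
    rw [show (2:ℝ≥0∞)^j = ENNReal.ofReal ((2:ℝ)^j) from by
      rw [ENNReal.ofReal_pow (by norm_num : (0:ℝ) ≤ 2)]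
      norm_num]
    rw [ENNReal.ofReal_lt_ofReal_iff (Real.exp_pos _)]
    rw [show (2:ℝ)^j = Real.exp ((j:ℝ) * Real.log 2) from by
      rw [← Real.log_pow, Real.exp_log (by positivity)]]
    rw [Real.exp_lt_exp, hu]
    rw [div_lt_iff₀ hα]
    constructor <;> intro h <;> linarith
  set Z : Ω → ℝ := fun ω => L.X (g n) ω - L.X (g 1) ω with hZ
  set V : Ω → ℝ≥0∞ := fun ω => ENNReal.ofReal (Real.exp (α * (Z ω + c))) with hV
  have hZmeas : Measurable Z := (L.meas _).sub (L.meas _)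
  have hVmeas : Measurable V :=
    ENNReal.measurable_ofReal.comp (Real.measurable_exp.comp
      ((hZmeas.add_const c).const_mul α))
  have htail : ∀ j : ℕ, P {ω | (2:ℝ≥0∞)^j < NE ω} ≤ 2 * P {ω | (2:ℝ≥0∞)^j < V ω} := by
    intro j
    have hset1 : {ω | (2:ℝ≥0∞)^j < NE ω} =
        {ω | ∃ i, 1 ≤ i ∧ i ≤ n ∧ u j < L.X (g i) ω - L.X (g 1) ω} := by
      ext ω
      rw [Set.mem_setOf_eq, Set.mem_setOf_eq, hNE]
      rw [Finset.lt_sup_iff]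
      simp only [Finset.mem_Icc]
      constructor
      · rintro ⟨i, ⟨h1, h2⟩, hlt⟩
        exact ⟨i, h1, h2, (hiff _ j).mp hlt⟩
      · rintro ⟨i, h1, h2, hlt⟩
        exact ⟨i, ⟨h1, h2⟩, (hiff _ j).mpr hlt⟩
    have hset2 : {ω | (2:ℝ≥0∞)^j < V ω} = {ω | u j - c < L.X (g n) ω - L.X (g 1) ω} := by
      ext ω
      rw [Set.mem_setOf_eq, Set.mem_setOf_eq, hV]
      rw [hiff]
      constructor <;> intro h <;> · simp only [hZ] at *; linarith
    rw [hset1, hset2]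
    exact aux_ottaviani L c hc g hg hg0 ha n hn hgn (u j)
  have hsetmeas : ∀ j : ℕ, MeasurableSet {ω | (2:ℝ≥0∞)^j < NE ω} :=
    fun j => measurableSet_lt measurable_const hNEmeas
  have hsetmeasV : ∀ j : ℕ, MeasurableSet {ω | (2:ℝ≥0∞)^j < V ω} :=
    fun j => measurableSet_lt measurable_const hVmeas
  have hindNE : ∀ (j : ℕ) (ω : Ω), (if (2:ℝ≥0∞)^j < NE ω then (2:ℝ≥0∞)^(j+1) else 0) =
      Set.indicator {ω' | (2:ℝ≥0∞)^j < NE ω'} (fun _ => (2:ℝ≥0∞)^(j+1)) ω := by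
    intro j ω
    rw [Set.indicator_apply]
    rfl
  have hindV : ∀ (j : ℕ) (ω : Ω), (if (2:ℝ≥0∞)^j < V ω then (2:ℝ≥0∞)^(j+1) else 0) =
      Set.indicator {ω' | (2:ℝ≥0∞)^j < V ω'} (fun _ => (2:ℝ≥0∞)^(j+1)) ω := by
    intro j ω
    rw [Set.indicator_apply]
    rfl
  calc ∫⁻ ω, NE ω ∂P
      ≤ ∫⁻ ω, (1 + ∑' j : ℕ, (if (2:ℝ≥0∞)^j < NE ω then 2^(j+1) else 0)) ∂P :=
        MeasureTheory.lintegral_mono fun ω => CEFPaux_dyadic_bound (NE ω) (hNEfin ω)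
    _ = 1 + ∑' j : ℕ, (2:ℝ≥0∞)^(j+1) * P {ω | (2:ℝ≥0∞)^j < NE ω} := by
        rw [MeasureTheory.lintegral_add_left measurable_const, MeasureTheory.lintegral_one,
          measure_univ]
        congr 1
        simp only [hindNE]
        rw [MeasureTheory.lintegral_tsum (fun j =>
          ((measurable_const.indicator (hsetmeas j)).aemeasurable))]
        congr 1
        funext j
        rw [MeasureTheory.lintegral_indicator_const (hsetmeas j)]
    _ ≤ 1 + ∑' j : ℕ, (2:ℝ≥0∞)^(j+1) * (2 * P {ω | (2:ℝ≥0∞)^j < V ω}) := by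
        refine add_le_add_right (ENNReal.tsum_le_tsum fun j => ?_) 1
        exact mul_le_mul_right (htail j) _
    _ = 1 + 2 * ∑' j : ℕ, (2:ℝ≥0∞)^(j+1) * P {ω | (2:ℝ≥0∞)^j < V ω} := by
        congr 1
        rw [← ENNReal.tsum_mul_left]
        congr 1
        funext j
        ring
    _ ≤ 1 + 2 * (4 * ∫⁻ ω, V ω ∂P) := by
        refine add_le_add_right (mul_le_mul_right ?_ 2) 1
        have hswap : (∑' j : ℕ, (2:ℝ≥0∞)^(j+1) * P {ω | (2:ℝ≥0∞)^j < V ω}) =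
            ∫⁻ ω, (∑' j : ℕ, (if (2:ℝ≥0∞)^j < V ω then 2^(j+1) else 0)) ∂P := by
          simp only [hindV]
          rw [MeasureTheory.lintegral_tsum (fun j =>
            ((measurable_const.indicator (hsetmeasV j)).aemeasurable))]
          congr 1
          funext j
          rw [MeasureTheory.lintegral_indicator_const (hsetmeasV j)]
        rw [hswap, ← MeasureTheory.lintegral_const_mul 4 hVmeas]
        exact MeasureTheory.lintegral_mono fun ω => CEFPaux_dyadic_sum_le (V ω)
    _ = 1 + ENNReal.ofReal (8 * Real.exp (α * c)) * mgfE P L α 1 := by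
        congr 1
        have hVsplit : ∀ ω, V ω = ENNReal.ofReal (Real.exp (α * c)) *
            ENNReal.ofReal (Real.exp (α * Z ω)) := by
          intro ω
          rw [show V ω = ENNReal.ofReal (Real.exp (α * (Z ω + c))) from rfl,
            ← ENNReal.ofReal_mul (Real.exp_nonneg _), ← Real.exp_add]
          congr 2
          ring
        have hlint : ∫⁻ ω, V ω ∂P = ENNReal.ofReal (Real.exp (α * c)) *
            ∫⁻ ω, ENNReal.ofReal (Real.exp (α * Z ω)) ∂P := by
          have hmeasZ : Measurable fun ω => ENNReal.ofReal (Real.exp (α * Z ω)) :=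
            ENNReal.measurable_ofReal.comp (Real.measurable_exp.comp (hZmeas.const_mul α))
          simp only [hVsplit]
          rw [MeasureTheory.lintegral_const_mul _ hmeasZ]
        have hmg : ∫⁻ ω, ENNReal.ofReal (Real.exp (α * Z ω)) ∂P = mgfE P L α 1 := by
          have hstat := aux_lint_incr L (g 1) (g n) ha (by rw [hgn]; linarith)
            (fun x => ENNReal.ofReal (Real.exp (α * x)))
            (ENNReal.measurable_ofReal.comp (Real.measurable_exp.comp
              (measurable_id.const_mul α)))
          beta_reduce at hstat
          rw [show g n - g 1 = 1 from by rw [hgn]; ring] at hstat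
          exact hstat
        rw [hlint, hmg]
        rw [show (8:ℝ) * Real.exp (α * c) = Real.exp (α * c) * 8 from by ring,
          ENNReal.ofReal_mul (Real.exp_nonneg _)]
        rw [show ENNReal.ofReal (8:ℝ) = (8:ℝ≥0∞) from by norm_num]
        ring

end AuxExpMax
section AuxJoint

open Filter

variable {Ω : Type} [MeasurableSpace Ω] {P : Measure Ω} (L : LevyProcess Ω P)

lemma aux_joint [IsProbabilityMeasure P] (α : ℝ) (hα : 0 < α) (c : ℝ)
    (hc : ∀ r ∈ Set.Icc (0:ℝ) 1, P {ω | L.X r ω < -c} ≤ 2⁻¹)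
    (g : ℕ → ℝ) (hg : Monotone g) (hg0 : g 0 = 0) (ha : 0 ≤ g 1)
    (n : ℕ) (hn : 1 ≤ n) (hgn : g n = g 1 + 1) :
    ∫⁻ ω, ENNReal.ofReal (Real.exp (α * L.X (g 1) ω)) * (Finset.Icc 1 n).sup
        (fun i => ENNReal.ofReal (Real.exp (α * (L.X (g i) ω - L.X (g 1) ω)))) ∂P ≤
      mgfE P L α (g 1) * (1 + ENNReal.ofReal (8 * Real.exp (α * c)) * mgfE P L α 1) := by
  classical
  have hind := auxA_indep L g hg (by rw [hg0]) 0 1 n (by norm_num) hn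
  set F : (ℕ → ℝ) → ℝ≥0∞ := fun h => ENNReal.ofReal (Real.exp (α * h 1)) with hF
  set Gm : (ℕ → ℝ) → ℝ≥0∞ := fun h => (Finset.Icc 1 n).sup
    (fun i => ENNReal.ofReal (Real.exp (α * h (i-1)))) with hGm
  have hFmeas : Measurable F :=
    ENNReal.measurable_ofReal.comp (Real.measurable_exp.comp
      ((measurable_pi_apply (X := fun _ : ℕ => ℝ) 1).const_mul α))
  have hGmeas : Measurable Gm := by
    have heq : Gm = fun h => ⨆ i ∈ Finset.Icc 1 n,
        ENNReal.ofReal (Real.exp (α * h (i-1))) := by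
      funext h
      rw [hGm]
      exact Finset.sup_eq_iSup _ _
    rw [heq]
    exact Measurable.iSup fun i => Measurable.iSup fun _ =>
      ENNReal.measurable_ofReal.comp (Real.measurable_exp.comp
        ((measurable_pi_apply (X := fun _ : ℕ => ℝ) _).const_mul α))
  have hcomp := hind.comp hFmeas hGmeas
  have hFeq : F ∘ auxA L g 0 1 = fun ω => ENNReal.ofReal (Real.exp (α * L.X (g 1) ω)) := by
    funext ω
    have h1 : auxA L g 0 1 ω 1 = L.X (g 1) ω := by
      unfold auxA
      rw [show min (0 + 1) 1 = 1 from rfl, hg0, L.zero ω, sub_zero]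
    simp only [Function.comp_apply, hF, h1]
  have hGeq : Gm ∘ auxA L g 1 n = fun ω => (Finset.Icc 1 n).sup
      (fun i => ENNReal.ofReal (Real.exp (α * (L.X (g i) ω - L.X (g 1) ω)))) := by
    funext ω
    simp only [Function.comp_apply, hGm]
    refine Finset.sup_congr rfl fun i hi => ?_
    rw [Finset.mem_Icc] at hi
    have h1 : auxA L g 1 n ω (i-1) = L.X (g i) ω - L.X (g 1) ω := by
      unfold auxA
      rw [show min (1 + (i-1)) n = i from by omega]
    rw [h1]
  rw [hFeq, hGeq] at hcomp
  have hNEmeas : Measurable (fun ω => (Finset.Icc 1 n).sup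
      (fun i => ENNReal.ofReal (Real.exp (α * (L.X (g i) ω - L.X (g 1) ω))))) := by
    have heq : (fun ω => (Finset.Icc 1 n).sup
        (fun i => ENNReal.ofReal (Real.exp (α * (L.X (g i) ω - L.X (g 1) ω))))) =
        fun ω => ⨆ i ∈ Finset.Icc 1 n,
          ENNReal.ofReal (Real.exp (α * (L.X (g i) ω - L.X (g 1) ω))) := by
      funext ω
      exact Finset.sup_eq_iSup _ _
    rw [heq]
    exact Measurable.iSup fun i => Measurable.iSup fun _ =>
      ENNReal.measurable_ofReal.comp (Real.measurable_exp.comp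
        (((L.meas _).sub (L.meas _)).const_mul α))
  have hprod := ProbabilityTheory.lintegral_mul_eq_lintegral_mul_lintegral_of_indepFun
    (aux_meas_exp L α (g 1)) hNEmeas hcomp
  simp only [Pi.mul_apply] at hprod
  rw [hprod]
  have hfst : ∫⁻ ω, ENNReal.ofReal (Real.exp (α * L.X (g 1) ω)) ∂P = mgfE P L α (g 1) := rfl
  rw [hfst]
  exact mul_le_mul_right (aux_exp_max L α hα c hc g hg hg0 ha n hn hgn) _

/-- The dyadic grid of span `[a, a+1]` at level `m`, prefixed by `0`. -/
def gridD (a : ℝ) (m : ℕ) : ℕ → ℝ :=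
  fun i => if i = 0 then 0 else a + ((min (i-1) (2^m) : ℕ) : ℝ) / (2^m : ℝ)

lemma gridD_zero (a : ℝ) (m : ℕ) : gridD a m 0 = 0 := by simp [gridD]

lemma gridD_one (a : ℝ) (m : ℕ) : gridD a m 1 = a := by simp [gridD]

lemma gridD_last (a : ℝ) (m : ℕ) : gridD a m (2^m + 1) = a + 1 := by
  have h2 : ((2:ℝ)^m) ≠ 0 := by positivity
  simp [gridD, div_self h2]

lemma gridD_mono (a : ℝ) (ha : 0 ≤ a) (m : ℕ) : Monotone (gridD a m) := by
  intro i j hij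
  unfold gridD
  by_cases hi : i = 0
  · by_cases hj : j = 0
    · simp [hi, hj]
    · simp only [hi, if_pos rfl, if_neg hj]
      positivity
  · have hj : j ≠ 0 := by omega
    simp only [if_neg hi, if_neg hj]
    have h1 : ((min (i-1) (2^m) : ℕ):ℝ) ≤ ((min (j-1) (2^m) : ℕ):ℝ) := by
      exact_mod_cast (by omega : min (i-1) (2^m) ≤ min (j-1) (2^m))
    have h2 : (0:ℝ) < 2^m := by positivity
    gcongr

/-- The dyadic sup of `exp(α (X_{a+q} - X_a))` at level `m`. -/
def NEb (L : LevyProcess Ω P) (α a : ℝ) (m : ℕ) (ω : Ω) : ℝ≥0∞ :=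
  (Finset.Icc 1 (2^m + 1)).sup
    (fun i => ENNReal.ofReal (Real.exp (α * (L.X (gridD a m i) ω - L.X a ω))))

lemma NEb_meas (α a : ℝ) (m : ℕ) : Measurable (NEb L α a m) := by
  have heq : NEb L α a m = fun ω => ⨆ i ∈ Finset.Icc 1 (2^m + 1),
      ENNReal.ofReal (Real.exp (α * (L.X (gridD a m i) ω - L.X a ω))) := by
    funext ω
    exact Finset.sup_eq_iSup _ _
  rw [heq]
  exact Measurable.iSup fun i => Measurable.iSup fun _ =>
    ENNReal.measurable_ofReal.comp (Real.measurable_exp.comp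
      (((L.meas _).sub (L.meas _)).const_mul α))

lemma NEb_mono (α a : ℝ) (ω : Ω) : Monotone (fun m => NEb L α a m ω) := by
  apply monotone_nat_of_le_succ
  intro m
  refine Finset.sup_le fun i hi => ?_
  rw [Finset.mem_Icc] at hi
  have hjle : min (i-1) (2^m) ≤ 2^m := min_le_right _ _
  have hwit : (2 * min (i-1) (2^m) + 1) ∈ Finset.Icc 1 (2^(m+1) + 1) := by
    rw [Finset.mem_Icc, pow_succ]
    omega
  have hval : gridD a (m+1) (2 * min (i-1) (2^m) + 1) = gridD a m i := by
    unfold gridD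
    rw [if_neg (by omega), if_neg (by omega)]
    have hmin : min (2 * min (i-1) (2^m) + 1 - 1) (2^(m+1)) = 2 * min (i-1) (2^m) := by
      rw [pow_succ]
      omega
    rw [hmin]
    congr 1
    have hc : ((2 * min (i-1) (2^m) : ℕ) : ℝ) = 2 * ((min (i-1) (2^m) : ℕ) : ℝ) := by
      push_cast
      ring
    rw [hc, pow_succ]
    have h2 : ((2:ℝ)^m) ≠ 0 := by positivity
    field_simp
  calc ENNReal.ofReal (Real.exp (α * (L.X (gridD a m i) ω - L.X a ω)))
      = ENNReal.ofReal (Real.exp (α * (L.X (gridD a (m+1) (2 * min (i-1) (2^m) + 1)) ω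
          - L.X a ω))) := by rw [hval]
    _ ≤ NEb L α a (m+1) ω :=
        Finset.le_sup (f := fun i' => ENNReal.ofReal
          (Real.exp (α * (L.X (gridD a (m+1) i') ω - L.X a ω)))) hwit

end AuxJoint
section AuxBlock

open Filter

variable {Ω : Type} [MeasurableSpace Ω] {P : Measure Ω} (L : LevyProcess Ω P)

lemma aux_block_int [IsProbabilityMeasure P] (α : ℝ) (hα : 0 < α) (c : ℝ)
    (hc : ∀ r ∈ Set.Icc (0:ℝ) 1, P {ω | L.X r ω < -c} ≤ 2⁻¹)
    (a : ℝ) (ha : 0 ≤ a) :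
    ∫⁻ ω, ENNReal.ofReal (Real.exp (α * L.X a ω)) * (⨆ m : ℕ, NEb L α a m ω) ∂P ≤
      mgfE P L α a * (1 + ENNReal.ofReal (8 * Real.exp (α * c)) * mgfE P L α 1) := by
  have heq : ∀ ω, ENNReal.ofReal (Real.exp (α * L.X a ω)) * (⨆ m, NEb L α a m ω) =
      ⨆ m, ENNReal.ofReal (Real.exp (α * L.X a ω)) * NEb L α a m ω :=
    fun ω => ENNReal.mul_iSup _ _
  simp only [heq]
  rw [MeasureTheory.lintegral_iSup (f := fun m ω => ENNReal.ofReal (Real.exp (α * L.X a ω)) * NEb L α a m ω)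
    (fun m => (aux_meas_exp L α a).mul (NEb_meas L α a m))
    (fun m m' hmm' ω => mul_le_mul_right (NEb_mono L α a ω hmm') _)]
  refine iSup_le fun m => ?_
  have hj := aux_joint L α hα c hc (gridD a m) (gridD_mono a ha m) (gridD_zero a m)
    (by rw [gridD_one]; exact ha) (2^m+1) (Nat.le_add_left 1 (2^m))
    (by rw [gridD_last, gridD_one])
  rw [gridD_one] at hj
  exact hj

lemma aux_block_pt (α : ℝ) (a : ℝ) (ω : Ω) (s : ℝ) (h1 : a ≤ s) (h2 : s ≤ a + 1) :
    ENNReal.ofReal (Real.exp (α * L.X s ω)) ≤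
      ENNReal.ofReal (Real.exp (α * L.X a ω)) * ⨆ m : ℕ, NEb L α a m ω := by
  have hsplit : ENNReal.ofReal (Real.exp (α * L.X s ω)) =
      ENNReal.ofReal (Real.exp (α * L.X a ω)) *
        ENNReal.ofReal (Real.exp (α * (L.X s ω - L.X a ω))) := by
    rw [← ENNReal.ofReal_mul (Real.exp_nonneg _), ← Real.exp_add]
    congr 2
    ring
  rw [hsplit]
  apply mul_le_mul_right
  have hf : ∀ t : ℝ, ContinuousWithinAt (fun r => L.X (a + r) ω) (Set.Ici t) t := by
    intro t
    refine (L.rightCont ω (a + t)).comp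
      ((continuous_const.add continuous_id).continuousWithinAt) ?_
    intro r hr
    exact add_le_add_right hr a
  have hB : ∀ m i : ℕ, i ≤ 2^m →
      (fun x => ENNReal.ofReal (Real.exp (α * (x - L.X a ω))))
        ((fun r => L.X (a + r) ω) ((i:ℝ) / 2^m)) ≤ ⨆ m : ℕ, NEb L α a m ω := by
    intro m i him
    have hgd : gridD a m (i+1) = a + (i:ℝ)/2^m := by
      unfold gridD
      rw [if_neg (by omega)]
      congr 2
      rw [show (i+1) - 1 = i from rfl, min_eq_left him]
    refine le_iSup_of_le m ?_
    refine le_trans (le_of_eq ?_) (Finset.le_sup (f := fun i' => ENNReal.ofReal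
      (Real.exp (α * (L.X (gridD a m i') ω - L.X a ω))))
      (Finset.mem_Icc.mpr ⟨by omega, by omega⟩ : i + 1 ∈ Finset.Icc 1 (2^m+1)))
    beta_reduce
    rw [hgd]
  have happ := CEFPaux_rc_approx (fun r => L.X (a + r) ω) hf
    (fun x => ENNReal.ofReal (Real.exp (α * (x - L.X a ω))))
    (ENNReal.continuous_ofReal.comp (Real.continuous_exp.comp
      (continuous_const.mul (continuous_id.sub continuous_const))))
    (⨆ m : ℕ, NEb L α a m ω) hB (r := s - a) ⟨by linarith, by linarith⟩
  beta_reduce at happ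
  rwa [show a + (s - a) = s from by ring] at happ

end AuxBlock

/-- inequality (4.16): if `E e^{αX_1} < ∞`, `ψ(α) ≥ 0` and
`E(X_1 e^{αX_1}) < ∞`, then for some constant `C < ∞`,
`E e^{α X̄_t} ≤ C (1+t) e^{ψ(α) t}` for all `t ≥ 0`. -/
theorem sup_mgf_linear_bound
    {Ω : Type} [MeasurableSpace Ω] (P : Measure Ω) [IsProbabilityMeasure P]
    (L : LevyProcess Ω P) (α : ℝ) (hα : 0 < α)
    (hmom : mgfE P L α 1 < ∞) (hpsi : 0 ≤ psi P L α)
    (hmom1 : ∫⁻ ω, ENNReal.ofReal (L.X 1 ω * Real.exp (α * L.X 1 ω)) ∂P < ∞) :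
    ∃ C : ℝ, ∀ t : ℝ, 0 ≤ t →
      supMgfE P L α t ≤ ENNReal.ofReal (C * (1 + t) * Real.exp (psi P L α * t)) := by
  classical
  obtain ⟨c, hc0, hc⟩ := aux_exists_c L
  have hM1pos : 0 < mgfE P L α 1 := aux_mgfE_pos L α 1
  have hM1top : mgfE P L α 1 ≠ ∞ := hmom.ne
  have hmgf_eq : mgf P L α 1 = (mgfE P L α 1).toReal := by
    unfold mgf mgfE
    rw [MeasureTheory.integral_eq_lintegral_of_nonneg_ae
      (Filter.Eventually.of_forall fun ω => Real.exp_nonneg _)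
      ((Real.measurable_exp.comp ((L.meas 1).const_mul α)).aestronglyMeasurable)]
  have hmgfpos : 0 < mgf P L α 1 := by
    rw [hmgf_eq]
    exact ENNReal.toReal_pos hM1pos.ne' hM1top
  have hexppsi : Real.exp (psi P L α) = mgf P L α 1 := Real.exp_log hmgfpos
  have hM1eq : mgfE P L α 1 = ENNReal.ofReal (Real.exp (psi P L α)) := by
    rw [hexppsi, hmgf_eq, ENNReal.ofReal_toReal hM1top]
  set KR : ℝ := 1 + 8 * Real.exp (α * c) * Real.exp (psi P L α) with hKR
  have hKRpos : 0 < KR := by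
    rw [hKR]
    positivity
  have hKEeq : (1 + ENNReal.ofReal (8 * Real.exp (α * c)) * mgfE P L α 1) =
      ENNReal.ofReal KR := by
    rw [hKR, ENNReal.ofReal_add (by norm_num) (by positivity), ENNReal.ofReal_one, hM1eq,
      ENNReal.ofReal_mul (by positivity),
      ← ENNReal.ofReal_mul (by norm_num : (0:ℝ) ≤ 8), ← ENNReal.ofReal_mul (by positivity)]
  refine ⟨KR * Real.exp (psi P L α), ?_⟩
  intro t ht
  set n : ℕ := Nat.floor t + 1 with hn
  have hn1 : 1 ≤ n := by omega
  have htn : t < (n : ℝ) := by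
    rw [hn]
    push_cast
    exact Nat.lt_floor_add_one t
  have hnt : (n : ℝ) ≤ t + 1 := by
    rw [hn]
    push_cast
    have := Nat.floor_le ht
    linarith
  have hpt : ∀ ω, (⨆ s ∈ Set.Icc (0:ℝ) t, ENNReal.ofReal (Real.exp (α * L.X s ω))) ≤
      ∑ k ∈ Finset.range n, ENNReal.ofReal (Real.exp (α * L.X (k:ℝ) ω)) *
        ⨆ m : ℕ, NEb L α (k:ℝ) m ω := by
    intro ω
    refine iSup₂_le fun s hs => ?_
    set k : ℕ := min (Nat.floor s) (n - 1) with hk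
    have hkn : k < n := by omega
    have hks : (k:ℝ) ≤ s := by
      rcases le_or_gt (Nat.floor s) (n-1) with h | h
      · rw [hk, min_eq_left h]
        exact Nat.floor_le hs.1
      · rw [hk, min_eq_right h.le]
        calc ((n-1:ℕ):ℝ) ≤ ((Nat.floor s : ℕ):ℝ) := by exact_mod_cast h.le
          _ ≤ s := Nat.floor_le hs.1
    have hsk1 : s ≤ (k:ℝ) + 1 := by
      rcases le_or_gt (Nat.floor s) (n-1) with h | h
      · rw [hk, min_eq_left h]
        exact (Nat.lt_floor_add_one s).le
      · rw [hk, min_eq_right h.le]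
        have h2 : ((n-1:ℕ):ℝ) = (n:ℝ) - 1 := by
          rw [Nat.cast_sub hn1]
          norm_num
        rw [h2]
        have := hs.2
        linarith
    refine le_trans (aux_block_pt L α (k:ℝ) ω s hks hsk1) ?_
    exact Finset.single_le_sum
      (f := fun k : ℕ => ENNReal.ofReal (Real.exp (α * L.X (k:ℝ) ω)) *
        ⨆ m : ℕ, NEb L α (k:ℝ) m ω)
      (fun _ _ => by simp) (Finset.mem_range.mpr hkn)
  have hM1ge1 : 1 ≤ mgfE P L α 1 := by
    rw [hM1eq]
    calc (1:ℝ≥0∞) = ENNReal.ofReal 1 := by norm_num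
      _ ≤ ENNReal.ofReal (Real.exp (psi P L α)) :=
          ENNReal.ofReal_le_ofReal (Real.one_le_exp hpsi)
  calc supMgfE P L α t
      ≤ ∫⁻ ω, ∑ k ∈ Finset.range n, ENNReal.ofReal (Real.exp (α * L.X (k:ℝ) ω)) *
          ⨆ m : ℕ, NEb L α (k:ℝ) m ω ∂P := MeasureTheory.lintegral_mono hpt
    _ = ∑ k ∈ Finset.range n, ∫⁻ ω, ENNReal.ofReal (Real.exp (α * L.X (k:ℝ) ω)) *
          ⨆ m : ℕ, NEb L α (k:ℝ) m ω ∂P :=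
        MeasureTheory.lintegral_finset_sum _ (fun k _ =>
          (aux_meas_exp L α (k:ℝ)).mul (Measurable.iSup fun m => NEb_meas L α (k:ℝ) m))
    _ ≤ ∑ k ∈ Finset.range n, mgfE P L α (k:ℝ) *
          (1 + ENNReal.ofReal (8 * Real.exp (α * c)) * mgfE P L α 1) :=
        Finset.sum_le_sum fun k _ => aux_block_int L α hα c hc (k:ℝ) (Nat.cast_nonneg k)
    _ = ∑ k ∈ Finset.range n, (mgfE P L α 1)^k * ENNReal.ofReal KR := by
        refine Finset.sum_congr rfl fun k _ => ?_
        rw [aux_mgfE_nat L α k, hKEeq]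
    _ ≤ ∑ _k ∈ Finset.range n, (mgfE P L α 1)^n * ENNReal.ofReal KR := by
        refine Finset.sum_le_sum fun k hk => ?_
        rw [Finset.mem_range] at hk
        exact mul_le_mul_left (pow_le_pow_right₀ hM1ge1 hk.le) _
    _ = (n : ℝ≥0∞) * ((mgfE P L α 1)^n * ENNReal.ofReal KR) := by
        rw [Finset.sum_const, Finset.card_range, nsmul_eq_mul]
    _ ≤ ENNReal.ofReal (KR * Real.exp (psi P L α) * (1 + t) *
          Real.exp (psi P L α * t)) := by
        rw [hM1eq, ← ENNReal.ofReal_pow (Real.exp_nonneg _),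
          show ((n:ℝ≥0∞)) = ENNReal.ofReal (n:ℝ) from (ENNReal.ofReal_natCast n).symm,
          ← ENNReal.ofReal_mul (by positivity), ← ENNReal.ofReal_mul (Nat.cast_nonneg n)]
        apply ENNReal.ofReal_le_ofReal
        have e1 : Real.exp (psi P L α) ^ n = Real.exp (psi P L α * n) := by
          rw [← Real.exp_nat_mul]
          ring_nf
        have e2 : Real.exp (psi P L α * n) ≤
            Real.exp (psi P L α) * Real.exp (psi P L α * t) := by
          rw [← Real.exp_add]
          apply Real.exp_le_exp.mpr
          have := mul_le_mul_of_nonneg_left hnt hpsi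
          linarith
        calc (n:ℝ) * (Real.exp (psi P L α) ^ n * KR)
            = (n:ℝ) * Real.exp (psi P L α * n) * KR := by rw [e1]; ring
          _ ≤ (t + 1) * (Real.exp (psi P L α) * Real.exp (psi P L α * t)) * KR := by
              have h1t : (0:ℝ) ≤ t + 1 := by linarith
              have hexp : (0:ℝ) ≤ Real.exp (psi P L α * n) := Real.exp_nonneg _
              apply mul_le_mul_of_nonneg_right _ hKRpos.le
              apply mul_le_mul hnt e2 hexp h1t
          _ = KR * Real.exp (psi P L α) * (1 + t) * Real.exp (psi P L α * t) := by ring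

end CEFP
end
end

section
/- Let X be a real-valued Lévy process and α>0 with E e^{αX_1}=1 and E(X_1 e^{αX_1})<∞. Then for every fixed t≥0, B(T−t)/B(T) → 1 as T→∞. -/
open MeasureTheory ProbabilityTheory Filter Set
open scoped ENNReal Topology

noncomputable section

namespace CEFP

set_option linter.unusedSectionVars false
set_option maxHeartbeats 1000000

section Aux

variable {Ω : Type} [MeasurableSpace Ω] {P : Measure Ω} [IsProbabilityMeasure P]
  (L : LevyProcess Ω P) (α : ℝ)

/-- `e^{α X_s}` as an `ℝ≥0∞`-valued function. -/
def ffun (s : ℝ) (ω : Ω) : ℝ≥0∞ := ENNReal.ofReal (Real.exp (α * L.X s ω))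

lemma ffun_meas (s : ℝ) : Measurable (ffun L α s) :=
  ENNReal.measurable_ofReal.comp ((Real.measurable_exp).comp ((L.meas s).const_mul α))

/-- running max of `e^{αX}` along the grid `v 0, …, v n`. -/
def SSfun (v : ℕ → ℝ) : ℕ → Ω → ℝ
  | 0 => fun ω => Real.exp (α * L.X (v 0) ω)
  | (n+1) => fun ω => max (SSfun v n ω) (Real.exp (α * L.X (v (n+1)) ω))

lemma SSfun_meas (v : ℕ → ℝ) (n : ℕ) : Measurable (SSfun L α v n) := by
  induction n with
  | zero => exact (Real.measurable_exp).comp ((L.meas _).const_mul α)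
  | succ n ih => exact ih.max ((Real.measurable_exp).comp ((L.meas _).const_mul α))

lemma le_SSfun (v : ℕ → ℝ) (n k : ℕ) (hk : k ≤ n) (ω : Ω) :
    Real.exp (α * L.X (v k) ω) ≤ SSfun L α v n ω := by
  induction n with
  | zero => rw [Nat.le_zero] at hk; subst hk; exact le_rfl
  | succ n ih =>
    rcases Nat.lt_or_ge k (n+1) with h | h
    · exact le_trans (ih (Nat.lt_succ_iff.mp h)) (le_max_left _ _)
    · have : k = n + 1 := le_antisymm hk h
      subst this; exact le_max_right _ _

lemma SSfun_le_iff (v : ℕ → ℝ) (n : ℕ) (lam : ℝ) (ω : Ω) :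
    lam ≤ SSfun L α v n ω ↔ ∃ k ≤ n, lam ≤ Real.exp (α * L.X (v k) ω) := by
  induction n with
  | zero => constructor
            · intro h; exact ⟨0, le_rfl, h⟩
            · rintro ⟨k, hk, h⟩; rw [Nat.le_zero] at hk; subst hk; exact h
  | succ n ih =>
    constructor
    · intro h
      rcases le_max_iff.mp h with h | h
      · obtain ⟨k, hk, hh⟩ := ih.mp h; exact ⟨k, hk.trans (Nat.le_succ n), hh⟩
      · exact ⟨n+1, le_rfl, h⟩
    · rintro ⟨k, hk, h⟩
      rcases Nat.lt_or_ge k (n+1) with hlt | hge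
      · exact le_max_iff.mpr (Or.inl (ih.mpr ⟨k, Nat.lt_succ_iff.mp hlt, h⟩))
      · have : k = n + 1 := le_antisymm hk hge
        subst this; exact le_max_iff.mpr (Or.inr h)

lemma SSfun_le_of_subgrid (v w : ℕ → ℝ) (m m' : ℕ)
    (h : ∀ k ≤ m, ∃ k' ≤ m', w k' = v k) (ω : Ω) :
    SSfun L α v m ω ≤ SSfun L α w m' ω := by
  induction m with
  | zero =>
    obtain ⟨k', hk', he⟩ := h 0 le_rfl
    simpa [SSfun, he] using le_SSfun L α w m' k' hk' ω
  | succ m ih =>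
    refine max_le (ih fun k hk => h k (hk.trans (Nat.le_succ m))) ?_
    obtain ⟨k', hk', he⟩ := h (m+1) le_rfl
    simpa [he] using le_SSfun L α w m' k' hk' ω

lemma one_le_SSfun (v : ℕ → ℝ) (h0 : v 0 = 0) (n : ℕ) (ω : Ω) :
    1 ≤ SSfun L α v n ω := by
  have := le_SSfun L α v n 0 (Nat.zero_le n) ω
  rwa [h0, L.zero, mul_zero, Real.exp_zero] at this

/-- the increment law: `X_{s+t} - X_s ~ X_t`. -/
lemma incr_law (g : ℝ → ℝ≥0∞) (hg : Measurable g) (s t : ℝ) (hs : 0 ≤ s) (ht : 0 ≤ t) :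
    ∫⁻ ω, g (L.X (s+t) ω - L.X s ω) ∂P = ∫⁻ ω, g (L.X t ω) ∂P := by
  have h1 : Measurable fun ω => L.X (s+t) ω - L.X s ω := (L.meas _).sub (L.meas _)
  rw [← lintegral_map hg h1, ← lintegral_map hg (L.meas t), L.stationary s t hs ht]

/-- telescoping: `X_{v j} = ∑_{i<j} (X_{v(i+1)} - X_{v i})` when `v 0 = 0`. -/
lemma telescope (v : ℕ → ℝ) (h0 : v 0 = 0) (j : ℕ) (ω : Ω) :
    L.X (v j) ω = ∑ i ∈ Finset.range j, (L.X (v (i+1)) ω - L.X (v i) ω) := by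
  rw [Finset.sum_range_sub (fun i => L.X (v i) ω), h0, L.zero, sub_zero]

/-- independence of the past vector `(X_{v 0}, …, X_{v k})` and a future increment. -/
lemma indep_past_future (v : ℕ → ℝ) (hv : Monotone v) (h0 : v 0 = 0) (k n : ℕ)
    (hkn : k ≤ n) :
    IndepFun (fun ω => fun j : Fin (k+1) => L.X (v j) ω)
      (fun ω => L.X (v n) ω - L.X (v k) ω) P := by
  have h00 : 0 ≤ v 0 := le_of_eq h0.symm
  have hI := L.indepIncr n v hv h00
  set S : Finset (Fin n) := Finset.univ.filter (fun i : Fin n => i.1 < k) with hS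
  set T : Finset (Fin n) := Finset.univ.filter (fun i : Fin n => ¬ i.1 < k) with hT
  have hST : Disjoint S T := by
    simp only [hS, hT, Finset.disjoint_filter]
    exact fun x _ h h' => h' h
  have hmeas : ∀ i : Fin n, Measurable fun ω => L.X (v (↑i + 1)) ω - L.X (v ↑i) ω :=
    fun i => (L.meas _).sub (L.meas _)
  have hIF := hI.indepFun_finset S T hST hmeas
  have key : ∀ (j : ℕ), j ≤ n → ∀ ω : Ω,
      (∑ i : Fin n, if i.1 < j then (L.X (v (i.1+1)) ω - L.X (v i.1) ω) else 0)
        = L.X (v j) ω := by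
    intro j hj ω
    rw [Fin.sum_univ_eq_sum_range (fun r => if r < j then (L.X (v (r+1)) ω - L.X (v r) ω) else 0),
      ← Finset.sum_filter]
    have : (Finset.range n).filter (· < j) = Finset.range j := by
      ext r; simp only [Finset.mem_filter, Finset.mem_range]; omega
    rw [this, ← telescope L v h0 j ω]
  set φ : ({x // x ∈ S} → ℝ) → (Fin (k+1) → ℝ) :=
    fun y => fun j => ∑ i : {x // x ∈ S}, if (i.1).1 < j.1 then y i else 0 with hφ
  set ψ : ({x // x ∈ T} → ℝ) → ℝ := fun y => ∑ i : {x // x ∈ T}, y i with hψ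
  have hφm : Measurable φ := by
    refine measurable_pi_lambda _ fun j => ?_
    refine Finset.measurable_sum Finset.univ fun i _ => ?_
    by_cases h : (i.1).1 < j.1
    · simpa [h] using measurable_pi_apply (X := fun _ : {x // x ∈ S} => ℝ) i
    · simp only [h, if_false]; exact measurable_const
  have hψm : Measurable ψ := by
    refine Finset.measurable_sum Finset.univ fun i _ => ?_
    exact measurable_pi_apply (X := fun _ : {x // x ∈ T} => ℝ) i
  have hL : (fun ω => φ (fun i : {x // x ∈ S} => L.X (v (↑(i.1) + 1)) ω - L.X (v ↑(i.1)) ω))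
      = (fun ω => fun j : Fin (k+1) => L.X (v j) ω) := by
    funext ω j
    simp only [hφ]
    rw [Finset.sum_coe_sort S (fun i : Fin n =>
      if i.1 < j.1 then (L.X (v (i.1+1)) ω - L.X (v i.1) ω) else 0)]
    rw [hS, Finset.sum_filter]
    have hje : j.1 ≤ k := Nat.lt_succ_iff.mp j.2
    have : ∀ i : Fin n,
        (if i.1 < k then (if i.1 < j.1 then (L.X (v (i.1+1)) ω - L.X (v i.1) ω) else 0) else 0)
          = if i.1 < j.1 then (L.X (v (i.1+1)) ω - L.X (v i.1) ω) else 0 := by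
      intro i
      by_cases h1 : i.1 < j.1
      · have h2 : i.1 < k := lt_of_lt_of_le h1 hje
        simp [h1, h2]
      · simp [h1]
    rw [Finset.sum_congr rfl (fun i _ => this i)]
    exact key j.1 (hje.trans hkn) ω
  have hR : (fun ω => ψ (fun i : {x // x ∈ T} => L.X (v (↑(i.1) + 1)) ω - L.X (v ↑(i.1)) ω))
      = (fun ω => L.X (v n) ω - L.X (v k) ω) := by
    funext ω
    simp only [hψ]
    rw [Finset.sum_coe_sort T (fun i : Fin n => L.X (v (i.1+1)) ω - L.X (v i.1) ω)]
    have hsplit := Finset.sum_filter_add_sum_filter_not Finset.univ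
      (fun i : Fin n => i.1 < k) (fun i : Fin n => L.X (v (i.1+1)) ω - L.X (v i.1) ω)
    rw [← hS, ← hT] at hsplit
    have huniv : (∑ i : Fin n, (L.X (v (i.1+1)) ω - L.X (v i.1) ω)) = L.X (v n) ω := by
      rw [← key n le_rfl ω]
      exact Finset.sum_congr rfl (fun i _ => by simp [i.2])
    have hSsum : (∑ i ∈ S, (L.X (v (i.1+1)) ω - L.X (v i.1) ω)) = L.X (v k) ω := by
      rw [hS, Finset.sum_filter]
      exact key k hkn ω
    rw [huniv, hSsum] at hsplit
    linarith
  rw [← hL, ← hR]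
  exact hIF.comp hφm hψm

/-- lintegral of a product of two independent (composed) functions factorizes. -/
lemma lintegral_mul_indep {β γ : Type} [MeasurableSpace β] [MeasurableSpace γ]
    {V : Ω → β} {W : Ω → γ} (hV : Measurable V) (hW : Measurable W)
    (h : IndepFun V W P) (h₁ : β → ℝ≥0∞) (h₂ : γ → ℝ≥0∞)
    (m₁ : Measurable h₁) (m₂ : Measurable h₂) :
    ∫⁻ ω, h₁ (V ω) * h₂ (W ω) ∂P
      = (∫⁻ ω, h₁ (V ω) ∂P) * ∫⁻ ω, h₂ (W ω) ∂P := by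
  have hmap := (ProbabilityTheory.indepFun_iff_map_prod_eq_prod_map_map
    hV.aemeasurable hW.aemeasurable).mp h
  have hm : Measurable fun p : β × γ => h₁ p.1 * h₂ p.2 :=
    (m₁.comp measurable_fst).mul (m₂.comp measurable_snd)
  calc ∫⁻ ω, h₁ (V ω) * h₂ (W ω) ∂P
      = ∫⁻ p, h₁ p.1 * h₂ p.2 ∂(P.map (fun ω => (V ω, W ω))) := by
        rw [lintegral_map hm (hV.prodMk hW)]
    _ = ∫⁻ p, h₁ p.1 * h₂ p.2 ∂((P.map V).prod (P.map W)) := by rw [hmap]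
    _ = (∫⁻ b, h₁ b ∂(P.map V)) * ∫⁻ c, h₂ c ∂(P.map W) :=
        MeasureTheory.lintegral_prod_mul m₁.aemeasurable m₂.aemeasurable
    _ = (∫⁻ ω, h₁ (V ω) ∂P) * ∫⁻ ω, h₂ (W ω) ∂P := by
        rw [lintegral_map m₁ hV, lintegral_map m₂ hW]

end Aux

end CEFP
namespace CEFP

set_option linter.unusedSectionVars false
set_option maxHeartbeats 1000000

section Aux2

variable {Ω : Type} [MeasurableSpace Ω] {P : Measure Ω} [IsProbabilityMeasure P]
  (L : LevyProcess Ω P) (α : ℝ)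

lemma mgfE_zero : mgfE P L α 0 = 1 := by
  simp [mgfE, L.zero]

lemma mgfE_add (s t : ℝ) (hs : 0 ≤ s) (ht : 0 ≤ t) :
    mgfE P L α (s + t) = mgfE P L α s * mgfE P L α t := by
  set v : ℕ → ℝ := fun i => if i = 0 then 0 else if i = 1 then s else s + t with hv
  have hv0 : v 0 = 0 := rfl
  have hv1 : v 1 = s := rfl
  have hv2 : v 2 = s + t := rfl
  have hmono : Monotone v := by
    intro a b hab
    rcases a with _|_|a <;> rcases b with _|_|b <;> simp [hv] <;> first | linarith | omega
  have hind := indep_past_future L v hmono hv0 1 2 one_le_two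
  have hVm : Measurable fun ω => fun j : Fin 2 => L.X (v j) ω :=
    measurable_pi_lambda _ fun j => L.meas _
  have hWm : Measurable fun ω => L.X (v 2) ω - L.X (v 1) ω := (L.meas _).sub (L.meas _)
  have key := lintegral_mul_indep hVm hWm hind
    (fun y : Fin 2 → ℝ => ENNReal.ofReal (Real.exp (α * y 1)))
    (fun x : ℝ => ENNReal.ofReal (Real.exp (α * x)))
    (ENNReal.measurable_ofReal.comp
      (Real.measurable_exp.comp ((measurable_pi_apply (X := fun _ : Fin 2 => ℝ) 1).const_mul α)))
    (ENNReal.measurable_ofReal.comp (Real.measurable_exp.comp (measurable_id'.const_mul α)))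
  simp only [Fin.isValue, Fin.val_one] at key
  have hpt : ∀ ω : Ω, ENNReal.ofReal (Real.exp (α * L.X (s + t) ω))
      = ENNReal.ofReal (Real.exp (α * L.X (v 1) ω))
        * ENNReal.ofReal (Real.exp (α * (L.X (v 2) ω - L.X (v 1) ω))) := by
    intro ω
    rw [← ENNReal.ofReal_mul (Real.exp_nonneg _), ← Real.exp_add, hv1, hv2]
    ring_nf
  have hincr : (∫⁻ ω, ENNReal.ofReal (Real.exp (α * (L.X (v 2) ω - L.X (v 1) ω))) ∂P)
      = mgfE P L α t := by
    rw [hv1, hv2]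
    exact incr_law L (fun x => ENNReal.ofReal (Real.exp (α * x)))
      (ENNReal.measurable_ofReal.comp (Real.measurable_exp.comp (measurable_id'.const_mul α)))
      s t hs ht
  calc mgfE P L α (s + t)
      = ∫⁻ ω, ENNReal.ofReal (Real.exp (α * L.X (v 1) ω))
          * ENNReal.ofReal (Real.exp (α * (L.X (v 2) ω - L.X (v 1) ω))) ∂P :=
        lintegral_congr hpt
    _ = (∫⁻ ω, ENNReal.ofReal (Real.exp (α * L.X (v 1) ω)) ∂P)
          * ∫⁻ ω, ENNReal.ofReal (Real.exp (α * (L.X (v 2) ω - L.X (v 1) ω))) ∂P := key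
    _ = mgfE P L α s * mgfE P L α t := by rw [hincr, hv1]; rfl

lemma mgfE_nat_mul (r : ℝ) (hr : 0 ≤ r) (j : ℕ) :
    mgfE P L α (j * r) = mgfE P L α r ^ j := by
  induction j with
  | zero => simpa using mgfE_zero L α
  | succ j ih =>
    have : ((j : ℝ) + 1) * r = (j : ℝ) * r + r := by ring
    rw [Nat.cast_succ, this, mgfE_add L α _ r (by positivity) hr, ih, pow_succ]

lemma mgfE_rat (hcl : mgfE P L α 1 = 1) (k n : ℕ) (hn : 0 < n) :
    mgfE P L α ((k : ℝ) / n) = 1 := by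
  have hn' : (0:ℝ) < n := by exact_mod_cast hn
  have hinv : (0:ℝ) ≤ 1 / n := by positivity
  have hone : mgfE P L α (1 / n) ^ n = 1 := by
    rw [← mgfE_nat_mul L α _ hinv n]
    have : (n : ℝ) * (1 / n) = 1 := by field_simp
    rw [this, hcl]
  have hx : mgfE P L α (1 / n) = 1 := by
    rcases lt_trichotomy (mgfE P L α (1 / n)) 1 with h | h | h
    · exact absurd hone (by simpa using (pow_lt_one₀ zero_le' h hn.ne').ne)
    · exact h
    · exact absurd hone (by simpa using (one_lt_pow₀ h hn.ne').ne')
  have : (k : ℝ) / n = k * (1 / n) := by ring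
  rw [this, mgfE_nat_mul L α _ hinv k, hx, one_pow]

lemma mgfE_le_one (hcl : mgfE P L α 1 = 1) (t : ℝ) (ht : 0 ≤ t) :
    mgfE P L α t ≤ 1 := by
  set u : ℕ → ℝ := fun j => ((⌊(j + 1 : ℝ) * t⌋₊ + 1 : ℕ) : ℝ) / ((j + 1 : ℕ) : ℝ) with hu
  have hpos : ∀ j : ℕ, (0:ℝ) < (j + 1 : ℕ) := by
    intro j; exact_mod_cast Nat.succ_pos j
  have hgt : ∀ j, t ≤ u j := by
    intro j
    have h1 : (j + 1 : ℝ) * t < ⌊(j + 1 : ℝ) * t⌋₊ + 1 := Nat.lt_floor_add_one _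
    rw [hu]
    rw [le_div_iff₀ (hpos j)]
    push_cast
    push_cast at h1
    nlinarith [hpos j]
  have hle : ∀ j, u j ≤ t + 1 / (j + 1 : ℕ) := by
    intro j
    have h1 : (⌊(j + 1 : ℝ) * t⌋₊ : ℝ) ≤ (j + 1 : ℝ) * t :=
      Nat.floor_le (by positivity)
    rw [hu, div_le_iff₀ (hpos j)]
    have : (0:ℝ) < (j:ℝ) + 1 := by positivity
    push_cast
    push_cast at h1
    field_simp
    nlinarith
  have htend : Filter.Tendsto u Filter.atTop (nhdsWithin t (Ici t)) := by
    apply tendsto_nhdsWithin_of_tendsto_nhds_of_eventually_within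
    · have h2 : Filter.Tendsto (fun j : ℕ => t + 1 / (j + 1 : ℕ)) Filter.atTop (𝓝 (t + 0)) := by
        apply Filter.Tendsto.const_add
        exact_mod_cast tendsto_one_div_add_atTop_nhds_zero_nat (𝕜 := ℝ)
      rw [add_zero] at h2
      exact tendsto_of_tendsto_of_tendsto_of_le_of_le tendsto_const_nhds h2 hgt hle
    · exact Filter.Eventually.of_forall fun j => hgt j
  have hrat : ∀ j, mgfE P L α (u j) = 1 := fun j => mgfE_rat L α hcl _ _ (Nat.succ_pos j)
  have hfat : ∀ ω : Ω, Filter.Tendsto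
      (fun j => ENNReal.ofReal (Real.exp (α * L.X (u j) ω))) Filter.atTop
      (𝓝 (ENNReal.ofReal (Real.exp (α * L.X t ω)))) := by
    intro ω
    have hX : Filter.Tendsto (fun j => L.X (u j) ω) Filter.atTop (𝓝 (L.X t ω)) :=
      Filter.Tendsto.comp (L.rightCont ω t) htend
    exact (ENNReal.continuous_ofReal.tendsto _).comp
      ((Real.continuous_exp.tendsto _).comp (hX.const_mul α))
  have hlim : mgfE P L α t ≤ Filter.liminf (fun j => mgfE P L α (u j)) Filter.atTop := by
    calc mgfE P L α t
        = ∫⁻ ω, Filter.liminf (fun j => ENNReal.ofReal (Real.exp (α * L.X (u j) ω)))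
            Filter.atTop ∂P :=
          lintegral_congr fun ω => ((hfat ω).liminf_eq).symm
      _ ≤ Filter.liminf (fun j => mgfE P L α (u j)) Filter.atTop :=
          lintegral_liminf_le fun j =>
            ENNReal.measurable_ofReal.comp
              (Real.measurable_exp.comp ((L.meas _).const_mul α))
  simpa [hrat] using hlim

lemma mgfE_eq_one (hcl : mgfE P L α 1 = 1) (t : ℝ) (ht : 0 ≤ t) :
    mgfE P L α t = 1 := by
  refine le_antisymm (mgfE_le_one L α hcl t ht) ?_
  set q : ℕ := ⌊t⌋₊ + 1 with hq
  have htq : t ≤ (q : ℝ) := by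
    rw [hq]; push_cast; exact (Nat.lt_floor_add_one t).le
  have hq1 : mgfE P L α q = 1 := by
    have := mgfE_rat L α hcl q 1 one_pos
    simpa using this
  have hsum : (q : ℝ) = t + ((q : ℝ) - t) := by ring
  have hmul : mgfE P L α q = mgfE P L α t * mgfE P L α ((q:ℝ) - t) := by
    have h2 := mgfE_add L α t ((q:ℝ) - t) ht (by linarith)
    rw [← hsum] at h2
    exact h2
  have hle := mgfE_le_one L α hcl ((q:ℝ) - t) (by linarith)
  calc (1:ℝ≥0∞) = mgfE P L α t * mgfE P L α ((q:ℝ) - t) := by rw [← hmul, hq1]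
    _ ≤ mgfE P L α t * 1 := mul_le_mul_right hle _
    _ = mgfE P L α t := mul_one _

end Aux2

end CEFP
namespace CEFP

set_option linter.unusedSectionVars false
set_option maxHeartbeats 1000000

section Aux3

variable {Ω : Type} [MeasurableSpace Ω] {P : Measure Ω} [IsProbabilityMeasure P]
  (L : LevyProcess Ω P) (α : ℝ)

/-- `E[X_t⁺ e^{α X_t}]`. -/
def JJ (t : ℝ) : ℝ≥0∞ :=
  ∫⁻ ω, ENNReal.ofReal (max (L.X t ω) 0 * Real.exp (α * L.X t ω)) ∂P

lemma JJ_eq_mom1 : JJ L α 1 = ∫⁻ ω, ENNReal.ofReal (L.X 1 ω * Real.exp (α * L.X 1 ω)) ∂P := by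
  refine lintegral_congr fun ω => ?_
  rcases le_or_gt 0 (L.X 1 ω) with h | h
  · rw [max_eq_left h]
  · rw [max_eq_right h.le, zero_mul, ENNReal.ofReal_zero,
      ENNReal.ofReal_of_nonpos (mul_nonpos_iff.mpr (Or.inr ⟨h.le, (Real.exp_nonneg _)⟩))]

lemma negpart_exp_le (hα : 0 < α) (x : ℝ) :
    max (-x) 0 * Real.exp (α * x) ≤ (Real.exp 1 * α)⁻¹ := by
  have hinvpos : (0:ℝ) < (Real.exp 1 * α)⁻¹ := by positivity
  rcases le_or_gt 0 x with h | h
  · rw [max_eq_right (by linarith)]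
    simpa using hinvpos.le
  · rw [max_eq_left (by linarith)]
    set y : ℝ := -(α * x) with hy
    have hy0 : 0 < y := by
      rw [hy]; have := mul_neg_of_pos_of_neg hα h; linarith
    have hkey : y * Real.exp (-y) ≤ (Real.exp 1)⁻¹ := by
      have hlog := Real.log_le_sub_one_of_pos hy0
      have h2 : y * Real.exp (-y) = Real.exp (Real.log y - y) := by
        rw [Real.exp_sub, Real.exp_log hy0, Real.exp_neg]; ring
      rw [h2, ← Real.exp_neg]
      exact Real.exp_le_exp.mpr (by linarith)
    have hx : -x = α⁻¹ * y := by rw [hy]; field_simp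
    have hex : Real.exp (α * x) = Real.exp (-y) := by rw [hy, neg_neg]
    rw [hx, hex, mul_assoc, mul_inv]
    rw [mul_comm ((Real.exp 1)⁻¹) (α⁻¹)]
    exact mul_le_mul_of_nonneg_left hkey (by positivity)

/-- lintegral of a product of functions of successive increments factorizes. -/
lemma lintegral_prod_incr (v : ℕ → ℝ) (hv : Monotone v) (h0 : v 0 = 0)
    (g : ℕ → ℝ → ℝ≥0∞) (hg : ∀ i, Measurable (g i)) (r : ℕ) :
    ∫⁻ ω, ∏ i ∈ Finset.range r, g i (L.X (v (i+1)) ω - L.X (v i) ω) ∂P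
      = ∏ i ∈ Finset.range r, ∫⁻ ω, g i (L.X (v (i+1)) ω - L.X (v i) ω) ∂P := by
  induction r with
  | zero => simp
  | succ r ih =>
    simp only [Finset.prod_range_succ]
    rw [← ih]
    have hind := indep_past_future L v hv h0 r (r+1) (Nat.le_succ r)
    have hVm : Measurable fun ω => fun j : Fin (r+1) => L.X (v j) ω :=
      measurable_pi_lambda _ fun j => L.meas _
    have hWm : Measurable fun ω => L.X (v (r+1)) ω - L.X (v r) ω := (L.meas _).sub (L.meas _)
    set h₁ : (Fin (r+1) → ℝ) → ℝ≥0∞ := fun y =>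
      ∏ i ∈ (Finset.range r).attach,
        g i (y ⟨i.1 + 1, by have := Finset.mem_range.mp i.2; omega⟩
          - y ⟨i.1, by have := Finset.mem_range.mp i.2; omega⟩) with hh₁
    have hm₁ : Measurable h₁ :=
      Finset.measurable_prod _ fun i _ =>
        (hg i).comp ((measurable_pi_apply _).sub (measurable_pi_apply _))
    have key := lintegral_mul_indep hVm hWm hind h₁ (g r) hm₁ (hg r)
    have hcomp : ∀ ω : Ω, h₁ (fun j : Fin (r+1) => L.X (v j) ω)
        = ∏ i ∈ Finset.range r, g i (L.X (v (i+1)) ω - L.X (v i) ω) := by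
      intro ω
      rw [hh₁, ← Finset.prod_attach (Finset.range r)
        (fun i => g i (L.X (v (i+1)) ω - L.X (v i) ω))]
    calc ∫⁻ ω, (∏ i ∈ Finset.range r, g i (L.X (v (i+1)) ω - L.X (v i) ω))
          * g r (L.X (v (r+1)) ω - L.X (v r) ω) ∂P
        = ∫⁻ ω, h₁ (fun j : Fin (r+1) => L.X (v j) ω)
            * g r (L.X (v (r+1)) ω - L.X (v r) ω) ∂P :=
          lintegral_congr fun ω => by rw [hcomp]
      _ = (∫⁻ ω, h₁ (fun j : Fin (r+1) => L.X (v j) ω) ∂P)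
            * ∫⁻ ω, g r (L.X (v (r+1)) ω - L.X (v r) ω) ∂P := key
      _ = (∫⁻ ω, ∏ i ∈ Finset.range r, g i (L.X (v (i+1)) ω - L.X (v i) ω) ∂P)
            * ∫⁻ ω, g r (L.X (v (r+1)) ω - L.X (v r) ω) ∂P := by
          rw [lintegral_congr hcomp]

end Aux3

end CEFP
namespace CEFP

set_option linter.unusedSectionVars false
set_option maxHeartbeats 1000000

section Aux4

variable {Ω : Type} [MeasurableSpace Ω] {P : Measure Ω} [IsProbabilityMeasure P]
  (L : LevyProcess Ω P) (α : ℝ)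

lemma ofReal_prod_of_nonneg {ι : Type} {s : Finset ι} {f : ι → ℝ}
    (h : ∀ i ∈ s, 0 ≤ f i) :
    ENNReal.ofReal (∏ i ∈ s, f i) = ∏ i ∈ s, ENNReal.ofReal (f i) := by
  classical
  induction s using Finset.induction_on with
  | empty => simp
  | @insert a s hni ih =>
    rw [Finset.prod_insert hni, Finset.prod_insert hni,
      ENNReal.ofReal_mul (h a (Finset.mem_insert_self a s))]
    rw [ih fun i hi => h i (Finset.mem_insert_of_mem hi)]

lemma JJ_le_unit (hα : 0 < α) (hcl : mgfE P L α 1 = 1) (s : ℝ) (hs : 0 ≤ s) (hs1 : s ≤ 1) :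
    JJ L α s ≤ JJ L α 1 + ENNReal.ofReal ((Real.exp 1 * α)⁻¹) := by
  set v : ℕ → ℝ := fun i => if i = 0 then 0 else if i = 1 then s else 1 with hv
  have hv0 : v 0 = 0 := rfl
  have hv1 : v 1 = s := rfl
  have hv2 : v 2 = 1 := rfl
  have hmono : Monotone v := by
    intro a b hab
    rcases a with _|_|a <;> rcases b with _|_|b <;> simp [hv] <;> first | linarith | omega
  have hind := indep_past_future L v hmono hv0 1 2 one_le_two
  have hVm : Measurable fun ω => fun j : Fin 2 => L.X (v j) ω :=
    measurable_pi_lambda _ fun j => L.meas _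
  have hWm : Measurable fun ω => L.X (v 2) ω - L.X (v 1) ω := (L.meas _).sub (L.meas _)
  have hexpm : Measurable fun x : ℝ => ENNReal.ofReal (Real.exp (α * x)) :=
    ENNReal.measurable_ofReal.comp (Real.measurable_exp.comp (measurable_id'.const_mul α))
  have hnegm : Measurable fun x : ℝ => ENNReal.ofReal (max (-x) 0 * Real.exp (α * x)) :=
    ENNReal.measurable_ofReal.comp
      ((measurable_neg.max measurable_const).mul
        (Real.measurable_exp.comp (measurable_id'.const_mul α)))
  have hincr_eq : ∀ (g : ℝ → ℝ≥0∞), Measurable g →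
      (∫⁻ ω, g (L.X (v 2) ω - L.X (v 1) ω) ∂P) = ∫⁻ ω, g (L.X (1 - s) ω) ∂P := by
    intro g hgm
    have := incr_law L g hgm s (1 - s) hs (by linarith)
    rw [hv1, hv2]
    rw [show s + (1 - s) = 1 by ring] at this
    exact this
  -- Step 1 : JJ s = ∫⁻ max(X_s,0) e^{α X_1}
  have step1 : (∫⁻ ω, ENNReal.ofReal (max (L.X s ω) 0 * Real.exp (α * L.X 1 ω)) ∂P)
      = JJ L α s := by
    have key := lintegral_mul_indep hVm hWm hind
      (fun y : Fin 2 → ℝ => ENNReal.ofReal (max (y 1) 0 * Real.exp (α * y 1)))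
      (fun x : ℝ => ENNReal.ofReal (Real.exp (α * x)))
      (ENNReal.measurable_ofReal.comp
        (((measurable_pi_apply 1).max measurable_const).mul
          (Real.measurable_exp.comp ((measurable_pi_apply (X := fun _ : Fin 2 => ℝ) 1).const_mul α))))
      hexpm
    simp only [Fin.isValue, Fin.val_one] at key
    have hpt : ∀ ω : Ω, ENNReal.ofReal (max (L.X (v 1) ω) 0 * Real.exp (α * L.X (v 1) ω))
        * ENNReal.ofReal (Real.exp (α * (L.X (v 2) ω - L.X (v 1) ω)))
        = ENNReal.ofReal (max (L.X s ω) 0 * Real.exp (α * L.X 1 ω)) := by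
      intro ω
      rw [← ENNReal.ofReal_mul (by positivity), hv1, hv2]
      congr 1
      rw [mul_assoc, ← Real.exp_add]
      ring_nf
    rw [← lintegral_congr hpt, key]
    have h2 : (∫⁻ ω, ENNReal.ofReal (Real.exp (α * (L.X (v 2) ω - L.X (v 1) ω))) ∂P) = 1 := by
      rw [hincr_eq _ hexpm]
      exact mgfE_eq_one L α hcl (1 - s) (by linarith)
    rw [h2, mul_one, hv1]
    rfl
  -- Step 2 : pointwise bound
  have step2 : (∫⁻ ω, ENNReal.ofReal (max (L.X s ω) 0 * Real.exp (α * L.X 1 ω)) ∂P)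
      ≤ JJ L α 1 + ∫⁻ ω, ENNReal.ofReal
          (max (-(L.X 1 ω - L.X s ω)) 0 * Real.exp (α * L.X 1 ω)) ∂P := by
    have hAm : Measurable fun ω => ENNReal.ofReal (max (L.X 1 ω) 0 * Real.exp (α * L.X 1 ω)) :=
      ENNReal.measurable_ofReal.comp
        (((L.meas 1).max measurable_const).mul
          (Real.measurable_exp.comp ((L.meas 1).const_mul α)))
    refine le_trans (lintegral_mono (fun ω => ?_)) (le_of_eq (lintegral_add_left hAm _))
    have hmax : max (L.X s ω) 0 ≤ max (L.X 1 ω) 0 + max (-(L.X 1 ω - L.X s ω)) 0 := by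
      have h1 := le_max_left (L.X 1 ω) 0
      have h2 := le_max_left (-(L.X 1 ω - L.X s ω)) 0
      have h3 := le_max_right (L.X 1 ω) 0
      have h4 := le_max_right (-(L.X 1 ω - L.X s ω)) 0
      rcases le_or_gt (L.X s ω) 0 with h | h
      · rw [max_eq_right h]; linarith
      · rw [max_eq_left h.le]; linarith
    calc ENNReal.ofReal (max (L.X s ω) 0 * Real.exp (α * L.X 1 ω))
        ≤ ENNReal.ofReal ((max (L.X 1 ω) 0 + max (-(L.X 1 ω - L.X s ω)) 0)
            * Real.exp (α * L.X 1 ω)) :=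
          ENNReal.ofReal_le_ofReal (by
            apply mul_le_mul_of_nonneg_right hmax (Real.exp_nonneg _))
      _ = ENNReal.ofReal (max (L.X 1 ω) 0 * Real.exp (α * L.X 1 ω)
            + max (-(L.X 1 ω - L.X s ω)) 0 * Real.exp (α * L.X 1 ω)) := by ring_nf
      _ ≤ _ := ENNReal.ofReal_add_le
  -- Step 3 : the second term is at most (e α)⁻¹
  have step3 : (∫⁻ ω, ENNReal.ofReal
        (max (-(L.X 1 ω - L.X s ω)) 0 * Real.exp (α * L.X 1 ω)) ∂P)
      ≤ ENNReal.ofReal ((Real.exp 1 * α)⁻¹) := by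
    have key := lintegral_mul_indep hVm hWm hind
      (fun y : Fin 2 → ℝ => ENNReal.ofReal (Real.exp (α * y 1)))
      (fun x : ℝ => ENNReal.ofReal (max (-x) 0 * Real.exp (α * x)))
      (ENNReal.measurable_ofReal.comp
        (Real.measurable_exp.comp ((measurable_pi_apply (X := fun _ : Fin 2 => ℝ) 1).const_mul α)))
      hnegm
    simp only [Fin.isValue, Fin.val_one] at key
    have hpt : ∀ ω : Ω, ENNReal.ofReal (Real.exp (α * L.X (v 1) ω))
        * ENNReal.ofReal (max (-(L.X (v 2) ω - L.X (v 1) ω)) 0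
            * Real.exp (α * (L.X (v 2) ω - L.X (v 1) ω)))
        = ENNReal.ofReal (max (-(L.X 1 ω - L.X s ω)) 0 * Real.exp (α * L.X 1 ω)) := by
      intro ω
      rw [← ENNReal.ofReal_mul (Real.exp_nonneg _), hv1, hv2]
      congr 1
      rw [← mul_assoc, mul_comm (Real.exp (α * L.X s ω)) _, mul_assoc, ← Real.exp_add]
      ring_nf
    rw [← lintegral_congr hpt, key]
    have h1 : (∫⁻ ω, ENNReal.ofReal (Real.exp (α * L.X (v 1) ω)) ∂P) = 1 := by
      rw [hv1]; exact mgfE_eq_one L α hcl s hs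
    rw [h1, one_mul, hincr_eq _ hnegm]
    calc (∫⁻ ω, ENNReal.ofReal
          (max (-(L.X (1 - s) ω)) 0 * Real.exp (α * L.X (1 - s) ω)) ∂P)
        ≤ ∫⁻ _, ENNReal.ofReal ((Real.exp 1 * α)⁻¹) ∂P :=
          lintegral_mono fun ω => ENNReal.ofReal_le_ofReal (negpart_exp_le α hα _)
      _ = ENNReal.ofReal ((Real.exp 1 * α)⁻¹) := by simp
  calc JJ L α s = _ := step1.symm
    _ ≤ _ := step2
    _ ≤ JJ L α 1 + ENNReal.ofReal ((Real.exp 1 * α)⁻¹) := add_le_add_right step3 _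

lemma JJ_linear (hα : 0 < α) (hcl : mgfE P L α 1 = 1) (t : ℝ) (ht : 0 ≤ t) :
    JJ L α t ≤ (⌈t⌉₊ : ℝ≥0∞) * (JJ L α 1 + ENNReal.ofReal ((Real.exp 1 * α)⁻¹)) := by
  set n : ℕ := ⌈t⌉₊ with hn
  set v : ℕ → ℝ := fun i => min (i : ℝ) t with hv
  have hv0 : v 0 = 0 := by simp [hv, ht]
  have hvm : Monotone v := fun a b hab => min_le_min (by exact_mod_cast hab) le_rfl
  have hvn : v n = t := by
    rw [hv]; exact min_eq_right (Nat.le_ceil t)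
  have hlen0 : ∀ j : ℕ, 0 ≤ v (j+1) - v j := fun j => sub_nonneg.mpr (hvm (Nat.le_succ j))
  have hlen1 : ∀ j : ℕ, v (j+1) - v j ≤ 1 := by
    intro j
    rw [hv]
    simp only [Nat.cast_succ]
    rcases le_or_gt t (j : ℝ) with h | h
    · rw [min_eq_right h, min_eq_right (by linarith)]; linarith
    · rw [min_eq_left h.le]
      rcases le_or_gt t ((j : ℝ) + 1) with h2 | h2
      · rw [min_eq_right h2]; linarith
      · rw [min_eq_left h2.le]; linarith
  set c : ℝ≥0∞ := ENNReal.ofReal ((Real.exp 1 * α)⁻¹) with hc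
  set gg : ℕ → ℕ → ℝ → ℝ≥0∞ := fun i0 j x =>
    (if j = i0 then ENNReal.ofReal (max x 0) else 1) * ENNReal.ofReal (Real.exp (α * x))
    with hgg
  have hggm : ∀ i0 j, Measurable (gg i0 j) := by
    intro i0 j
    apply Measurable.mul
    · by_cases h : j = i0
      · simp only [hgg, h, if_true]
        exact ENNReal.measurable_ofReal.comp (measurable_id'.max measurable_const)
      · simp only [hgg, h, if_false]; exact measurable_const
    · exact ENNReal.measurable_ofReal.comp
        (Real.measurable_exp.comp (measurable_id'.const_mul α))
  -- pointwise bound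
  have hpt : ∀ ω : Ω, ENNReal.ofReal (max (L.X t ω) 0 * Real.exp (α * L.X t ω))
      ≤ ∑ i0 ∈ Finset.range n, ∏ j ∈ Finset.range n,
          gg i0 j (L.X (v (j+1)) ω - L.X (v j) ω) := by
    intro ω
    have htel : L.X t ω = ∑ j ∈ Finset.range n, (L.X (v (j+1)) ω - L.X (v j) ω) := by
      rw [← hvn]; exact telescope L v hv0 n ω
    have hexp : Real.exp (α * L.X t ω)
        = ∏ j ∈ Finset.range n, Real.exp (α * (L.X (v (j+1)) ω - L.X (v j) ω)) := by
      rw [← Real.exp_sum, htel, Finset.mul_sum]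
    have hmax : max (L.X t ω) 0
        ≤ ∑ j ∈ Finset.range n, max (L.X (v (j+1)) ω - L.X (v j) ω) 0 := by
      apply max_le
      · rw [htel]
        exact Finset.sum_le_sum fun j _ => le_max_left _ _
      · exact Finset.sum_nonneg fun j _ => le_max_right _ _
    calc ENNReal.ofReal (max (L.X t ω) 0 * Real.exp (α * L.X t ω))
        ≤ ENNReal.ofReal ((∑ j ∈ Finset.range n, max (L.X (v (j+1)) ω - L.X (v j) ω) 0)
            * Real.exp (α * L.X t ω)) :=
          ENNReal.ofReal_le_ofReal
            (mul_le_mul_of_nonneg_right hmax (Real.exp_nonneg _))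
      _ = ∑ i0 ∈ Finset.range n, ENNReal.ofReal (max (L.X (v (i0+1)) ω - L.X (v i0) ω) 0
            * Real.exp (α * L.X t ω)) := by
          rw [Finset.sum_mul, ENNReal.ofReal_sum_of_nonneg
            (fun i _ => by positivity)]
      _ ≤ ∑ i0 ∈ Finset.range n, ∏ j ∈ Finset.range n,
            gg i0 j (L.X (v (j+1)) ω - L.X (v j) ω) := by
          refine Finset.sum_le_sum fun i0 hi0 => ?_
          rw [hexp, ENNReal.ofReal_mul (le_max_right _ _),
            ofReal_prod_of_nonneg (fun j _ => Real.exp_nonneg _)]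
          have : ∏ j ∈ Finset.range n, gg i0 j (L.X (v (j+1)) ω - L.X (v j) ω)
              = (∏ j ∈ Finset.range n,
                  (if j = i0 then ENNReal.ofReal (max (L.X (v (j+1)) ω - L.X (v j) ω) 0) else 1))
                * ∏ j ∈ Finset.range n,
                    ENNReal.ofReal (Real.exp (α * (L.X (v (j+1)) ω - L.X (v j) ω))) := by
            rw [← Finset.prod_mul_distrib]
          rw [this, Finset.prod_ite_eq' (Finset.range n) i0
            (fun j => ENNReal.ofReal (max (L.X (v (j+1)) ω - L.X (v j) ω) 0)), if_pos hi0]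
  calc JJ L α t ≤ ∫⁻ ω, ∑ i0 ∈ Finset.range n, ∏ j ∈ Finset.range n,
        gg i0 j (L.X (v (j+1)) ω - L.X (v j) ω) ∂P := lintegral_mono hpt
    _ = ∑ i0 ∈ Finset.range n, ∫⁻ ω, ∏ j ∈ Finset.range n,
          gg i0 j (L.X (v (j+1)) ω - L.X (v j) ω) ∂P := by
        refine lintegral_finset_sum' _ fun i0 _ => ?_
        exact (Finset.measurable_prod _ fun j _ =>
          ((hggm i0 j).comp ((L.meas _).sub (L.meas _)) :
            Measurable fun ω => gg i0 j (L.X (v (j+1)) ω - L.X (v j) ω))).aemeasurable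
    _ ≤ ∑ _i0 ∈ Finset.range n, (JJ L α 1 + c) := by
        refine Finset.sum_le_sum fun i0 hi0 => ?_
        rw [lintegral_prod_incr L v hvm hv0 (gg i0) (hggm i0) n]
        have hjval : ∀ j, (∫⁻ ω, gg i0 j (L.X (v (j+1)) ω - L.X (v j) ω) ∂P)
            = ∫⁻ ω, gg i0 j (L.X (v (j+1) - v j) ω) ∂P := by
          intro j
          have := incr_law L (gg i0 j) (hggm i0 j) (v j) (v (j+1) - v j)
            (hv0 ▸ hvm (Nat.zero_le j)) (hlen0 j)
          rw [show v j + (v (j+1) - v j) = v (j+1) by ring] at this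
          exact this
        have hone : ∀ j ∈ Finset.range n, j ≠ i0 →
            (∫⁻ ω, gg i0 j (L.X (v (j+1)) ω - L.X (v j) ω) ∂P) = 1 := by
          intro j _ hji
          rw [hjval j]
          simp only [hgg, hji, if_false, one_mul]
          exact mgfE_eq_one L α hcl _ (hlen0 j)
        have hi0bound : (∫⁻ ω, gg i0 i0 (L.X (v (i0+1)) ω - L.X (v i0) ω) ∂P)
            ≤ JJ L α 1 + c := by
          rw [hjval i0]
          have : (∫⁻ ω, gg i0 i0 (L.X (v (i0+1) - v i0) ω) ∂P)
              = JJ L α (v (i0+1) - v i0) := by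
            refine lintegral_congr fun ω => ?_
            simp [hgg, ENNReal.ofReal_mul (le_max_right (L.X (v (i0+1) - v i0) ω) 0)]
          rw [this]
          exact JJ_le_unit L α hα hcl _ (hlen0 i0) (hlen1 i0)
        calc (∏ j ∈ Finset.range n, ∫⁻ ω, gg i0 j (L.X (v (j+1)) ω - L.X (v j) ω) ∂P)
            = (∫⁻ ω, gg i0 i0 (L.X (v (i0+1)) ω - L.X (v i0) ω) ∂P)
              * ∏ j ∈ (Finset.range n).erase i0,
                  ∫⁻ ω, gg i0 j (L.X (v (j+1)) ω - L.X (v j) ω) ∂P :=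
              (Finset.mul_prod_erase _ _ hi0).symm
          _ = (∫⁻ ω, gg i0 i0 (L.X (v (i0+1)) ω - L.X (v i0) ω) ∂P) * 1 := by
              congr 1
              exact Finset.prod_eq_one fun j hj =>
                hone j (Finset.mem_of_mem_erase hj) (Finset.ne_of_mem_erase hj)
          _ ≤ (JJ L α 1 + c) * 1 := mul_le_mul_left hi0bound _
          _ = JJ L α 1 + c := mul_one _
    _ = (n : ℝ≥0∞) * (JJ L α 1 + c) := by
        rw [Finset.sum_const, Finset.card_range, nsmul_eq_mul]

end Aux4

end CEFP
namespace CEFP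

set_option linter.unusedSectionVars false
set_option maxHeartbeats 1000000

section Aux5

variable {Ω : Type} [MeasurableSpace Ω] {P : Measure Ω} [IsProbabilityMeasure P]
  (L : LevyProcess Ω P) (α : ℝ)

lemma maximal (hcl : mgfE P L α 1 = 1) (t : ℝ)
    (v : ℕ → ℝ) (hv : Monotone v) (h0 : v 0 = 0) (n : ℕ) (hvn : v n = t)
    (lam : ℝ) (hlam : 0 < lam) :
    ENNReal.ofReal lam * P {ω | lam ≤ SSfun L α v n ω}
      ≤ ∫⁻ ω in {ω | lam ≤ SSfun L α v n ω}, ENNReal.ofReal (Real.exp (α * L.X t ω)) ∂P := by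
  classical
  set A : ℕ → Set Ω := fun k =>
    if k ≤ n then
      ({ω | lam ≤ Real.exp (α * L.X (v k) ω)}
        ∩ ⋂ j ∈ Finset.range k, {ω | Real.exp (α * L.X (v j) ω) < lam})
    else ∅ with hA
  have hexpm : ∀ s : ℝ, Measurable fun ω => Real.exp (α * L.X s ω) :=
    fun s => Real.measurable_exp.comp ((L.meas s).const_mul α)
  have hAmeas : ∀ k, MeasurableSet (A k) := by
    intro k
    simp only [hA]
    by_cases h : k ≤ n
    · rw [if_pos h]
      refine MeasurableSet.inter ((hexpm (v k)) measurableSet_Ici) ?_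
      exact Finset.measurableSet_biInter _ fun j _ => (hexpm (v j)) measurableSet_Iio
    · rw [if_neg h]; exact MeasurableSet.empty
  have hAdisj : Pairwise (Function.onFun Disjoint A) := by
    intro k k' hne
    rcases lt_or_gt_of_ne hne with hlt | hlt
    · rw [Function.onFun, Set.disjoint_left]
      intro ω h1 h2
      simp only [hA] at h1 h2
      by_cases hk : k ≤ n
      · by_cases hk' : k' ≤ n
        · rw [if_pos hk] at h1; rw [if_pos hk'] at h2
          have hlt2 : Real.exp (α * L.X (v k) ω) < lam :=
            Set.mem_iInter₂.mp h2.2 k (Finset.mem_range.mpr hlt)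
          have h1' : lam ≤ Real.exp (α * L.X (v k) ω) := h1.1
          linarith
        · rw [if_neg hk'] at h2; exact h2
      · rw [if_neg hk] at h1; exact h1
    · rw [Function.onFun, Set.disjoint_left]
      intro ω h1 h2
      simp only [hA] at h1 h2
      by_cases hk : k' ≤ n
      · by_cases hk'' : k ≤ n
        · rw [if_pos hk] at h2; rw [if_pos hk''] at h1
          have hlt2 : Real.exp (α * L.X (v k') ω) < lam :=
            Set.mem_iInter₂.mp h1.2 k' (Finset.mem_range.mpr hlt)
          have h2' : lam ≤ Real.exp (α * L.X (v k') ω) := h2.1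
          linarith
        · rw [if_neg hk''] at h1; exact h1
      · rw [if_neg hk] at h2; exact h2
  have hE : {ω | lam ≤ SSfun L α v n ω} = ⋃ k, A k := by
    ext ω
    simp only [Set.mem_setOf_eq, Set.mem_iUnion]
    constructor
    · intro h
      obtain ⟨k, hk, hkk⟩ := (SSfun_le_iff L α v n lam ω).mp h
      have hex : ∃ j, lam ≤ Real.exp (α * L.X (v j) ω) := ⟨k, hkk⟩
      refine ⟨Nat.find hex, ?_⟩
      have hfindle : Nat.find hex ≤ k := Nat.find_min' hex hkk
      simp only [hA]
      rw [if_pos (hfindle.trans hk)]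
      refine ⟨Nat.find_spec hex, ?_⟩
      apply Set.mem_iInter₂.mpr
      intro j hj
      exact not_le.mp (Nat.find_min hex (Finset.mem_range.mp hj))
    · rintro ⟨k, hk⟩
      simp only [hA] at hk
      by_cases h : k ≤ n
      · rw [if_pos h] at hk
        exact (SSfun_le_iff L α v n lam ω).mpr ⟨k, h, hk.1⟩
      · rw [if_neg h] at hk; exact absurd hk (Set.notMem_empty ω)
  have hstep : ∀ k, ENNReal.ofReal lam * P (A k)
      ≤ ∫⁻ ω in A k, ENNReal.ofReal (Real.exp (α * L.X t ω)) ∂P := by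
    intro k
    by_cases hk : k ≤ n
    · -- the independence argument
      have hind := indep_past_future L v hv h0 k n hk
      have hVm : Measurable fun ω => fun j : Fin (k+1) => L.X (v j) ω :=
        measurable_pi_lambda _ fun j => L.meas _
      have hWm : Measurable fun ω => L.X (v n) ω - L.X (v k) ω := (L.meas _).sub (L.meas _)
      set B : Set (Fin (k+1) → ℝ) :=
        {y | lam ≤ Real.exp (α * y (Fin.last k))
          ∧ ∀ j : Fin (k+1), j.1 < k → Real.exp (α * y j) < lam} with hB
      have hBmeas : MeasurableSet B := by
        rw [hB]
        have h1 : MeasurableSet {y : Fin (k+1) → ℝ | lam ≤ Real.exp (α * y (Fin.last k))} :=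
          (Real.measurable_exp.comp ((measurable_pi_apply (X := fun _ : Fin (k+1) => ℝ) (Fin.last k)).const_mul α)) measurableSet_Ici
        have h2 : ∀ j : Fin (k+1),
            MeasurableSet {y : Fin (k+1) → ℝ | j.1 < k → Real.exp (α * y j) < lam} := by
          intro j
          by_cases hj : j.1 < k
          · have he : {y : Fin (k+1) → ℝ | j.1 < k → Real.exp (α * y j) < lam}
                = {y | Real.exp (α * y j) < lam} := by
              ext y; simp [hj]
            rw [he]
            exact (Real.measurable_exp.comp ((measurable_pi_apply (X := fun _ : Fin (k+1) => ℝ) j).const_mul α))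
              measurableSet_Iio
          · have he : {y : Fin (k+1) → ℝ | j.1 < k → Real.exp (α * y j) < lam} = Set.univ := by
              ext y; simp [hj]
            rw [he]; exact MeasurableSet.univ
        have hsplit : {y : Fin (k+1) → ℝ | lam ≤ Real.exp (α * y (Fin.last k))
              ∧ ∀ j : Fin (k+1), j.1 < k → Real.exp (α * y j) < lam}
            = {y : Fin (k+1) → ℝ | lam ≤ Real.exp (α * y (Fin.last k))}
              ∩ ⋂ j : Fin (k+1), {y | j.1 < k → Real.exp (α * y j) < lam} := by
          ext y
          simp only [Set.mem_setOf_eq, Set.mem_inter_iff, Set.mem_iInter]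
        rw [hsplit]
        exact h1.inter (MeasurableSet.iInter h2)
      set h₁ : (Fin (k+1) → ℝ) → ℝ≥0∞ := fun y =>
        Set.indicator B (fun y' => ENNReal.ofReal (Real.exp (α * y' (Fin.last k)))) y with hh₁
      have hm₁ : Measurable h₁ :=
        Measurable.indicator
          (ENNReal.measurable_ofReal.comp
            (Real.measurable_exp.comp ((measurable_pi_apply (X := fun _ : Fin (k+1) => ℝ) (Fin.last k)).const_mul α))) hBmeas
      have hmemiff : ∀ ω : Ω, ((fun j : Fin (k+1) => L.X (v j) ω) ∈ B) ↔ ω ∈ A k := by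
        intro ω
        simp only [hB, hA, if_pos hk]
        simp only [Set.mem_setOf_eq, Set.mem_inter_iff, Fin.val_last]
        constructor
        · rintro ⟨hl, hr⟩
          refine ⟨hl, ?_⟩
          apply Set.mem_iInter₂.mpr
          intro j hj
          have hj' := Finset.mem_range.mp hj
          exact hr ⟨j, hj'.trans (Nat.lt_succ_self k)⟩ hj'
        · rintro ⟨hl, hr⟩
          refine ⟨hl, fun j hj => ?_⟩
          exact Set.mem_iInter₂.mp hr j.1 (Finset.mem_range.mpr hj)
      have hcomp : ∀ ω : Ω, h₁ (fun j : Fin (k+1) => L.X (v j) ω)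
          = Set.indicator (A k) (fun ω' => ENNReal.ofReal (Real.exp (α * L.X (v k) ω'))) ω := by
        intro ω
        simp only [hh₁]
        by_cases hmem : ω ∈ A k
        · rw [Set.indicator_of_mem ((hmemiff ω).mpr hmem), Set.indicator_of_mem hmem]
          simp [Fin.val_last]
        · rw [Set.indicator_of_notMem (fun hc => hmem ((hmemiff ω).mp hc)),
            Set.indicator_of_notMem hmem]
      have key := lintegral_mul_indep hVm hWm hind h₁
        (fun x : ℝ => ENNReal.ofReal (Real.exp (α * x))) hm₁
        (ENNReal.measurable_ofReal.comp (Real.measurable_exp.comp (measurable_id'.const_mul α)))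
      have hptw : ∀ ω : Ω,
          Set.indicator (A k) (fun ω' => ENNReal.ofReal (Real.exp (α * L.X t ω'))) ω
          = h₁ (fun j : Fin (k+1) => L.X (v j) ω)
            * ENNReal.ofReal (Real.exp (α * (L.X (v n) ω - L.X (v k) ω))) := by
        intro ω
        rw [hcomp ω]
        by_cases hmem : ω ∈ A k
        · rw [Set.indicator_of_mem hmem, Set.indicator_of_mem hmem,
            ← ENNReal.ofReal_mul (Real.exp_nonneg _), ← Real.exp_add, ← hvn]
          congr 2
          ring
        · rw [Set.indicator_of_notMem hmem, Set.indicator_of_notMem hmem, zero_mul]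
      have hWlaw : (∫⁻ ω, ENNReal.ofReal (Real.exp (α * (L.X (v n) ω - L.X (v k) ω))) ∂P)
          = 1 := by
        have hm : Measurable fun x : ℝ => ENNReal.ofReal (Real.exp (α * x)) :=
          ENNReal.measurable_ofReal.comp
            (Real.measurable_exp.comp (measurable_id'.const_mul α))
        have h1 := incr_law L _ hm (v k) (v n - v k)
          (h0 ▸ hv (Nat.zero_le k)) (sub_nonneg.mpr (hv hk))
        rw [show v k + (v n - v k) = v n by ring] at h1
        rw [h1]
        exact mgfE_eq_one L α hcl _ (sub_nonneg.mpr (hv hk))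
      calc ENNReal.ofReal lam * P (A k)
          = ∫⁻ ω in A k, ENNReal.ofReal lam ∂P := (setLIntegral_const _ _).symm
        _ ≤ ∫⁻ ω in A k, ENNReal.ofReal (Real.exp (α * L.X (v k) ω)) ∂P := by
            refine setLIntegral_mono
              (ENNReal.measurable_ofReal.comp (hexpm (v k))) fun ω hω => ?_
            simp only [hA, if_pos hk] at hω
            exact ENNReal.ofReal_le_ofReal hω.1
        _ = ∫⁻ ω, Set.indicator (A k)
              (fun ω' => ENNReal.ofReal (Real.exp (α * L.X (v k) ω'))) ω ∂P := by
            rw [lintegral_indicator (hAmeas k)]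
        _ = ∫⁻ ω, h₁ (fun j : Fin (k+1) => L.X (v j) ω) ∂P :=
            lintegral_congr fun ω => (hcomp ω).symm
        _ = (∫⁻ ω, h₁ (fun j : Fin (k+1) => L.X (v j) ω) ∂P)
              * ∫⁻ ω, ENNReal.ofReal (Real.exp (α * (L.X (v n) ω - L.X (v k) ω))) ∂P := by
            rw [hWlaw, mul_one]
        _ = ∫⁻ ω, h₁ (fun j : Fin (k+1) => L.X (v j) ω)
              * ENNReal.ofReal (Real.exp (α * (L.X (v n) ω - L.X (v k) ω))) ∂P := key.symm
        _ = ∫⁻ ω, Set.indicator (A k)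
              (fun ω' => ENNReal.ofReal (Real.exp (α * L.X t ω'))) ω ∂P :=
            lintegral_congr fun ω => (hptw ω).symm
        _ = ∫⁻ ω in A k, ENNReal.ofReal (Real.exp (α * L.X t ω)) ∂P := by
            rw [lintegral_indicator (hAmeas k)]
    · have : A k = ∅ := by simp only [hA, if_neg hk]
      rw [this]
      simp
  calc ENNReal.ofReal lam * P {ω | lam ≤ SSfun L α v n ω}
      = ENNReal.ofReal lam * ∑' k, P (A k) := by rw [hE, measure_iUnion hAdisj hAmeas]
    _ = ∑' k, ENNReal.ofReal lam * P (A k) := ENNReal.tsum_mul_left.symm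
    _ ≤ ∑' k, ∫⁻ ω in A k, ENNReal.ofReal (Real.exp (α * L.X t ω)) ∂P :=
        ENNReal.tsum_le_tsum hstep
    _ = ∫⁻ ω in ⋃ k, A k, ENNReal.ofReal (Real.exp (α * L.X t ω)) ∂P :=
        (lintegral_iUnion hAmeas hAdisj _).symm
    _ = _ := by rw [hE]

end Aux5

end CEFP
namespace CEFP

set_option linter.unusedSectionVars false
set_option maxHeartbeats 1600000

section Aux6

variable {Ω : Type} [MeasurableSpace Ω] {P : Measure Ω} [IsProbabilityMeasure P]
  (L : LevyProcess Ω P) (α : ℝ)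

lemma young_ineq (M y : ℝ) (hM : 0 < M) (hy : 1 ≤ y) :
    M * Real.log y ≤ M * max (Real.log M) 0 + y / Real.exp 1 := by
  have hy0 : 0 < y := lt_of_lt_of_le one_pos hy
  have hlogdiv : Real.log (y / M) ≤ (y / M) / Real.exp 1 := by
    have h1 := Real.log_le_sub_one_of_pos (show (0:ℝ) < (y / M) / Real.exp 1 by positivity)
    have h2 : Real.log ((y / M) / Real.exp 1) = Real.log (y / M) - 1 := by
      rw [Real.log_div (by positivity) (Real.exp_ne_zero 1), Real.log_exp]
    rw [h2] at h1
    linarith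
  have hsplit : Real.log y = Real.log M + Real.log (y / M) := by
    rw [Real.log_div hy0.ne' hM.ne']
    ring
  have h3 : M * Real.log (y / M) ≤ y / Real.exp 1 := by
    calc M * Real.log (y / M) ≤ M * ((y / M) / Real.exp 1) :=
          mul_le_mul_of_nonneg_left hlogdiv hM.le
      _ = y / Real.exp 1 := by field_simp
  have h4 : M * Real.log M ≤ M * max (Real.log M) 0 :=
    mul_le_mul_of_nonneg_left (le_max_left _ _) hM.le
  calc M * Real.log y = M * Real.log M + M * Real.log (y / M) := by rw [hsplit]; ring
    _ ≤ M * max (Real.log M) 0 + y / Real.exp 1 := add_le_add h4 h3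

lemma lintegral_inv_Ioc (b : ℝ) (hb : 1 ≤ b) :
    ∫⁻ lam in Set.Ioc 1 b, ENNReal.ofReal lam⁻¹ = ENNReal.ofReal (Real.log b) := by
  have hsub : Set.Ioc (1:ℝ) b ⊆ Set.uIcc 1 b := by
    rw [Set.uIcc_of_le hb]
    exact Set.Ioc_subset_Icc_self
  have hne : ∀ x : ℝ, x ∈ Set.uIcc 1 b → x ≠ 0 := by
    intro x hx
    rw [Set.uIcc_of_le hb] at hx
    exact (lt_of_lt_of_le one_pos hx.1).ne'
  have hint : IntervalIntegrable (fun x : ℝ => x⁻¹) MeasureTheory.volume 1 b :=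
    intervalIntegral.intervalIntegrable_inv hne continuousOn_id
  have hinteg : MeasureTheory.IntegrableOn (fun x : ℝ => x⁻¹) (Set.Ioc 1 b) := by
    rw [IntervalIntegrable] at hint
    exact hint.1
  have hnn : 0 ≤ᵐ[MeasureTheory.volume.restrict (Set.Ioc (1:ℝ) b)] fun x : ℝ => x⁻¹ := by
    filter_upwards [MeasureTheory.ae_restrict_mem measurableSet_Ioc] with x hx
    exact inv_nonneg.mpr (le_of_lt (lt_trans one_pos hx.1))
  rw [← MeasureTheory.ofReal_integral_eq_lintegral_ofReal hinteg hnn]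
  congr 1
  rw [← intervalIntegral.integral_of_le hb, integral_inv (fun hc => (hne 0 hc) rfl), div_one]

lemma grid_llogl (hα : 0 < α) (hcl : mgfE P L α 1 = 1) (t : ℝ) (ht : 0 ≤ t)
    (hJfin : JJ L α t ≠ ⊤)
    (v : ℕ → ℝ) (hv : Monotone v) (h0 : v 0 = 0) (n : ℕ) (hvn : v n = t) :
    ∫⁻ ω, ENNReal.ofReal (SSfun L α v n ω) ∂P
      ≤ (1 + ENNReal.ofReal α * JJ L α t)
          * ENNReal.ofReal (Real.exp 1 / (Real.exp 1 - 1)) := by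
  classical
  set S : Ω → ℝ := SSfun L α v n with hS
  have hSm : Measurable S := SSfun_meas L α v n
  have hS1 : ∀ ω, 1 ≤ S ω := one_le_SSfun L α v h0 n
  set b : ℝ≥0∞ := 1 + ENNReal.ofReal α * JJ L α t with hb
  have hbfin : b ≠ ⊤ := by
    rw [hb]
    exact (ENNReal.add_ne_top.mpr ⟨ENNReal.one_ne_top,
      ENNReal.mul_ne_top ENNReal.ofReal_ne_top hJfin⟩)
  have he1 : (1:ℝ) < Real.exp 1 := by
    have := Real.add_one_le_exp 1
    linarith
  -- the key truncated inequality
  have htrunc : ∀ K : ℕ, (1:ℝ) < K →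
      (∫⁻ ω, ENNReal.ofReal (min (S ω) K) ∂P)
        ≤ b + ENNReal.ofReal (Real.exp 1)⁻¹ * ∫⁻ ω, ENNReal.ofReal (min (S ω) K) ∂P := by
    intro K hK
    set aK : ℝ≥0∞ := ∫⁻ ω, ENNReal.ofReal (min (S ω) K) ∂P with haK
    have hminm : Measurable fun ω => min (S ω) (K:ℝ) := hSm.min measurable_const
    have hlayer : aK = ∫⁻ lam in Set.Ioi (0:ℝ), P {ω | lam < min (S ω) K} := by
      rw [haK]
      exact MeasureTheory.lintegral_eq_lintegral_meas_lt P
        (Filter.Eventually.of_forall fun ω => le_trans zero_le_one (le_min (hS1 ω) (by linarith)))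
        hminm.aemeasurable
    have hsplit1 : (∫⁻ lam in Set.Ioi (0:ℝ), P {ω | lam < min (S ω) K})
        = (∫⁻ lam in Set.Ioc (0:ℝ) 1, P {ω | lam < min (S ω) K})
          + ∫⁻ lam in Set.Ioi (1:ℝ), P {ω | lam < min (S ω) K} := by
      rw [← MeasureTheory.lintegral_union measurableSet_Ioi
        (Set.Ioc_disjoint_Ioi le_rfl), Set.Ioc_union_Ioi_eq_Ioi zero_le_one]
    have hbound1 : (∫⁻ lam in Set.Ioc (0:ℝ) 1, P {ω | lam < min (S ω) K}) ≤ 1 := by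
      calc (∫⁻ lam in Set.Ioc (0:ℝ) 1, P {ω | lam < min (S ω) K})
          ≤ ∫⁻ _ in Set.Ioc (0:ℝ) 1, 1 :=
            MeasureTheory.setLIntegral_mono measurable_const fun lam _ => prob_le_one
        _ = 1 := by rw [MeasureTheory.setLIntegral_one, Real.volume_Ioc]; norm_num
    have hsplit2 : (∫⁻ lam in Set.Ioi (1:ℝ), P {ω | lam < min (S ω) K})
        = (∫⁻ lam in Set.Ioo (1:ℝ) K, P {ω | lam < min (S ω) K})
          + ∫⁻ lam in Set.Ici (K:ℝ), P {ω | lam < min (S ω) K} := by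
      rw [← MeasureTheory.lintegral_union measurableSet_Ici ?hdisj,
        Set.Ioo_union_Ici_eq_Ioi hK]
      case hdisj =>
        rw [Set.disjoint_left]
        intro lam h1 h2
        exact absurd h2 (not_le.mpr h1.2)
    have hzero : (∫⁻ lam in Set.Ici (K:ℝ), P {ω | lam < min (S ω) K}) = 0 := by
      have : ∀ lam ∈ Set.Ici (K:ℝ), P {ω | lam < min (S ω) K} = 0 := by
        intro lam hlam
        have hempty : {ω | lam < min (S ω) (K:ℝ)} = ∅ := by
          ext ω
          simp only [Set.mem_setOf_eq, Set.mem_empty_iff_false, iff_false, not_lt]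
          exact le_trans (min_le_right _ _) hlam
        rw [hempty, measure_empty]
      refine le_antisymm ?_ zero_le'
      calc (∫⁻ lam in Set.Ici (K:ℝ), P {ω | lam < min (S ω) K})
          ≤ ∫⁻ _ in Set.Ici (K:ℝ), 0 :=
            MeasureTheory.setLIntegral_mono measurable_const fun lam hlam =>
              le_of_eq (this lam hlam)
        _ = 0 := by simp
    -- pass to the maximal inequality on Ioo 1 K
    have hmaxbd : ∀ lam : ℝ, 1 < lam →
        P {ω | lam < min (S ω) K}
          ≤ (ENNReal.ofReal lam)⁻¹
            * ∫⁻ ω in {ω | lam ≤ S ω}, ENNReal.ofReal (Real.exp (α * L.X t ω)) ∂P := by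
      intro lam hlam
      have hsub : {ω | lam < min (S ω) (K:ℝ)} ⊆ {ω | lam ≤ S ω} := by
        intro ω hω
        have hω' : lam < min (S ω) (K:ℝ) := hω
        exact le_of_lt (lt_of_lt_of_le hω' (min_le_left _ _))
      have hmax := maximal L α hcl t v hv h0 n hvn lam (lt_trans one_pos hlam)
      have hinv : (ENNReal.ofReal lam)⁻¹ * (ENNReal.ofReal lam
          * P {ω | lam ≤ S ω}) = P {ω | lam ≤ S ω} := by
        rw [← mul_assoc, ENNReal.inv_mul_cancel
          (ENNReal.ofReal_pos.mpr (lt_trans one_pos hlam)).ne' ENNReal.ofReal_ne_top, one_mul]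
      calc P {ω | lam < min (S ω) K} ≤ P {ω | lam ≤ S ω} := measure_mono hsub
        _ = (ENNReal.ofReal lam)⁻¹ * (ENNReal.ofReal lam * P {ω | lam ≤ S ω}) := hinv.symm
        _ ≤ (ENNReal.ofReal lam)⁻¹
              * ∫⁻ ω in {ω | lam ≤ S ω}, ENNReal.ofReal (Real.exp (α * L.X t ω)) ∂P :=
            mul_le_mul_right hmax _
    -- Fubini step
    have hSlam_meas : MeasurableSet {q : ℝ × Ω | q.1 ≤ S q.2} :=
      measurableSet_le measurable_fst (hSm.comp measurable_snd)
    set FF : ℝ → Ω → ℝ≥0∞ := fun lam ω => (ENNReal.ofReal lam)⁻¹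
      * Set.indicator {q : ℝ × Ω | q.1 ≤ S q.2} (fun q => ffun L α t q.2) (lam, ω) with hFF
    have hFFm : Measurable (Function.uncurry FF) := by
      apply Measurable.mul
      · exact ((ENNReal.measurable_ofReal.comp measurable_fst).inv)
      · exact ((ffun_meas L α t).comp measurable_snd).indicator hSlam_meas
    have hswap : (∫⁻ lam in Set.Ioo (1:ℝ) K, ∫⁻ ω, FF lam ω ∂P)
        = ∫⁻ ω, (∫⁻ lam in Set.Ioo (1:ℝ) K, FF lam ω) ∂P := by
      exact MeasureTheory.lintegral_lintegral_swap hFFm.aemeasurable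
    have hinner_eq : ∀ lam : ℝ, 1 < lam →
        (ENNReal.ofReal lam)⁻¹
            * ∫⁻ ω in {ω | lam ≤ S ω}, ENNReal.ofReal (Real.exp (α * L.X t ω)) ∂P
          = ∫⁻ ω, FF lam ω ∂P := by
      intro lam _
      have h1 : (∫⁻ ω in {ω | lam ≤ S ω}, ENNReal.ofReal (Real.exp (α * L.X t ω)) ∂P)
          = ∫⁻ ω, Set.indicator {q : ℝ × Ω | q.1 ≤ S q.2}
              (fun q => ffun L α t q.2) (lam, ω) ∂P := by
        rw [← MeasureTheory.lintegral_indicator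
          (show MeasurableSet {ω | lam ≤ S ω} from hSm measurableSet_Ici)]
        refine lintegral_congr fun ω => ?_
        by_cases hω : lam ≤ S ω
        · rw [Set.indicator_of_mem (show ω ∈ {ω' : Ω | lam ≤ S ω'} from hω),
            Set.indicator_of_mem (show (lam, ω) ∈ {q : ℝ × Ω | q.1 ≤ S q.2} from hω)]
          rfl
        · rw [Set.indicator_of_notMem (show ω ∉ {ω' : Ω | lam ≤ S ω'} from hω),
            Set.indicator_of_notMem (show (lam, ω) ∉ {q : ℝ × Ω | q.1 ≤ S q.2} from hω)]
      have hm2 : Measurable fun ω : Ω => Set.indicator {q : ℝ × Ω | q.1 ≤ S q.2}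
          (fun q => ffun L α t q.2) (lam, ω) :=
        (((ffun_meas L α t).comp measurable_snd).indicator hSlam_meas).comp
          measurable_prodMk_left
      rw [h1]
      simp only [hFF]
      rw [← MeasureTheory.lintegral_const_mul _ hm2]
    -- the inner λ-integral computes to a logarithm
    have hinner2 : ∀ ω, (∫⁻ lam in Set.Ioo (1:ℝ) K, FF lam ω)
        ≤ ffun L α t ω * ENNReal.ofReal (Real.log (min (S ω) K)) := by
      intro ω
      have hpt : ∀ lam : ℝ, FF lam ω
          = ffun L α t ω
            * Set.indicator (Set.Iic (S ω)) (fun lam => (ENNReal.ofReal lam)⁻¹) lam := by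
        intro lam
        simp only [hFF]
        by_cases hω : lam ≤ S ω
        · rw [Set.indicator_of_mem (show (lam, ω) ∈ {q : ℝ × Ω | q.1 ≤ S q.2} from hω),
            Set.indicator_of_mem (show lam ∈ Set.Iic (S ω) from hω)]
          ring
        · rw [Set.indicator_of_notMem (show (lam, ω) ∉ {q : ℝ × Ω | q.1 ≤ S q.2} from hω),
            Set.indicator_of_notMem (show lam ∉ Set.Iic (S ω) from hω)]
          rw [mul_zero, mul_zero]
      calc (∫⁻ lam in Set.Ioo (1:ℝ) K, FF lam ω)
          = ∫⁻ lam in Set.Ioo (1:ℝ) K, ffun L α t ω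
              * Set.indicator (Set.Iic (S ω)) (fun lam => (ENNReal.ofReal lam)⁻¹) lam :=
            lintegral_congr fun lam => hpt lam
        _ = ffun L α t ω * ∫⁻ lam in Set.Ioo (1:ℝ) K,
              Set.indicator (Set.Iic (S ω)) (fun lam => (ENNReal.ofReal lam)⁻¹) lam :=
            MeasureTheory.lintegral_const_mul _
              (Measurable.indicator ((ENNReal.measurable_ofReal).inv) measurableSet_Iic)
        _ ≤ ffun L α t ω * ENNReal.ofReal (Real.log (min (S ω) K)) := by
            apply mul_le_mul_right
            rw [MeasureTheory.lintegral_indicator measurableSet_Iic,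
              MeasureTheory.Measure.restrict_restrict measurableSet_Iic]
            have hsub : Set.Iic (S ω) ∩ Set.Ioo (1:ℝ) K ⊆ Set.Ioc 1 (min (S ω) K) := by
              intro lam hlam
              exact ⟨hlam.2.1, le_min hlam.1 hlam.2.2.le⟩
            calc (∫⁻ lam in Set.Iic (S ω) ∩ Set.Ioo (1:ℝ) K, (ENNReal.ofReal lam)⁻¹)
                ≤ ∫⁻ lam in Set.Ioc (1:ℝ) (min (S ω) K), (ENNReal.ofReal lam)⁻¹ :=
                  MeasureTheory.lintegral_mono_set hsub
              _ = ∫⁻ lam in Set.Ioc (1:ℝ) (min (S ω) K), ENNReal.ofReal lam⁻¹ :=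
                  MeasureTheory.setLIntegral_congr_fun measurableSet_Ioc
                    (fun lam hlam =>
                      (ENNReal.ofReal_inv_of_pos (lt_trans one_pos hlam.1)).symm)
              _ = ENNReal.ofReal (Real.log (min (S ω) K)) :=
                  lintegral_inv_Ioc _ (le_min (hS1 ω) (by linarith))
    -- Young's inequality pointwise
    have hyoung : ∀ ω, ffun L α t ω * ENNReal.ofReal (Real.log (min (S ω) K))
        ≤ ENNReal.ofReal (Real.exp (α * L.X t ω) * max (α * L.X t ω) 0)
          + ENNReal.ofReal (Real.exp 1)⁻¹ * ENNReal.ofReal (min (S ω) K) := by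
      intro ω
      set M : ℝ := Real.exp (α * L.X t ω) with hM
      set y : ℝ := min (S ω) (K:ℝ) with hy
      have hy1 : 1 ≤ y := le_min (hS1 ω) (by linarith)
      have hMpos : 0 < M := Real.exp_pos _
      have h1 : ffun L α t ω * ENNReal.ofReal (Real.log y)
          = ENNReal.ofReal (M * Real.log y) := by
        rw [ffun, ENNReal.ofReal_mul hMpos.le]
      rw [h1]
      calc ENNReal.ofReal (M * Real.log y)
          ≤ ENNReal.ofReal (M * max (Real.log M) 0 + y / Real.exp 1) :=
            ENNReal.ofReal_le_ofReal (young_ineq M y hMpos hy1)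
        _ ≤ ENNReal.ofReal (M * max (Real.log M) 0) + ENNReal.ofReal (y / Real.exp 1) :=
            ENNReal.ofReal_add_le
        _ = ENNReal.ofReal (M * max (α * L.X t ω) 0)
              + ENNReal.ofReal (Real.exp 1)⁻¹ * ENNReal.ofReal y := by
            rw [hM, Real.log_exp]
            congr 1
            rw [div_eq_inv_mul, ENNReal.ofReal_mul (by positivity)]
    -- putting the ω-integral bound together
    have hJterm : (∫⁻ ω, ENNReal.ofReal (Real.exp (α * L.X t ω) * max (α * L.X t ω) 0) ∂P)
        = ENNReal.ofReal α * JJ L α t := by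
      have hm3 : Measurable fun ω : Ω =>
          ENNReal.ofReal (max (L.X t ω) 0 * Real.exp (α * L.X t ω)) :=
        ENNReal.measurable_ofReal.comp
          (((L.meas t).max measurable_const).mul
            (Real.measurable_exp.comp ((L.meas t).const_mul α)))
      rw [JJ, ← MeasureTheory.lintegral_const_mul _ hm3]
      refine lintegral_congr fun ω => ?_
      rw [← ENNReal.ofReal_mul hα.le]
      congr 1
      rcases le_or_gt (L.X t ω) 0 with h | h
      · rw [max_eq_right h, max_eq_right (by nlinarith : α * L.X t ω ≤ 0)]; ring
      · rw [max_eq_left h.le, max_eq_left (mul_nonneg hα.le h.le)]; ring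
    calc aK = (∫⁻ lam in Set.Ioc (0:ℝ) 1, P {ω | lam < min (S ω) K})
          + ∫⁻ lam in Set.Ioi (1:ℝ), P {ω | lam < min (S ω) K} := by
          rw [← hsplit1, ← hlayer]
      _ ≤ 1 + ((∫⁻ lam in Set.Ioo (1:ℝ) K, P {ω | lam < min (S ω) K}) + 0) := by
          rw [hsplit2, hzero]
          exact add_le_add hbound1 le_rfl
      _ = 1 + ∫⁻ lam in Set.Ioo (1:ℝ) K, P {ω | lam < min (S ω) K} := by rw [add_zero]
      _ ≤ 1 + ∫⁻ lam in Set.Ioo (1:ℝ) K, ∫⁻ ω, FF lam ω ∂P := by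
          apply add_le_add_right
          apply MeasureTheory.setLIntegral_mono' measurableSet_Ioo
          intro lam hlam
          rw [← hinner_eq lam hlam.1]
          exact hmaxbd lam hlam.1
      _ = 1 + ∫⁻ ω, (∫⁻ lam in Set.Ioo (1:ℝ) K, FF lam ω) ∂P := by rw [hswap]
      _ ≤ 1 + ∫⁻ ω, (ENNReal.ofReal (Real.exp (α * L.X t ω) * max (α * L.X t ω) 0)
            + ENNReal.ofReal (Real.exp 1)⁻¹ * ENNReal.ofReal (min (S ω) K)) ∂P := by
          apply add_le_add_right
          exact lintegral_mono fun ω => le_trans (hinner2 ω) (hyoung ω)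
      _ = 1 + (ENNReal.ofReal α * JJ L α t + ENNReal.ofReal (Real.exp 1)⁻¹ * aK) := by
          have hm4 : Measurable fun ω : Ω =>
              ENNReal.ofReal (Real.exp (α * L.X t ω) * max (α * L.X t ω) 0) :=
            ENNReal.measurable_ofReal.comp
              ((Real.measurable_exp.comp ((L.meas t).const_mul α)).mul
                (((L.meas t).const_mul α).max measurable_const))
          have hm5 : Measurable fun ω : Ω => ENNReal.ofReal (min (S ω) (K:ℝ)) :=
            ENNReal.measurable_ofReal.comp hminm
          rw [MeasureTheory.lintegral_add_left hm4, hJterm,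
            MeasureTheory.lintegral_const_mul _ hm5]
      _ = b + ENNReal.ofReal (Real.exp 1)⁻¹ * aK := by
          rw [hb, add_assoc]
  -- rearrange and let K → ∞
  have hKbound : ∀ K : ℕ, (1:ℝ) < K →
      (∫⁻ ω, ENNReal.ofReal (min (S ω) K) ∂P)
        ≤ b * ENNReal.ofReal (Real.exp 1 / (Real.exp 1 - 1)) := by
    intro K hK
    set aK : ℝ≥0∞ := ∫⁻ ω, ENNReal.ofReal (min (S ω) K) ∂P with haK
    have haKfin : aK ≠ ⊤ := by
      have : aK ≤ ENNReal.ofReal K := by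
        rw [haK]
        calc (∫⁻ ω, ENNReal.ofReal (min (S ω) K) ∂P)
            ≤ ∫⁻ _, ENNReal.ofReal (K:ℝ) ∂P :=
              lintegral_mono fun ω => ENNReal.ofReal_le_ofReal (min_le_right _ _)
          _ = ENNReal.ofReal (K:ℝ) := by simp
      exact (lt_of_le_of_lt this ENNReal.ofReal_lt_top).ne
    have htr := htrunc K hK
    rw [← haK] at htr
    -- real arithmetic
    set a' : ℝ := aK.toReal with ha'
    set b' : ℝ := b.toReal with hb'
    have hc1 : (0:ℝ) < (Real.exp 1)⁻¹ := by positivity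
    have hcc : (Real.exp 1)⁻¹ < 1 := by
      rw [inv_lt_one_iff₀]
      right; linarith
    have hb'0 : 0 ≤ b' := ENNReal.toReal_nonneg
    have ha'0 : 0 ≤ a' := ENNReal.toReal_nonneg
    have hRHSfin : b + ENNReal.ofReal (Real.exp 1)⁻¹ * aK ≠ ⊤ :=
      ENNReal.add_ne_top.mpr ⟨hbfin, ENNReal.mul_ne_top ENNReal.ofReal_ne_top haKfin⟩
    have htr' : a' ≤ b' + (Real.exp 1)⁻¹ * a' := by
      have h1 := ENNReal.toReal_mono hRHSfin htr
      rw [ENNReal.toReal_add hbfin (ENNReal.mul_ne_top ENNReal.ofReal_ne_top haKfin),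
        ENNReal.toReal_mul, ENNReal.toReal_ofReal hc1.le] at h1
      exact h1
    have hpos : (0:ℝ) < 1 - (Real.exp 1)⁻¹ := by linarith
    have h2 : a' * (1 - (Real.exp 1)⁻¹) ≤ b' := by nlinarith [htr']
    have h4 : a' ≤ b' / (1 - (Real.exp 1)⁻¹) := (le_div_iff₀ hpos).mpr h2
    have h5 : b' / (1 - (Real.exp 1)⁻¹) = b' * (Real.exp 1 / (Real.exp 1 - 1)) := by
      have hE0 : Real.exp 1 ≠ 0 := (Real.exp_pos 1).ne'
      have hE1 : Real.exp 1 - 1 ≠ 0 := by linarith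
      field_simp
    have hfinal' : a' ≤ b' * (Real.exp 1 / (Real.exp 1 - 1)) := by rw [← h5]; exact h4
    calc aK = ENNReal.ofReal a' := (ENNReal.ofReal_toReal haKfin).symm
      _ ≤ ENNReal.ofReal (b' * (Real.exp 1 / (Real.exp 1 - 1))) :=
          ENNReal.ofReal_le_ofReal hfinal'
      _ = ENNReal.ofReal b' * ENNReal.ofReal (Real.exp 1 / (Real.exp 1 - 1)) :=
          ENNReal.ofReal_mul hb'0
      _ = b * ENNReal.ofReal (Real.exp 1 / (Real.exp 1 - 1)) := by
          rw [hb', ENNReal.ofReal_toReal hbfin]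
  -- let K → ∞
  have hsup : (∫⁻ ω, ENNReal.ofReal (S ω) ∂P)
      = ⨆ K : ℕ, ∫⁻ ω, ENNReal.ofReal (min (S ω) ((K + 2 : ℕ) : ℝ)) ∂P := by
    rw [← lintegral_iSup]
    · refine lintegral_congr fun ω => ?_
      apply le_antisymm
      · obtain ⟨m, hm⟩ := exists_nat_ge (S ω)
        refine le_trans ?_ (le_iSup
          (fun K : ℕ => ENNReal.ofReal (min (S ω) ((K + 2 : ℕ) : ℝ))) m)
        have hmin : min (S ω) ((m + 2 : ℕ):ℝ) = S ω := min_eq_left (by push_cast; linarith)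
        rw [hmin]
      · exact iSup_le fun K => ENNReal.ofReal_le_ofReal (min_le_left _ _)
    · exact fun K => ENNReal.measurable_ofReal.comp (hSm.min measurable_const)
    · intro K K' hKK' ω
      refine ENNReal.ofReal_le_ofReal (min_le_min le_rfl ?_)
      exact_mod_cast Nat.add_le_add_right hKK' 2
  rw [hS] at hsup
  rw [hsup]
  refine iSup_le fun K => ?_
  have h1 : (1:ℝ) < ((K + 2 : ℕ):ℝ) := by
    push_cast
    have : (0:ℝ) ≤ (K:ℝ) := Nat.cast_nonneg K
    linarith
  have := hKbound (K + 2) h1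
  rw [hS] at this
  exact this

end Aux6

end CEFP
namespace CEFP

set_option linter.unusedSectionVars false
set_option maxHeartbeats 1600000

section Aux7

variable {Ω : Type} [MeasurableSpace Ω] {P : Measure Ω} [IsProbabilityMeasure P]
  (L : LevyProcess Ω P) (α : ℝ)

lemma supMgfE_le_bound (hα : 0 < α) (hcl : mgfE P L α 1 = 1) (t : ℝ) (ht : 0 ≤ t)
    (hJfin : JJ L α t ≠ ⊤) :
    supMgfE P L α t ≤ (1 + ENNReal.ofReal α * JJ L α t)
      * ENNReal.ofReal (Real.exp 1 / (Real.exp 1 - 1)) := by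
  classical
  set vg : ℕ → ℕ → ℝ := fun j k => t * min (k : ℝ) ((2:ℝ)^j) / (2:ℝ)^j with hvg
  have h2pos : ∀ j : ℕ, (0:ℝ) < (2:ℝ)^j := fun j => by positivity
  have hvg_mono : ∀ j, Monotone (vg j) := by
    intro j a b hab
    simp only [hvg]
    refine (div_le_div_iff_of_pos_right (h2pos j)).mpr ?_
    exact mul_le_mul_of_nonneg_left (min_le_min (by exact_mod_cast hab) le_rfl) ht
  have hvg0 : ∀ j, vg j 0 = 0 := by
    intro j
    simp only [hvg, Nat.cast_zero]
    rw [min_eq_left (by positivity), mul_zero, zero_div]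
  have hvgtop : ∀ j, vg j (2^j) = t := by
    intro j
    simp only [hvg]
    have hc : ((2^j : ℕ) : ℝ) = (2:ℝ)^j := by push_cast; ring
    rw [hc, min_self, mul_div_assoc, div_self (h2pos j).ne', mul_one]
  have hvgmem : ∀ j k, vg j k ∈ Set.Icc (0:ℝ) t := by
    intro j k
    constructor
    · simp only [hvg]
      have : (0:ℝ) ≤ min (k:ℝ) ((2:ℝ)^j) := le_min (by positivity) (by positivity)
      positivity
    · simp only [hvg]
      rw [div_le_iff₀ (h2pos j)]
      have h1 : min (k:ℝ) ((2:ℝ)^j) ≤ (2:ℝ)^j := min_le_right _ _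
      nlinarith [h2pos j]
  have hrefine : ∀ j k : ℕ, vg (j+1) (2*k) = vg j k := by
    intro j k
    simp only [hvg]
    have hc : ((2*k : ℕ):ℝ) = 2 * (k:ℝ) := by push_cast; ring
    rw [hc, pow_succ]
    rcases le_total (k:ℝ) ((2:ℝ)^j) with h | h
    · rw [min_eq_left h, min_eq_left (by linarith)]
      field_simp
    · rw [min_eq_right h, min_eq_right (by linarith)]
      rw [mul_div_assoc, div_self (by positivity : ((2:ℝ)^j * 2) ≠ 0), mul_one,
        mul_div_assoc, div_self (h2pos j).ne', mul_one]
  have hsubgrid : ∀ j ω, SSfun L α (vg j) (2^j) ω ≤ SSfun L α (vg (j+1)) (2^(j+1)) ω := by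
    intro j ω
    refine SSfun_le_of_subgrid L α _ _ _ _ (fun k hk => ⟨2*k, ?_, hrefine j k⟩) ω
    have h2 : 2^(j+1) = 2 * 2^j := by ring
    omega
  have hMmono : ∀ ω, Monotone fun j => ENNReal.ofReal (SSfun L α (vg j) (2^j) ω) := by
    intro ω
    apply monotone_nat_of_le_succ
    intro j
    exact ENNReal.ofReal_le_ofReal (hsubgrid j ω)
  -- grid max is below the Icc-sup
  have hgrid_le : ∀ ω (w : ℕ → ℝ) (m : ℕ), (∀ k, k ≤ m → w k ∈ Set.Icc (0:ℝ) t) →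
      ENNReal.ofReal (SSfun L α w m ω)
        ≤ ⨆ s ∈ Set.Icc (0:ℝ) t, ENNReal.ofReal (Real.exp (α * L.X s ω)) := by
    intro ω w m
    induction m with
    | zero =>
      intro hw
      exact le_biSup (fun s => ENNReal.ofReal (Real.exp (α * L.X s ω))) (hw 0 le_rfl)
    | succ m ih =>
      intro hw
      have h1 : SSfun L α w (m+1) ω
          = max (SSfun L α w m ω) (Real.exp (α * L.X (w (m+1)) ω)) := rfl
      rw [h1]
      rcases le_total (SSfun L α w m ω) (Real.exp (α * L.X (w (m+1)) ω)) with h | h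
      · rw [max_eq_right h]
        exact le_biSup (fun s => ENNReal.ofReal (Real.exp (α * L.X s ω))) (hw (m+1) le_rfl)
      · rw [max_eq_left h]
        exact ih fun k hk => hw k (hk.trans (Nat.le_succ m))
  -- pointwise identification of the sup
  have hpt : ∀ ω, (⨆ s ∈ Set.Icc (0:ℝ) t, ENNReal.ofReal (Real.exp (α * L.X s ω)))
      = ⨆ j : ℕ, ENNReal.ofReal (SSfun L α (vg j) (2^j) ω) := by
    intro ω
    apply le_antisymm
    · refine iSup₂_le fun s hs => ?_
      rcases eq_or_lt_of_le hs.2 with heq | hlt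
      · -- s = t
        subst heq
        refine le_trans ?_ (le_iSup _ 0)
        refine ENNReal.ofReal_le_ofReal ?_
        have := le_SSfun L α (vg 0) (2^0) (2^0) le_rfl ω
        rw [hvgtop 0] at this
        exact this
      · -- s < t, approximate from the right by dyadic points
        have hs0 : 0 ≤ s := hs.1
        have htpos : 0 < t := lt_of_le_of_lt hs0 hlt
        have hex : ∀ p : ℕ, ∃ u : ℝ, (∃ j k : ℕ, k ≤ 2^j ∧ u = vg j k)
            ∧ s < u ∧ u ≤ min t (s + 1/((p:ℝ)+1)) := by
          intro p
          set δ : ℝ := min (t - s) (1/((p:ℝ)+1)) with hδ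
          have hδpos : 0 < δ := lt_min (by linarith) (by positivity)
          obtain ⟨j, hj⟩ := pow_unbounded_of_one_lt (t/δ) one_lt_two
          have hjj : t / (2:ℝ)^j < δ := by
            rw [div_lt_iff₀ (h2pos j)]
            rw [div_lt_iff₀ hδpos] at hj
            nlinarith
          set k : ℕ := ⌊s * (2:ℝ)^j / t⌋₊ + 1 with hk
          have hfl : (⌊s * (2:ℝ)^j / t⌋₊ : ℝ) ≤ s * (2:ℝ)^j / t :=
            Nat.floor_le (by positivity)
          have hfl2 : s * (2:ℝ)^j / t < (k:ℝ) := by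
            rw [hk]; push_cast; exact Nat.lt_floor_add_one _
          have hklb : s < t * (k:ℝ) / (2:ℝ)^j := by
            rw [lt_div_iff₀ (h2pos j)]
            rw [div_lt_iff₀ (by positivity : (0:ℝ) < t)] at hfl2
            nlinarith
          have hkub : t * (k:ℝ) / (2:ℝ)^j ≤ s + t/(2:ℝ)^j := by
            rw [hk]
            push_cast
            rw [div_le_iff₀ (h2pos j)]
            have h2 : (⌊s * (2:ℝ)^j / t⌋₊ : ℝ) * t ≤ s * (2:ℝ)^j := by
              rw [← le_div_iff₀ (by positivity : (0:ℝ) < t)]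
              exact hfl
            have h4 : t/(2:ℝ)^j * (2:ℝ)^j = t := div_mul_cancel₀ t (h2pos j).ne'
            nlinarith [h2pos j]
          have hle_t : t * (k:ℝ) / (2:ℝ)^j ≤ t := by
            have : t/(2:ℝ)^j ≤ t - s := le_of_lt (lt_of_lt_of_le hjj (min_le_left _ _))
            linarith
          have hkle : k ≤ 2^j := by
            by_contra hcon
            push_neg at hcon
            have h3 : ((2^j : ℕ):ℝ) + 1 ≤ (k:ℝ) := by exact_mod_cast hcon
            have h4 : ((2^j : ℕ):ℝ) = (2:ℝ)^j := by push_cast; ring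
            rw [h4] at h3
            have h5 : t * ((2:ℝ)^j + 1) / (2:ℝ)^j ≤ t * (k:ℝ) / (2:ℝ)^j :=
              (div_le_div_iff_of_pos_right (h2pos j)).mpr
                (mul_le_mul_of_nonneg_left (by linarith) ht)
            have h6 : t < t * ((2:ℝ)^j + 1) / (2:ℝ)^j := by
              rw [lt_div_iff₀ (h2pos j)]
              nlinarith [h2pos j]
            linarith
          refine ⟨t * (k:ℝ) / (2:ℝ)^j, ⟨j, k, hkle, ?_⟩, hklb, ?_⟩
          · simp only [hvg]
            rw [min_eq_left]
            have h4 : ((2^j : ℕ):ℝ) = (2:ℝ)^j := by push_cast; ring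
            calc (k:ℝ) ≤ ((2^j : ℕ):ℝ) := by exact_mod_cast hkle
              _ = (2:ℝ)^j := h4
          · refine le_min hle_t ?_
            have : t/(2:ℝ)^j ≤ 1/((p:ℝ)+1) := le_of_lt (lt_of_lt_of_le hjj (min_le_right _ _))
            linarith
        choose r hr1 hr2 hr3 using hex
        have htendr : Filter.Tendsto r Filter.atTop (nhdsWithin s (Set.Ici s)) := by
          apply tendsto_nhdsWithin_of_tendsto_nhds_of_eventually_within
          · have hub : ∀ p, r p ≤ s + 1/((p:ℝ)+1) :=
              fun p => le_trans (hr3 p) (min_le_right _ _)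
            have hlb : ∀ p, s ≤ r p := fun p => (hr2 p).le
            have h2 : Filter.Tendsto (fun p : ℕ => s + 1/((p:ℝ)+1)) Filter.atTop (𝓝 (s + 0)) := by
              apply Filter.Tendsto.const_add
              have := tendsto_one_div_add_atTop_nhds_zero_nat (𝕜 := ℝ)
              exact_mod_cast this
            rw [add_zero] at h2
            exact tendsto_of_tendsto_of_tendsto_of_le_of_le tendsto_const_nhds h2 hlb hub
          · exact Filter.Eventually.of_forall fun p => (hr2 p).le
        have hXlim : Filter.Tendsto (fun p => ENNReal.ofReal (Real.exp (α * L.X (r p) ω)))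
            Filter.atTop (𝓝 (ENNReal.ofReal (Real.exp (α * L.X s ω)))) := by
          have hX : Filter.Tendsto (fun p => L.X (r p) ω) Filter.atTop (𝓝 (L.X s ω)) :=
            Filter.Tendsto.comp (L.rightCont ω s) htendr
          exact (ENNReal.continuous_ofReal.tendsto _).comp
            ((Real.continuous_exp.tendsto _).comp (hX.const_mul α))
        refine le_of_tendsto hXlim (Filter.Eventually.of_forall fun p => ?_)
        obtain ⟨j, k, hkj, hrp⟩ := hr1 p
        rw [hrp]
        refine le_trans ?_ (le_iSup _ j)
        exact ENNReal.ofReal_le_ofReal (le_SSfun L α (vg j) (2^j) k hkj ω)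
    · exact iSup_le fun j => hgrid_le ω (vg j) (2^j) fun k _ => hvgmem j k
  -- conclude by monotone convergence and the grid L log L bound
  calc supMgfE P L α t
      = ∫⁻ ω, ⨆ j : ℕ, ENNReal.ofReal (SSfun L α (vg j) (2^j) ω) ∂P :=
        lintegral_congr hpt
    _ = ⨆ j : ℕ, ∫⁻ ω, ENNReal.ofReal (SSfun L α (vg j) (2^j) ω) ∂P := by
        apply lintegral_iSup
        · exact fun j => ENNReal.measurable_ofReal.comp (SSfun_meas L α (vg j) (2^j))
        · exact fun j j' hjj' ω => (fun h => hMmono ω h) hjj'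
    _ ≤ (1 + ENNReal.ofReal α * JJ L α t) * ENNReal.ofReal (Real.exp 1 / (Real.exp 1 - 1)) :=
        iSup_le fun j => grid_llogl L α hα hcl t ht hJfin (vg j) (hvg_mono j) (hvg0 j)
          (2^j) (hvgtop j)

end Aux7

end CEFP
namespace CEFP

set_option linter.unusedSectionVars false
set_option maxHeartbeats 1600000

section Aux8

variable {Ω : Type} [MeasurableSpace Ω] {P : Measure Ω} [IsProbabilityMeasure P]
  (L : LevyProcess Ω P) (α : ℝ)

lemma supMgfE_ge_one (t : ℝ) (ht : 0 ≤ t) : 1 ≤ supMgfE P L α t := by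
  rw [supMgfE]
  calc (1:ℝ≥0∞) = ∫⁻ _, 1 ∂P := by simp
    _ ≤ ∫⁻ ω, ⨆ s ∈ Set.Icc (0:ℝ) t, ENNReal.ofReal (Real.exp (α * L.X s ω)) ∂P := by
        refine lintegral_mono fun ω => ?_
        have h0 : (0:ℝ) ∈ Set.Icc (0:ℝ) t := ⟨le_rfl, ht⟩
        have h1 := le_biSup (fun s => ENNReal.ofReal (Real.exp (α * L.X s ω))) h0
        simp only [L.zero, mul_zero, Real.exp_zero, ENNReal.ofReal_one] at h1
        exact h1

lemma supMgfE_mono (t₁ t₂ : ℝ) (h : t₁ ≤ t₂) : supMgfE P L α t₁ ≤ supMgfE P L α t₂ := by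
  refine lintegral_mono fun ω => ?_
  exact biSup_mono fun s hs => ⟨hs.1, hs.2.trans h⟩

end Aux8

end CEFP

namespace CEFP

set_option linter.unusedSectionVars false
set_option maxHeartbeats 2000000

theorem B_ratio_tendsto_one'
    {Ω : Type} [MeasurableSpace Ω] (P : Measure Ω) [IsProbabilityMeasure P]
    (L : LevyProcess Ω P) (α : ℝ) (hα : 0 < α)
    (hcl : mgfE P L α 1 = 1)
    (hmom1 : ∫⁻ ω, ENNReal.ofReal (L.X 1 ω * Real.exp (α * L.X 1 ω)) ∂P < ∞) :
    ∀ t : ℝ, 0 ≤ t →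
      Tendsto (fun T => BT P L α (T - t) / BT P L α T) atTop (𝓝 1) := by
  intro t ht
  have hJ1fin : JJ L α 1 ≠ ⊤ := by rw [JJ_eq_mom1]; exact hmom1.ne
  set cA : ℝ≥0∞ := JJ L α 1 + ENNReal.ofReal ((Real.exp 1 * α)⁻¹) with hcA
  have hcAfin : cA ≠ ⊤ := ENNReal.add_ne_top.mpr ⟨hJ1fin, ENNReal.ofReal_ne_top⟩
  set a : ℝ := cA.toReal with ha
  have ha0 : 0 ≤ a := ENNReal.toReal_nonneg
  set E' : ℝ := Real.exp 1 / (Real.exp 1 - 1) with hE'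
  have he1 : (1:ℝ) < Real.exp 1 := by linarith [Real.add_one_le_exp 1]
  have hE'pos : 0 < E' := div_pos (by linarith) (by linarith)
  set CC : ℝ := (1 + α * a) * E' with hCC
  have hCCpos : 0 < CC := mul_pos (by nlinarith) hE'pos
  -- the fundamental linear bound on E e^{α X̄_s}
  have hGbound : ∀ s : ℝ, 0 ≤ s → supMgfE P L α s ≤ ENNReal.ofReal (CC * (1 + s)) := by
    intro s hs
    have hJlin := JJ_linear L α hα hcl s hs
    rw [← hcA] at hJlin
    have hJfin : JJ L α s ≠ ⊤ :=
      (lt_of_le_of_lt hJlin (ENNReal.mul_lt_top (ENNReal.natCast_lt_top _)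
        (lt_of_le_of_ne le_top hcAfin))).ne
    have h1 := supMgfE_le_bound L α hα hcl s hs hJfin
    have hceil : ((⌈s⌉₊ : ℕ) : ℝ≥0∞) ≤ ENNReal.ofReal (s + 1) := by
      rw [← ENNReal.ofReal_natCast]
      exact ENNReal.ofReal_le_ofReal (Nat.ceil_lt_add_one hs).le
    have h2 : JJ L α s ≤ ENNReal.ofReal ((s+1) * a) := by
      calc JJ L α s ≤ (⌈s⌉₊ : ℝ≥0∞) * cA := hJlin
        _ ≤ ENNReal.ofReal (s + 1) * ENNReal.ofReal a := by
            rw [ha, ENNReal.ofReal_toReal hcAfin]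
            exact mul_le_mul_left hceil _
        _ = ENNReal.ofReal ((s+1) * a) := (ENNReal.ofReal_mul (by linarith)).symm
    calc supMgfE P L α s
        ≤ (1 + ENNReal.ofReal α * JJ L α s) * ENNReal.ofReal E' := by
          rw [hE']; exact h1
      _ ≤ (1 + ENNReal.ofReal α * ENNReal.ofReal ((s+1) * a)) * ENNReal.ofReal E' :=
          mul_le_mul_left (add_le_add_right (mul_le_mul_right h2 _) _) _
      _ = ENNReal.ofReal ((1 + α * ((s+1) * a)) * E') := by
          rw [← ENNReal.ofReal_mul hα.le, ← ENNReal.ofReal_one,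
            ← ENNReal.ofReal_add (by norm_num) (by positivity),
            ← ENNReal.ofReal_mul (by positivity)]
      _ ≤ ENNReal.ofReal (CC * (1 + s)) := by
          refine ENNReal.ofReal_le_ofReal ?_
          rw [hCC]
          nlinarith
  set g : ℝ → ℝ := fun s => supMgf P L α s with hg
  have hgfin : ∀ s : ℝ, 0 ≤ s → supMgfE P L α s ≠ ⊤ :=
    fun s hs => (lt_of_le_of_lt (hGbound s hs) ENNReal.ofReal_lt_top).ne
  have hg0 : ∀ s, 0 ≤ g s := fun s => ENNReal.toReal_nonneg
  have hgneg : ∀ s : ℝ, s < 0 → g s = 0 := by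
    intro s hs
    have hempty : ∀ ω : Ω,
        (⨆ u ∈ Set.Icc (0:ℝ) s, ENNReal.ofReal (Real.exp (α * L.X u ω))) = 0 := by
      intro ω
      refine le_antisymm (iSup₂_le fun u hu => ?_) zero_le'
      exact absurd (hu.1.trans hu.2) (not_le.mpr hs)
    simp only [hg, supMgf, supMgfE]
    rw [lintegral_congr hempty, lintegral_zero]
    simp
  have hgle : ∀ s : ℝ, 0 ≤ s → g s ≤ CC * (1 + s) := by
    intro s hs
    have h1 := ENNReal.toReal_mono ENNReal.ofReal_ne_top (hGbound s hs)
    rwa [ENNReal.toReal_ofReal (by positivity)] at h1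
  have hg1 : ∀ s : ℝ, 0 ≤ s → 1 ≤ g s := by
    intro s hs
    have h1 := ENNReal.toReal_mono (hgfin s hs) (supMgfE_ge_one L α s hs)
    simpa [hg, supMgf] using h1
  have hgmono : Monotone g := by
    intro s1 s2 h
    rcases lt_or_ge s1 0 with hs1 | hs1
    · rw [hgneg s1 hs1]; exact hg0 s2
    · exact ENNReal.toReal_mono (hgfin s2 (hs1.trans h)) (supMgfE_mono L α s1 s2 h)
  have hgmeas : Measurable g := hgmono.measurable
  set F : ℝ → ℝ := fun T => ∫ s in Set.Ico (0:ℝ) T, g s with hF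
  -- BT = F
  have hmgf : mgf P L α 1 = 1 := by
    rw [mgf, MeasureTheory.integral_eq_lintegral_of_nonneg_ae
      (Filter.Eventually.of_forall fun ω => Real.exp_nonneg _)
      ((Real.measurable_exp.comp ((L.meas 1).const_mul α)).aestronglyMeasurable)]
    have : (∫⁻ ω, ENNReal.ofReal (Real.exp (α * L.X 1 ω)) ∂P) = 1 := hcl
    rw [this]
    simp
  have hpsi : psi P L α = 0 := by rw [psi, hmgf, Real.log_one]
  have hBT : ∀ T, BT P L α T = F T := by
    intro T
    rw [BT, hF]
    simp only [hpsi, zero_mul, Real.exp_zero, one_mul]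
    rfl
  -- integrability of g on bounded intervals
  have hInt : ∀ T : ℝ, MeasureTheory.IntegrableOn g (Set.Ico 0 T) := by
    intro T
    refine MeasureTheory.Integrable.mono' (g := fun _ => CC * (1 + max T 0))
      (MeasureTheory.integrable_const _) hgmeas.aestronglyMeasurable ?_
    filter_upwards [MeasureTheory.ae_restrict_mem measurableSet_Ico] with s hs
    rw [Real.norm_eq_abs, abs_of_nonneg (hg0 s)]
    calc g s ≤ CC * (1 + s) := hgle s hs.1
      _ ≤ CC * (1 + max T 0) := by
          have : s ≤ max T 0 := le_trans hs.2.le (le_max_left _ _)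
          nlinarith
  have hIntsub : ∀ a b : ℝ, 0 ≤ a → MeasureTheory.IntegrableOn g (Set.Ico a b) := by
    intro a b ha'
    exact (hInt b).mono_set fun s hs => ⟨le_trans ha' hs.1, hs.2⟩
  have hsplit : ∀ a b : ℝ, 0 ≤ a → a ≤ b → F b = F a + ∫ s in Set.Ico a b, g s := by
    intro a b ha' hab
    show (∫ s in Set.Ico (0:ℝ) b, g s)
      = (∫ s in Set.Ico (0:ℝ) a, g s) + ∫ s in Set.Ico a b, g s
    have hu : Set.Ico (0:ℝ) a ∪ Set.Ico a b = Set.Ico 0 b :=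
      Set.Ico_union_Ico_eq_Ico ha' hab
    rw [← hu, MeasureTheory.setIntegral_union (Set.Ico_disjoint_Ico_same)
      measurableSet_Ico (hInt a) (hIntsub a b ha')]
  have hFlow : ∀ T : ℝ, 0 ≤ T → T ≤ F T := by
    intro T hT
    have h1 : (∫ s in Set.Ico (0:ℝ) T, (1:ℝ)) ≤ ∫ s in Set.Ico (0:ℝ) T, g s := by
      refine MeasureTheory.setIntegral_mono_on
        (by simp [MeasureTheory.integrableOn_const, Real.volume_Ico])
        (hInt T) measurableSet_Ico fun s hs => hg1 s hs.1
    calc T = ∫ s in Set.Ico (0:ℝ) T, (1:ℝ) := by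
          rw [MeasureTheory.setIntegral_const, measureReal_def, Real.volume_Ico, smul_eq_mul, mul_one,
            ENNReal.toReal_ofReal (by linarith), sub_zero]
      _ ≤ F T := h1
  have hupper : ∀ a b : ℝ, 0 ≤ a → a ≤ b → (∫ s in Set.Ico a b, g s) ≤ (b - a) * g b := by
    intro a b ha' hab
    have h1 : (∫ s in Set.Ico a b, g s) ≤ ∫ s in Set.Ico a b, g b :=
      MeasureTheory.setIntegral_mono_on (hIntsub a b ha')
        (by simp [MeasureTheory.integrableOn_const, Real.volume_Ico])
        measurableSet_Ico fun s hs => hgmono hs.2.le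
    calc (∫ s in Set.Ico a b, g s) ≤ ∫ s in Set.Ico a b, g b := h1
      _ = (b - a) * g b := by
          rw [MeasureTheory.setIntegral_const, measureReal_def, Real.volume_Ico, smul_eq_mul,
            ENNReal.toReal_ofReal (by linarith)]
  have hlower : ∀ a b : ℝ, 0 ≤ a → a ≤ b → (b - a) * g a ≤ ∫ s in Set.Ico a b, g s := by
    intro a b ha' hab
    have h1 : (∫ s in Set.Ico a b, g a) ≤ ∫ s in Set.Ico a b, g s :=
      MeasureTheory.setIntegral_mono_on
        (by simp [MeasureTheory.integrableOn_const, Real.volume_Ico])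
        (hIntsub a b ha') measurableSet_Ico fun s hs => hgmono hs.1
    calc (b - a) * g a = ∫ s in Set.Ico a b, g a := by
          rw [MeasureTheory.setIntegral_const, measureReal_def, Real.volume_Ico, smul_eq_mul,
            ENNReal.toReal_ofReal (by linarith)]
      _ ≤ _ := h1
  -- main limit
  have hD : Tendsto (fun T => (F T - F (T - t))/F T) atTop (𝓝 0) := by
    by_contra hcon
    rw [Metric.tendsto_atTop] at hcon
    push_neg at hcon
    obtain ⟨ε, hε, hfreq⟩ := hcon
    have hbad : ∀ T : ℝ, max 1 t ≤ T → ε ≤ dist ((F T - F (T - t))/F T) 0 →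
        ε * F T ≤ t * g T ∧ T ≤ F T := by
      intro T hT hdist
      have hT1 : 1 ≤ T := le_trans (le_max_left _ _) hT
      have hTt : t ≤ T := le_trans (le_max_right _ _) hT
      have hFpos : 0 < F T := lt_of_lt_of_le one_pos (le_trans hT1 (hFlow T (by linarith)))
      have hsub : F T - F (T - t) = ∫ s in Set.Ico (T - t) T, g s := by
        have := hsplit (T - t) T (by linarith) (by linarith)
        linarith
      have hnn : 0 ≤ F T - F (T - t) := by
        rw [hsub]
        exact MeasureTheory.setIntegral_nonneg measurableSet_Ico fun s _ => hg0 s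
      rw [Real.dist_eq, sub_zero, abs_of_nonneg (div_nonneg hnn hFpos.le)] at hdist
      have h1 : ε * F T ≤ F T - F (T - t) := by
        rw [le_div_iff₀ hFpos] at hdist
        linarith
      have h2 : (∫ s in Set.Ico (T - t) T, g s) ≤ t * g T := by
        have := hupper (T - t) T (by linarith) (by linarith)
        rw [show T - (T - t) = t by ring] at this
        exact this
      refine ⟨?_, hFlow T (by linarith)⟩
      rw [hsub] at h1
      linarith
    set N₁ : ℝ := max (max 1 t) (4 * CC * t^2 / ε^2 + 1) with hN₁
    obtain ⟨T₁, hT₁ge, hT₁bad⟩ := hfreq N₁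
    obtain ⟨T₂, hT₂ge, hT₂bad⟩ := hfreq (max (2 * T₁) (max 1 t))
    have hT₁big : max 1 t ≤ T₁ := le_trans (le_max_left _ _) hT₁ge
    have hT₂big : max 1 t ≤ T₂ := le_trans (le_max_right _ _) hT₂ge
    obtain ⟨hk1, hk1'⟩ := hbad T₁ hT₁big hT₁bad
    obtain ⟨hk2, hk2'⟩ := hbad T₂ hT₂big hT₂bad
    have hT₁1 : 1 ≤ T₁ := le_trans (le_max_left _ _) hT₁big
    have hT₂1 : 1 ≤ T₂ := le_trans (le_max_left _ _) hT₂big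
    have hT₂2T₁ : 2 * T₁ ≤ T₂ := le_trans (le_max_left _ _) hT₂ge
    have htT₁ : t ≤ T₁ := le_trans (le_max_right _ _) hT₁big
    -- F T₂ ≥ (T₂ - T₁) g T₁ ≥ (T₂/2) g T₁
    have hFT₂ : (T₂ - T₁) * g T₁ ≤ F T₂ := by
      have hs := hsplit T₁ T₂ (by linarith) (by linarith)
      have hl := hlower T₁ T₂ (by linarith) (by linarith)
      have hFT₁nn : 0 ≤ F T₁ := le_trans (by linarith) hk1'
      linarith
    have hgT₂le : g T₂ ≤ CC * (1 + T₂) := hgle T₂ (by linarith)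
    have hgT₁nn : 0 ≤ g T₁ := hg0 T₁
    -- contradiction
    have hT₁bound : T₁ ≤ 4 * CC * t^2 / ε^2 := by
      have h3 : ε * ((T₂ - T₁) * g T₁) ≤ ε * F T₂ := by
        apply mul_le_mul_of_nonneg_left hFT₂ hε.le
      have h4 : ε * F T₂ ≤ t * (CC * (1 + T₂)) := by
        calc ε * F T₂ ≤ t * g T₂ := hk2
          _ ≤ t * (CC * (1 + T₂)) := by nlinarith
      have h5 : ε * T₁ ≤ t * g T₁ := by
        calc ε * T₁ ≤ ε * F T₁ := by nlinarith
          _ ≤ t * g T₁ := hk1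
      have hTd : T₂/2 ≤ T₂ - T₁ := by linarith
      have e1 : ε * (T₂/2 * g T₁) ≤ t * (CC * (1+T₂)) := by
        have e1a : ε * (T₂/2 * g T₁) ≤ ε * ((T₂ - T₁) * g T₁) := by
          apply mul_le_mul_of_nonneg_left _ hε.le
          exact mul_le_mul_of_nonneg_right hTd hgT₁nn
        linarith [h3, h4]
      have hT₂pos : (0:ℝ) < T₂ := lt_of_lt_of_le one_pos hT₂1
      have e3 : ε * (T₂/2) * (ε * T₁) ≤ ε * (T₂/2) * (t * g T₁) :=
        mul_le_mul_of_nonneg_left h5 (by positivity)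
      have e5 : ε * (T₂/2) * (ε * T₁) ≤ t * (t * (CC * (1+T₂))) := by
        calc ε * (T₂/2) * (ε * T₁) ≤ ε * (T₂/2) * (t * g T₁) := e3
          _ = t * (ε * (T₂/2 * g T₁)) := by ring
          _ ≤ t * (t * (CC * (1+T₂))) := mul_le_mul_of_nonneg_left e1 ht
      have e6 : (ε^2 * T₁ / 2) * T₂ ≤ (2 * CC * t^2) * T₂ := by
        nlinarith [e5, mul_nonneg (mul_nonneg hCCpos.le (sq_nonneg t))
          (sub_nonneg.mpr hT₂1)]
      have e7 : ε^2 * T₁ / 2 ≤ 2 * CC * t^2 := le_of_mul_le_mul_right e6 hT₂pos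
      rw [le_div_iff₀ (by positivity)]
      linarith
    have : N₁ ≤ 4 * CC * t^2 / ε^2 := le_trans hT₁ge hT₁bound
    have : 4 * CC * t^2 / ε^2 + 1 ≤ 4 * CC * t^2 / ε^2 :=
      le_trans (le_max_right _ _) this
    linarith
  have hfinal : Tendsto (fun T => F (T - t)/F T) atTop (𝓝 1) := by
    have h1 : Tendsto (fun T => 1 - (F T - F (T - t))/F T) atTop (𝓝 (1 - 0)) :=
      Tendsto.sub tendsto_const_nhds hD
    rw [sub_zero] at h1
    refine h1.congr' ?_
    filter_upwards [Filter.eventually_ge_atTop (max 1 t)] with T hT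
    have hT1 : 1 ≤ T := le_trans (le_max_left _ _) hT
    have hFpos : 0 < F T := lt_of_lt_of_le one_pos (le_trans hT1 (hFlow T (by linarith)))
    field_simp
    ring
  have hEq : (fun T => BT P L α (T - t) / BT P L α T) = fun T => F (T - t)/F T := by
    funext T
    rw [hBT, hBT]
  rw [hEq]
  exact hfinal

end CEFP

namespace CEFP

/-- Lemma 7.1: if `E e^{αX_1} = 1` (the Cramér–Lundberg case, so
`ψ(α) = 0`) and `E(X_1 e^{αX_1}) < ∞`, then for every fixed `t ≥ 0`,
`B(T-t)/B(T) → 1` as `T → ∞`. -/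
theorem B_ratio_tendsto_one
    {Ω : Type} [MeasurableSpace Ω] (P : Measure Ω) [IsProbabilityMeasure P]
    (L : LevyProcess Ω P) (α : ℝ) (hα : 0 < α)
    (hcl : mgfE P L α 1 = 1)
    (hmom1 : ∫⁻ ω, ENNReal.ofReal (L.X 1 ω * Real.exp (α * L.X 1 ω)) ∂P < ∞) :
    ∀ t : ℝ, 0 ≤ t →
      Tendsto (fun T => BT P L α (T - t) / BT P L α T) atTop (𝓝 1) :=
  B_ratio_tendsto_one' P L α hα hcl hmom1

end CEFP
end
end
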